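/- arXiv:2405.14098 — 16 statements merged into one kernel-verified Lean document; each statement's English description precedes it below -/
import Mathlib

section
/- For every i ∈ ℕ one has the upper bound λ_i ≤ 2/(i + 2/λ₀). -/
/-- For the NAG parameter sequence defined by `1/λ_{i+1} = 1/2 + √(1/λ_i² + 1/4)`,
one has the upper bound `λ_i ≤ 2/(i + 2/λ₀)` for every `i`. -/
theorem stmt_2 (lam : ℕ → ℝ) (h0 : 0 < lam 0) (hpos : ∀ i, 0 < lam i)
    (hrec : ∀ i, 1 / lam (i + 1) = 1 / 2 + Real.sqrt (1 / (lam i) ^ 2 + 1 / 4)) :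
    ∀ i : ℕ, lam i ≤ 2 / ((i : ℝ) + 2 / lam 0) := by
  have key : ∀ i : ℕ, (i : ℝ) / 2 + 1 / lam 0 ≤ 1 / lam i := by
    intro i
    induction i with
    | zero => simp
    | succ n ih =>
      have h1 : 1 / lam n ≤ Real.sqrt (1 / (lam n) ^ 2 + 1 / 4) := by
        have hn : (0:ℝ) ≤ 1 / lam n := le_of_lt (one_div_pos.mpr (hpos n))
        calc 1 / lam n = Real.sqrt ((1 / lam n) ^ 2) := (Real.sqrt_sq hn).symm
          _ ≤ Real.sqrt (1 / (lam n) ^ 2 + 1 / 4) := by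
              apply Real.sqrt_le_sqrt
              rw [div_pow, one_pow]
              linarith
      rw [hrec n]
      push_cast
      linarith
  intro i
  have hd : (0:ℝ) < (i : ℝ) + 2 / lam 0 := by positivity
  have hli := hpos i
  rw [le_div_iff₀ hd]
  have hk := key i
  rw [le_div_iff₀ hli] at hk
  calc lam i * ((i:ℝ) + 2 / lam 0) = 2 * (((i:ℝ) / 2 + 1 / lam 0) * lam i) := by ring
    _ ≤ 2 := by linarith
end

section
/- For every i ∈ ℕ one has the lower bound λ_i ≥ 2/(i + 2/λ₀ + C(λ₀,i)), where C(λ₀,i) := λ₀/4 + (1/2)·ln(1 + λ₀ i/2). -/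
/-- For the NAG parameter sequence defined by `1/λ_{i+1} = 1/2 + √(1/λ_i² + 1/4)`,
one has the lower bound `λ_i ≥ 2/(i + 2/λ₀ + C(λ₀,i))` with
`C(λ₀,i) = λ₀/4 + (1/2)·ln(1 + λ₀ i/2)` for every `i`. -/
theorem stmt_3 (lam : ℕ → ℝ) (h0 : 0 < lam 0) (hpos : ∀ i, 0 < lam i)
    (hrec : ∀ i, 1 / lam (i + 1) = 1 / 2 + Real.sqrt (1 / (lam i) ^ 2 + 1 / 4)) :
    ∀ i : ℕ,
      2 / ((i : ℝ) + 2 / lam 0 + (lam 0 / 4 + 1 / 2 * Real.log (1 + lam 0 * i / 2)))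
        ≤ lam i := by
  set L := lam 0 with hLdef
  -- step lower bound: 1/lam i + 1/2 ≤ 1/lam (i+1)
  have stepLow : ∀ i, 1 / lam i + 1 / 2 ≤ 1 / lam (i + 1) := by
    intro i
    rw [hrec i]
    have h1 : (1 / lam i) ≤ Real.sqrt (1 / (lam i) ^ 2 + 1 / 4) := by
      rw [show 1 / (lam i) ^ 2 = (1 / lam i) ^ 2 by ring]
      have := Real.sqrt_le_sqrt (show (1 / lam i) ^ 2 ≤ (1 / lam i) ^ 2 + 1 / 4 by linarith)
      calc 1 / lam i = Real.sqrt ((1 / lam i) ^ 2) :=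
            (Real.sqrt_sq (le_of_lt (by have := hpos i; positivity))).symm
        _ ≤ _ := this
    linarith
  -- lower bound on 1/lam i
  have low : ∀ i : ℕ, 1 / L + i / 2 ≤ 1 / lam i := by
    intro i
    induction i with
    | zero => simp [hLdef]
    | succ n ih =>
      have := stepLow n
      push_cast
      linarith
  -- step upper bound
  have stepUp : ∀ i, 1 / lam (i + 1) ≤ 1 / lam i + 1 / 2 + lam i / 8 := by
    intro i
    rw [hrec i]
    have hli := hpos i
    have h1 : Real.sqrt (1 / (lam i) ^ 2 + 1 / 4) ≤ 1 / lam i + lam i / 8 := by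
      have key : 1 / (lam i) ^ 2 + 1 / 4 ≤ (1 / lam i + lam i / 8) ^ 2 := by
        have h2 : (1 / lam i + lam i / 8) ^ 2 = 1 / (lam i) ^ 2 + 1 / 4 + (lam i) ^ 2 / 64 := by
          field_simp
          ring
        nlinarith [sq_nonneg (lam i)]
      calc Real.sqrt (1 / (lam i) ^ 2 + 1 / 4) ≤ Real.sqrt ((1 / lam i + lam i / 8) ^ 2) :=
            Real.sqrt_le_sqrt key
        _ = 1 / lam i + lam i / 8 := Real.sqrt_sq (by positivity)
    linarith
  -- lam i ≤ 2L/(2 + L i)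
  have lamUp : ∀ i : ℕ, lam i ≤ 2 * L / (2 + L * i) := by
    intro i
    have hden : 0 < 2 + L * i := by positivity
    have hlow := low i
    have hli := hpos i
    rw [le_div_iff₀ hden]
    have hL1 : L * (1 / L) = 1 := mul_one_div_cancel (ne_of_gt h0)
    have hL2 : lam i * (1 / lam i) = 1 := mul_one_div_cancel (ne_of_gt hli)
    nlinarith [mul_le_mul_of_nonneg_left hlow (le_of_lt (mul_pos h0 hli))]
  -- log telescoping step
  have logStep : ∀ i : ℕ, L / (2 + L * (i + 1)) ≤
      Real.log (1 + L * (i + 1) / 2) - Real.log (1 + L * i / 2) := by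
    intro i
    have hA : (0:ℝ) < 1 + L * i / 2 := by positivity
    have hB : (0:ℝ) < 1 + L * (i + 1) / 2 := by positivity
    have hx : (0:ℝ) < (1 + L * i / 2) / (1 + L * (i + 1) / 2) := div_pos hA hB
    have hlog := Real.log_le_sub_one_of_pos hx
    rw [Real.log_div (ne_of_gt hA) (ne_of_gt hB)] at hlog
    have heq : (1 + L * i / 2) / (1 + L * (i + 1) / 2) - 1
        = -(L / (2 + L * (i + 1))) := by
      have hB' := ne_of_gt hB
      have hC' : (2 + L * ((i:ℝ) + 1)) ≠ 0 := by positivity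
      field_simp
      ring
    rw [heq] at hlog
    linarith
  -- main induction (shifted)
  have D' : ∀ i : ℕ, 1 / lam (i + 1) ≤
      1 / L + (i + 1) / 2 + L / 8 + 1 / 4 * Real.log (1 + L * i / 2) := by
    intro i
    induction i with
    | zero =>
      have := stepUp 0
      simp only [Nat.cast_zero, mul_zero, zero_div, add_zero, Real.log_one]
      push_cast
      linarith
    | succ n ih =>
      have h1 := stepUp (n + 1)
      have h2 := lamUp (n + 1)
      have h3 := logStep (n + 1)
      have h4 : 2 * L / (2 + L * ((n:ℝ) + 1)) = 2 * (L / (2 + L * ((n:ℝ) + 1))) := by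
        ring
      have h5 := logStep n
      push_cast at h1 h2 h3 h4 h5 ⊢
      linarith
  -- unshifted bound
  have D : ∀ i : ℕ, 1 / lam i ≤
      1 / L + i / 2 + L / 8 + 1 / 4 * Real.log (1 + L * i / 2) := by
    intro i
    cases i with
    | zero => simp [hLdef]; linarith [hpos 0]
    | succ n =>
      have h1 := D' n
      have h2 : Real.log (1 + L * n / 2) ≤ Real.log (1 + L * (n + 1) / 2) := by
        apply Real.log_le_log (by positivity)
        nlinarith [h0]
      push_cast at h1 h2 ⊢
      linarith
  -- finish
  intro i
  have hb := D i
  have hli := hpos i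
  have hkey : (i : ℝ) + 2 / L + (L / 4 + 1 / 2 * Real.log (1 + L * i / 2))
      = 2 * (1 / L + i / 2 + L / 8 + 1 / 4 * Real.log (1 + L * i / 2)) := by ring
  rw [hkey]
  have hpos2 : (0:ℝ) < 2 * (1 / lam i) := by positivity
  have hle : 2 * (1 / lam i) ≤ 2 * (1 / L + i / 2 + L / 8 + 1 / 4 * Real.log (1 + L * i / 2)) := by
    linarith
  calc 2 / (2 * (1 / L + i / 2 + L / 8 + 1 / 4 * Real.log (1 + L * i / 2)))
      ≤ 2 / (2 * (1 / lam i)) := by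
        apply div_le_div_of_nonneg_left (by norm_num) hpos2 hle
    _ = lam i := by field_simp
end

section
/- One has λ₀ = 1 and, for every i ∈ ℕ, 0 < λ_{i+1} ≤ λ_i ≤ 1; that is, the sequence (λ_i) is positive, bounded by 1, and nonincreasing. -/
lemma core_alg (a b P Q R : ℝ) (ha : 0 ≤ a) (hb : 0 ≤ b) (hP : 0 < P) (hQ : 0 < Q)
    (hR : 0 ≤ R) (hR2 : R ^ 2 = P * Q * (P + a * Q) * (Q + b * P)) :
    P * Q * (b * P ^ 2 + a * Q ^ 2 + 2 * a * b * P * Q) ≤ R * (b * P ^ 2 + a * Q ^ 2) := by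
  have hu : 0 ≤ b * P ^ 2 + a * Q ^ 2 := by positivity
  have hL : 0 ≤ P * Q * (b * P ^ 2 + a * Q ^ 2 + 2 * a * b * P * Q) := by positivity
  have hRn : 0 ≤ R * (b * P ^ 2 + a * Q ^ 2) := mul_nonneg hR hu
  have hsq : (P * Q * (b * P ^ 2 + a * Q ^ 2 + 2 * a * b * P * Q)) ^ 2
      ≤ (R * (b * P ^ 2 + a * Q ^ 2)) ^ 2 := by
    have h4 : 4 * (a * b) * (P * Q) ^ 2 ≤ (b * P ^ 2 + a * Q ^ 2) ^ 2 := by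
      nlinarith [sq_nonneg (b * P ^ 2 - a * Q ^ 2)]
    nlinarith [mul_pos hP hQ, mul_nonneg (mul_nonneg ha hb) (le_of_lt (mul_pos hP hQ)),
      mul_nonneg hu (le_of_lt (mul_pos hP hQ)),
      mul_le_mul_of_nonneg_left h4 (mul_nonneg hu (le_of_lt (mul_pos hP hQ))),
      mul_le_mul_of_nonneg_left h4 (mul_nonneg (mul_nonneg ha hb) (le_of_lt (mul_pos (mul_pos hP hQ) (mul_pos hP hQ))))]
  exact (pow_le_pow_iff_left₀ hL hRn (by norm_num)).mp hsq

lemma prod_ineq (a b P Q R : ℝ) (ha : 0 ≤ a) (hb : 0 ≤ b) (hP : 0 < P) (hQ : 0 < Q)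
    (hR : 0 ≤ R) (hR2 : R ^ 2 = P * Q * (P + a * Q) * (Q + b * P)) :
    (P ^ 2 + a * P * Q + a * R) * (Q ^ 2 + b * P * Q + b * R) * (P ^ 2 * Q ^ 2)
      ≤ (R ^ 2) ^ 2 := by
  have hcore := core_alg a b P Q R ha hb hP hQ hR hR2
  have hprod : 0 < P * Q * (P + a * Q) * (Q + b * P) := by positivity
  have hR2' : 0 < R ^ 2 := by rw [hR2]; exact hprod
  have hRpos : 0 < R := by nlinarith [hR2', hR]
  have h2 := mul_le_mul_of_nonneg_left hcore (by positivity : (0:ℝ) ≤ R * (P * Q))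
  have e1 : (P ^ 2 + a * P * Q + a * R) * (Q ^ 2 + b * P * Q + b * R) * (P ^ 2 * Q ^ 2)
      = (R ^ 2 * (1 + a * b) + R * (b * P ^ 2 + a * Q ^ 2 + 2 * a * b * P * Q)) * (P ^ 2 * Q ^ 2) := by
    linear_combination (-(P ^ 2 * Q ^ 2)) * hR2
  have e2 : (R ^ 2) ^ 2 = R ^ 2 * ((1 + a * b) * P ^ 2 * Q ^ 2 + P * Q * (b * P ^ 2 + a * Q ^ 2)) := by
    linear_combination R ^ 2 * hR2
  rw [e1, e2]
  nlinarith [h2]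

/-- Statement 4 on the IC-PDPS parameter sequences. -/
theorem stmt_4 (κ γ ρ : ℝ) (hκ : 0 < κ) (hγ : 0 ≤ γ) (hρ : 0 ≤ ρ)
    (Φ Ψ Θ : ℕ → ℝ)
    (hΦpos : ∀ i, 0 < Φ i) (hΨpos : ∀ i, 0 < Ψ i) (hΘpos : ∀ i, 0 < Θ i)
    (hinit : κ ^ 2 * (Θ 0) ^ 2 = Φ 0 * Ψ 0)
    (lam : ℕ → ℝ)
    (hlam : ∀ i, lam i = Real.sqrt (Φ i * Ψ i) / (κ * Θ i))
    (hΦrec : ∀ i, Φ (i + 1) - Φ i = 2 * γ * Θ i * lam i)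
    (hΨrec : ∀ i, Ψ (i + 1) - Ψ i = 2 * ρ * Θ i * lam i)
    (hΘrec : ∀ i, Θ (i + 1) - Θ i = lam (i + 1) * Θ (i + 1)) :
    lam 0 = 1 ∧ ∀ i : ℕ, 0 < lam (i + 1) ∧ lam (i + 1) ≤ lam i ∧ lam i ≤ 1 := by
  set sp : ℕ → ℝ := fun i => Real.sqrt (Φ i * Ψ i) with hsp_def
  have hsppos : ∀ i, 0 < sp i := fun i =>
    Real.sqrt_pos.mpr (mul_pos (hΦpos i) (hΨpos i))
  have hsp2 : ∀ i, sp i ^ 2 = Φ i * Ψ i := fun i =>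
    Real.sq_sqrt (le_of_lt (mul_pos (hΦpos i) (hΨpos i)))
  have hκΘ : ∀ i, 0 < κ * Θ i := fun i => mul_pos hκ (hΘpos i)
  have hlampos : ∀ i, 0 < lam i := by
    intro i; rw [hlam i]; exact div_pos (hsppos i) (hκΘ i)
  have hspa : ∀ i, sp i = Real.sqrt (Φ i * Ψ i) := fun i => rfl
  have hlam' : ∀ i, lam i * (κ * Θ i) = sp i := by
    intro i; rw [hlam i, hspa i]; exact div_mul_cancel₀ _ (ne_of_gt (hκΘ i))
  -- lam 0 = 1
  have hsp0 : sp 0 = κ * Θ 0 := by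
    have h : Φ 0 * Ψ 0 = (κ * Θ 0) ^ 2 := by rw [← hinit]; ring
    rw [hspa 0, h]
    exact Real.sqrt_sq (le_of_lt (hκΘ 0))
  have hlam0 : lam 0 = 1 := by
    rw [hlam 0, ← hspa 0, hsp0, div_self (ne_of_gt (hκΘ 0))]
  -- recursions in sp form
  have hΦ' : ∀ i, Φ (i + 1) = Φ i + 2 * γ / κ * sp i := by
    intro i
    have h1 := hΦrec i
    have h2 := hlam' i
    field_simp
    linear_combination κ * h1 + 2 * γ * h2
  have hΨ' : ∀ i, Ψ (i + 1) = Ψ i + 2 * ρ / κ * sp i := by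
    intro i
    have h1 := hΨrec i
    have h2 := hlam' i
    field_simp
    linear_combination κ * h1 + 2 * ρ * h2
  -- Θ relation and lam (i+1) < 1
  have hΘ' : ∀ i, Θ i = Θ (i + 1) * (1 - lam (i + 1)) := by
    intro i; linear_combination (-1 : ℝ) * hΘrec i
  have hlt1 : ∀ i, lam (i + 1) < 1 := by
    intro i
    nlinarith [hΘ' i, hΘpos i, hΘpos (i + 1)]
  -- key identity: lam (i+1) * (κ Θ i + sp (i+1)) = sp (i+1)
  have key1 : ∀ i, lam (i + 1) * (κ * Θ i + sp (i + 1)) = sp (i + 1) := by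
    intro i
    linear_combination (1 - lam (i + 1)) * hlam' (i + 1) + lam (i + 1) * κ * hΘ' i
  -- monotonicity of the ratio: sp (i+2) * sp i ≤ sp (i+1) ^ 2
  have Msp : ∀ i, sp (i + 2) * sp i ≤ sp (i + 1) ^ 2 := by
    intro i
    set a := 2 * γ / κ with ha_def
    set b := 2 * ρ / κ with hb_def
    have ha : 0 ≤ a := by positivity
    have hb : 0 ≤ b := by positivity
    set P := Real.sqrt (Φ i) with hP_def
    set Q := Real.sqrt (Ψ i) with hQ_def
    have hP : 0 < P := Real.sqrt_pos.mpr (hΦpos i)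
    have hQ : 0 < Q := Real.sqrt_pos.mpr (hΨpos i)
    have hP2 : P ^ 2 = Φ i := Real.sq_sqrt (le_of_lt (hΦpos i))
    have hQ2 : Q ^ 2 = Ψ i := Real.sq_sqrt (le_of_lt (hΨpos i))
    have hPQ : P * Q = sp i := (Real.sqrt_mul (le_of_lt (hΦpos i)) (Ψ i)).symm
    set R := sp (i + 1) with hR_def
    have hR : 0 ≤ R := le_of_lt (hsppos (i + 1))
    have hΦa : Φ (i + 1) = P * (P + a * Q) := by
      rw [hΦ' i, ← hP2, ← hPQ]; ring
    have hΨa : Ψ (i + 1) = Q * (Q + b * P) := by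
      rw [hΨ' i, ← hQ2, ← hPQ]; ring
    have hR2 : R ^ 2 = P * Q * (P + a * Q) * (Q + b * P) := by
      rw [hR_def, hsp2 (i + 1), hΦa, hΨa]; ring
    have hfin := prod_ineq a b P Q R ha hb hP hQ hR hR2
    have eΦ : Φ (i + 2) = P ^ 2 + a * P * Q + a * R := by
      rw [hΦ' (i + 1), hΦa, ← hR_def]; ring
    have eΨ : Ψ (i + 2) = Q ^ 2 + b * P * Q + b * R := by
      rw [hΨ' (i + 1), hΨa, ← hR_def]; ring
    have hsq : (sp (i + 2) * sp i) ^ 2 ≤ (sp (i + 1) ^ 2) ^ 2 := by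
      calc (sp (i + 2) * sp i) ^ 2 = (Φ (i + 2) * Ψ (i + 2)) * (Φ i * Ψ i) := by
            rw [mul_pow, hsp2, hsp2]
        _ = (P ^ 2 + a * P * Q + a * R) * (Q ^ 2 + b * P * Q + b * R) * (P ^ 2 * Q ^ 2) := by
            rw [eΦ, eΨ, hP2, hQ2]
        _ ≤ (R ^ 2) ^ 2 := hfin
        _ = (sp (i + 1) ^ 2) ^ 2 := by rw [hR_def]
    have h1 : 0 ≤ sp (i + 2) * sp i := le_of_lt (mul_pos (hsppos _) (hsppos _))
    have h2 : 0 ≤ sp (i + 1) ^ 2 := sq_nonneg _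
    exact (pow_le_pow_iff_left₀ h1 h2 (by norm_num)).mp hsq
  -- invariant : sp (i+1) ≤ sp i + lam i * sp (i+1)
  have inv : ∀ i, sp (i + 1) ≤ sp i + lam i * sp (i + 1) := by
    intro i
    induction i with
    | zero => rw [hlam0]; nlinarith [hsppos 0]
    | succ j ih =>
      -- (*) : sp (j+1) * (κ Θ j) ≤ sp j * (κ Θ j + sp (j+1))
      have hstar : sp (j + 1) * (κ * Θ j) ≤ sp j * (κ * Θ j + sp (j + 1)) := by
        have h2 := hlam' j
        have e3 : κ * Θ j * (lam j * sp (j + 1)) = sp j * sp (j + 1) := by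
          linear_combination sp (j + 1) * h2
        nlinarith [mul_le_mul_of_nonneg_left ih (le_of_lt (hκΘ j)), e3]
      -- want : sp (j+2) ≤ sp (j+1) + lam (j+1) * sp (j+2)
      have hk := key1 j
      have hpos1 : 0 < κ * Θ j + sp (j + 1) := add_pos (hκΘ j) (hsppos (j + 1))
      -- multiply target by (κ Θ j + sp (j+1)) * sp j
      have main : sp (j + 2) * (κ * Θ j) * sp j ≤ sp (j + 1) * (κ * Θ j + sp (j + 1)) * sp j := by
        calc sp (j + 2) * (κ * Θ j) * sp j = (sp (j + 2) * sp j) * (κ * Θ j) := by ring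
          _ ≤ sp (j + 1) ^ 2 * (κ * Θ j) :=
              mul_le_mul_of_nonneg_right (Msp j) (le_of_lt (hκΘ j))
          _ = (sp (j + 1) * (κ * Θ j)) * sp (j + 1) := by ring
          _ ≤ (sp j * (κ * Θ j + sp (j + 1))) * sp (j + 1) :=
              mul_le_mul_of_nonneg_right hstar (le_of_lt (hsppos (j + 1)))
          _ = sp (j + 1) * (κ * Θ j + sp (j + 1)) * sp j := by ring
      -- divide by sp j and use hk : (1 - lam (j+1)) * (κΘj + sp (j+1)) = κ Θ j
      have h3 : sp (j + 2) * (κ * Θ j) ≤ sp (j + 1) * (κ * Θ j + sp (j + 1)) :=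
        le_of_mul_le_mul_right (by nlinarith [main]) (hsppos j)
      have h4 : (1 - lam (j + 1)) * (κ * Θ j + sp (j + 1)) = κ * Θ j := by
        linear_combination -hk
      have e7 : sp (j + 2) * ((1 - lam (j + 1)) * (κ * Θ j + sp (j + 1)))
          = sp (j + 2) * (κ * Θ j) := by rw [h4]
      have h5 : (sp (j + 2) * (1 - lam (j + 1))) * (κ * Θ j + sp (j + 1))
          ≤ sp (j + 1) * (κ * Θ j + sp (j + 1)) := by nlinarith [h3, e7]
      have h6 : sp (j + 2) * (1 - lam (j + 1)) ≤ sp (j + 1) :=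
        le_of_mul_le_mul_right h5 hpos1
      nlinarith [h6]
    -- end induction
  refine ⟨hlam0, fun i => ⟨hlampos (i + 1), ?_, ?_⟩⟩
  · -- lam (i+1) ≤ lam i
    have h2 := hlam' i
    have hstar : sp (i + 1) * (κ * Θ i) ≤ sp i * (κ * Θ i + sp (i + 1)) := by
      have e3 : κ * Θ i * (lam i * sp (i + 1)) = sp i * sp (i + 1) := by
        linear_combination sp (i + 1) * h2
      nlinarith [mul_le_mul_of_nonneg_left (inv i) (le_of_lt (hκΘ i)), e3]
    have hk := key1 i
    have hpos1 : 0 < κ * Θ i + sp (i + 1) := add_pos (hκΘ i) (hsppos (i + 1))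
    have hX : 0 < (κ * Θ i) * (κ * Θ i + sp (i + 1)) := mul_pos (hκΘ i) hpos1
    have e5 : lam (i + 1) * ((κ * Θ i) * (κ * Θ i + sp (i + 1)))
        = (κ * Θ i) * sp (i + 1) := by linear_combination (κ * Θ i) * hk
    have e6 : sp i * (κ * Θ i + sp (i + 1))
        = lam i * ((κ * Θ i) * (κ * Θ i + sp (i + 1))) := by
      linear_combination (-(κ * Θ i + sp (i + 1))) * h2
    have hfin : lam (i + 1) * ((κ * Θ i) * (κ * Θ i + sp (i + 1)))
        ≤ lam i * ((κ * Θ i) * (κ * Θ i + sp (i + 1))) := by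
      nlinarith [hstar, e5, e6]
    exact le_of_mul_le_mul_right hfin hX
  · -- lam i ≤ 1
    cases i with
    | zero => rw [hlam0]
    | succ j => exact le_of_lt (hlt1 j)
end

section
/- For every i ∈ ℕ one has |λ_{i+1} − λ_i| ≤ (1 + 2C₀)·λ_i². -/
lemma sq_le_imp_le' {x y : ℝ} (hx : 0 ≤ x) (hy : 0 ≤ y) (h : x^2 ≤ y^2) : x ≤ y := by
  by_contra hcon
  push_neg at hcon
  nlinarith [mul_pos (sub_pos.mpr (lt_of_le_of_lt hy hcon)) (show (0:ℝ) < x + y by nlinarith [lt_of_le_of_lt hy hcon])]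

lemma one_le_of_sq {x : ℝ} (hx : 0 ≤ x) (h : 1 ≤ x^2) : 1 ≤ x := by
  nlinarith

/-- Abstract invariant lemma for the IC-PDPS parameter recursions. -/
lemma icpdps_aux (d : ℝ) (hd : 0 ≤ d) (b s t : ℕ → ℝ)
    (hbe : ∀ i, Real.sqrt d ≤ b i)
    (hs_pos : ∀ i, 0 < s i)
    (hs2 : ∀ i, (s i)^2 = 1 + d + 2 * b i)
    (hbrec : ∀ i, b (i+1) * s i = b i + d)
    (ht0 : t 0 = 1)
    (htrec : ∀ i, t (i+1) = 1 + t i / s i) :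
    ∀ i, 0 < t i ∧
         t i * d ≤ 1 + d + Real.sqrt (1+d) ∧
         b i ≤ b 0 + 1 + Real.sqrt (1+d) ∧
         t i * b i ≤ 1 + Real.sqrt d + 2*d + 2*(b 0 + 1 + Real.sqrt (1+d)) := by
  set r := Real.sqrt (1+d) with hr
  set e := Real.sqrt d with he
  have hr2 : r^2 = 1 + d := Real.sq_sqrt (by linarith)
  have hr0 : 0 ≤ r := Real.sqrt_nonneg _
  have hr1 : 1 ≤ r := one_le_of_sq hr0 (by linarith only [hr2, hd])
  have he2 : e^2 = d := Real.sq_sqrt hd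
  have he0 : 0 ≤ e := Real.sqrt_nonneg _
  have hb0 : ∀ i, 0 ≤ b i := fun i => le_trans he0 (hbe i)
  have hs1 : ∀ i, 1 ≤ s i := fun i =>
    one_le_of_sq (hs_pos i).le (by rw [hs2 i]; linarith only [hd, hb0 i])
  have hsr : ∀ i, r ≤ s i := fun i =>
    sq_le_imp_le' hr0 (hs_pos i).le (by rw [hr2, hs2 i]; linarith only [hb0 i])
  have hB : 0 ≤ b 0 + 1 + r := by linarith only [hb0 0, hr0]
  set B := b 0 + 1 + r with hBdef
  intro i
  induction i with
  | zero =>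
    refine ⟨by rw [ht0]; norm_num, ?_, ?_, ?_⟩
    · rw [ht0]; linarith only [hr0, hd]
    · linarith only [hr0, hBdef]
    · rw [ht0]; linarith only [hb0 0, hd, he0, hr0, hBdef]
  | succ i ih =>
    obtain ⟨htp, htd, hbB, hv⟩ := ih
    have hsp := hs_pos i
    have hs1i := hs1 i
    have hsri := hsr i
    have hbrec' : b (i+1) = (b i + d) / s i := by
      field_simp
      linarith [hbrec i]
    have htp' : 0 < t (i+1) := by
      rw [htrec i]
      positivity
    refine ⟨htp', ?_, ?_, ?_⟩
    · -- t(i+1) * d ≤ 1 + d + r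
      rw [htrec i]
      have h1 : t i * d / s i ≤ (1 + d + r) / r := by
        apply div_le_div₀ (by linarith only [hd, hr0]) htd (by linarith only [hr1]) hsri
      have h2 : (1 + d + r) / r = r + 1 := by
        field_simp
        nlinarith
      have : (1 + t i / s i) * d = d + (t i * d) / s i := by
        field_simp
      rw [this]
      linarith [h1, h2 ▸ h1]
    · -- b(i+1) ≤ B
      rw [hbrec']
      have h1 : (b i + d) / s i ≤ (B + d) / r := by
        apply div_le_div₀ (by linarith only [hB, hd]) (by linarith only [hbB]) (by linarith only [hr1]) hsri
      have h2 : (B + d) / r ≤ B := by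
        rw [div_le_iff₀ (by linarith only [hr1] : (0:ℝ) < r)]
        have hprod : 0 ≤ b 0 * (r - 1) :=
          mul_nonneg (hb0 0) (by linarith only [hr1])
        have hexp : B * r = b 0 * r + r + r^2 := by rw [hBdef]; ring
        linarith only [hBdef, hr2, hprod, hexp]
      linarith
    · -- v(i+1) ≤ V
      set v := t i * b i with hvdef
      have hvpos : 0 ≤ v := mul_nonneg htp.le (hb0 i)
      have hbe_i := hbe i
      have hc0 : 0 ≤ b i + d := by linarith [hb0 i]
      have hts : t (i+1) * s i = s i + t i := by
        rw [htrec i]; field_simp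
      have hkey : t (i+1) * b (i+1) * (s i)^2 = (s i + t i) * (b i + d) := by
        calc t (i+1) * b (i+1) * (s i)^2 = (t (i+1) * s i) * (b (i+1) * s i) := by ring
        _ = (s i + t i) * (b i + d) := by rw [hts, hbrec i]
      have htc : t i * (b i + d) ≤ v * (1 + e) := by
        have h3 : t i * d ≤ (t i * b i) * e := by
          calc t i * d = (t i * e) * e := by rw [← he2]; ring
          _ ≤ (t i * b i) * e :=
            mul_le_mul_of_nonneg_right (mul_le_mul_of_nonneg_left hbe_i htp.le) he0
        have h4 : t i * (b i + d) = t i * b i + t i * d := by ring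
        have h5 : v * (1 + e) = t i * b i + t i * b i * e := by rw [hvdef]; ring
        linarith only [h3, h4, h5]
      have hs2i := hs2 i
      have hse : 1 + e + (b i + d) ≤ (s i)^2 := by rw [hs2i]; linarith
      rcases le_or_gt v (1 + e + B + d) with hcase | hcase
      · have hss : s i ≤ (s i)^2 := by
          calc s i = s i * 1 := (mul_one _).symm
          _ ≤ s i * s i := mul_le_mul_of_nonneg_left hs1i hsp.le
          _ = (s i)^2 := by ring
        have e1 : s i * (b i + d) ≤ (s i)^2 * (b i + d) := mul_le_mul_of_nonneg_right hss hc0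
        have e2 : v * (1+e) ≤ v * (s i)^2 := mul_le_mul_of_nonneg_left (by linarith) hvpos
        have h1 : t (i+1) * b (i+1) * (s i)^2 ≤ ((b i + d) + v) * (s i)^2 := by
          rw [hkey]; linarith only [e1, e2, htc]
        have h2 : t (i+1) * b (i+1) ≤ (b i + d) + v :=
          le_of_mul_le_mul_right h1 (pow_pos hsp 2)
        linarith
      · have hW0 : 0 ≤ 1 + e + B + d := by linarith
        have hsqW : (s i)^2 ≤ (1+e+B+d)^2 := by
          have hx1 : (s i)^2 ≤ 1 + d + 2*B := by rw [hs2i]; linarith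
          have hx2 : (1+e+B+d)^2 = 1+2*e+2*B+2*d
              + (e^2+B^2+d^2+2*(e*B)+2*(e*d)+2*(B*d)) := by ring
          linarith only [hx1, hx2, mul_nonneg he0 hB, mul_nonneg he0 hd,
            mul_nonneg hB hd, sq_nonneg e, sq_nonneg B, sq_nonneg d, hd, he0, hB]
        have hsum : 0 < s i + (1+e+B+d) := by linarith
        have hsW : s i ≤ 1 + e + B + d := by
          by_contra hcon
          push_neg at hcon
          have h := mul_lt_mul_of_pos_right hcon hsum
          have hh1 : (1+e+B+d)*(s i + (1+e+B+d)) = (1+e+B+d)*s i + (1+e+B+d)^2 := by ring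
          have hh2 : s i*(s i + (1+e+B+d)) = (s i)^2 + s i*(1+e+B+d) := by ring
          linarith only [h, hsqW, hh1, hh2]
        have e1 : s i * (b i + d) ≤ v * (b i + d) :=
          mul_le_mul_of_nonneg_right (by linarith) hc0
        have e2 : v * (1 + e + (b i + d)) ≤ v * (s i)^2 :=
          mul_le_mul_of_nonneg_left hse hvpos
        have h1 : t (i+1) * b (i+1) * (s i)^2 ≤ v * (s i)^2 := by
          rw [hkey]; linarith only [e1, e2, htc]
        have h2 : t (i+1) * b (i+1) ≤ v :=
          le_of_mul_le_mul_right h1 (pow_pos hsp 2)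
        linarith

set_option maxHeartbeats 2000000 in
/-- Statement 5 on the IC-PDPS parameter sequences. -/
theorem stmt_5 (κ γ ρ : ℝ) (hκ : 0 < κ) (hγ : 0 ≤ γ) (hρ : 0 ≤ ρ)
    (Φ Ψ Θ : ℕ → ℝ)
    (hΦpos : ∀ i, 0 < Φ i) (hΨpos : ∀ i, 0 < Ψ i) (hΘpos : ∀ i, 0 < Θ i)
    (hinit : κ ^ 2 * (Θ 0) ^ 2 = Φ 0 * Ψ 0)
    (lam : ℕ → ℝ)
    (hlam : ∀ i, lam i = Real.sqrt (Φ i * Ψ i) / (κ * Θ i))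
    (hΦrec : ∀ i, Φ (i + 1) - Φ i = 2 * γ * Θ i * lam i)
    (hΨrec : ∀ i, Ψ (i + 1) - Ψ i = 2 * ρ * Θ i * lam i)
    (hΘrec : ∀ i, Θ (i + 1) - Θ i = lam (i + 1) * Θ (i + 1)) :
    ∀ i : ℕ, |lam (i + 1) - lam i| ≤ (1 + 2 * (10 + 24 * γ * ρ / κ ^ 2 + (8 * γ * Ψ 0 + 8 * ρ * Φ 0) / (κ ^ 2 * Θ 0))) * (lam i) ^ 2 := by
  have hκ2 : (0:ℝ) < κ^2 := by positivity
  have hκne : κ ≠ 0 := hκ.ne'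
  set d := 4*γ*ρ/κ^2 with hd_def
  have hd : 0 ≤ d := by positivity
  set p : ℕ → ℝ := fun i => Real.sqrt (Φ i * Ψ i) with hp_def
  have hpE : ∀ i, p i = Real.sqrt (Φ i * Ψ i) := fun _ => rfl
  have hpp : ∀ i, 0 < p i := fun i => Real.sqrt_pos.mpr (mul_pos (hΦpos i) (hΨpos i))
  have hpne : ∀ i, p i ≠ 0 := fun i => (hpp i).ne'
  have hp2 : ∀ i, (p i)^2 = Φ i * Ψ i := fun i => Real.sq_sqrt (mul_pos (hΦpos i) (hΨpos i)).le
  have hκΘ : ∀ i, 0 < κ * Θ i := fun i => mul_pos hκ (hΘpos i)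
  have hΘne : ∀ i, Θ i ≠ 0 := fun i => (hΘpos i).ne'
  have hlam_pos : ∀ i, 0 < lam i := fun i => by
    rw [hlam i]; exact div_pos (hpp i) (hκΘ i)
  have hΘlamκ : ∀ i, κ * (Θ i * lam i) = p i := by
    intro i
    rw [hlam i, hpE i]
    field_simp [hΘne i, hκne]
  have hΦ1 : ∀ i, Φ (i+1) * κ = Φ i * κ + 2*γ*(p i) := by
    intro i
    linear_combination κ*(hΦrec i) + 2*γ*(hΘlamκ i)
  have hΨ1 : ∀ i, Ψ (i+1) * κ = Ψ i * κ + 2*ρ*(p i) := by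
    intro i
    linear_combination κ*(hΨrec i) + 2*ρ*(hΘlamκ i)
  set b : ℕ → ℝ := fun i => (γ*Ψ i + ρ*Φ i)/(κ * p i) with hb_def
  set s : ℕ → ℝ := fun i => p (i+1) / p i with hs_def
  set t : ℕ → ℝ := fun i => (κ*Θ i)/(p i) with ht_def
  have hs_pos : ∀ i, 0 < s i := fun i => div_pos (hpp (i+1)) (hpp i)
  have htp : ∀ i, 0 < t i := fun i => div_pos (hκΘ i) (hpp i)
  have htlam : ∀ i, t i * lam i = 1 := by
    intro i
    have e0 : t i * lam i = (κ*(Θ i * lam i))/(p i) := by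
      show ((κ*Θ i)/(p i)) * lam i = _
      ring
    rw [e0, hΘlamκ i]
    exact div_self (hpne i)
  have qq : ∀ i, (p (i+1))^2 * κ^2
      = (p i)^2 * κ^2 + 4*γ*ρ*(p i)^2 + 2*(γ*Ψ i + ρ*Φ i)*(p i)*κ := by
    intro i
    have e1 : (p (i+1))^2 * κ^2 = (Φ (i+1)*κ) * (Ψ (i+1)*κ) := by rw [hp2 (i+1)]; ring
    rw [e1, hΦ1 i, hΨ1 i]
    linear_combination (-(κ^2)) * hp2 i
  have hs2 : ∀ i, (s i)^2 = 1 + d + 2 * b i := by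
    intro i
    show (p (i+1) / p i)^2 = 1 + d + 2 * ((γ*Ψ i + ρ*Φ i)/(κ * p i))
    rw [hd_def, div_pow]
    field_simp [hpne i, hpne (i+1), hκne]
    linear_combination qq i
  have hbrec : ∀ i, b (i+1) * s i = b i + d := by
    intro i
    show (γ*Ψ (i+1) + ρ*Φ (i+1))/(κ * p (i+1)) * (p (i+1) / p i)
        = (γ*Ψ i + ρ*Φ i)/(κ * p i) + d
    rw [hd_def]
    have hnum : (γ*Ψ (i+1) + ρ*Φ (i+1))*κ = (γ*Ψ i + ρ*Φ i)*κ + 4*γ*ρ*(p i) := by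
      linear_combination γ*(hΨ1 i) + ρ*(hΦ1 i)
    field_simp [hpne i, hpne (i+1), hκne]
    linear_combination hnum
  have hbe : ∀ i, Real.sqrt d ≤ b i := by
    intro i
    have hsd : Real.sqrt d = 2*Real.sqrt (γ*ρ)/κ := by
      rw [show d = (2*Real.sqrt (γ*ρ)/κ)^2 by
        rw [div_pow, mul_pow, Real.sq_sqrt (mul_nonneg hγ hρ)]
        rw [hd_def]; ring]
      exact Real.sqrt_sq (div_nonneg (by positivity) hκ.le)
    have hamgm : 2*Real.sqrt (γ*ρ) * p i ≤ γ*Ψ i + ρ*Φ i := by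
      have h1 : Real.sqrt (γ*Ψ i) * Real.sqrt (ρ*Φ i) = Real.sqrt (γ*ρ) * p i := by
        rw [hpE i, ← Real.sqrt_mul (mul_nonneg hγ (hΨpos i).le),
          ← Real.sqrt_mul (mul_nonneg hγ hρ)]
        congr 1
        ring
      have h2 := sq_nonneg (Real.sqrt (γ*Ψ i) - Real.sqrt (ρ*Φ i))
      have h3 : (Real.sqrt (γ*Ψ i))^2 = γ*Ψ i := Real.sq_sqrt (mul_nonneg hγ (hΨpos i).le)
      have h4 : (Real.sqrt (ρ*Φ i))^2 = ρ*Φ i := Real.sq_sqrt (mul_nonneg hρ (hΦpos i).le)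
      nlinarith [h1, h2, h3, h4]
    show Real.sqrt d ≤ (γ*Ψ i + ρ*Φ i)/(κ * p i)
    rw [hsd, le_div_iff₀ (mul_pos hκ (hpp i))]
    calc 2*Real.sqrt (γ*ρ)/κ * (κ * p i) = 2*Real.sqrt (γ*ρ) * p i := by
          field_simp
    _ ≤ γ*Ψ i + ρ*Φ i := hamgm
  have hκΘ0p : κ * Θ 0 = p 0 := by
    have h1 : (κ*Θ 0)^2 = (p 0)^2 := by rw [hp2 0, ← hinit]; ring
    have h2 : (κ*Θ 0 - p 0)*(κ*Θ 0 + p 0) = 0 := by linear_combination h1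
    rcases mul_eq_zero.mp h2 with h | h
    · linarith
    · nlinarith [hκΘ 0, hpp 0]
  have ht0 : t 0 = 1 := by
    show (κ*Θ 0)/(p 0) = 1
    rw [hκΘ0p]
    exact div_self (hpne 0)
  have hΘ1 : ∀ i, κ*Θ (i+1) = κ*Θ i + p (i+1) := by
    intro i
    linear_combination κ * (hΘrec i) + hΘlamκ (i+1)
  have htrec : ∀ i, t (i+1) = 1 + t i / s i := by
    intro i
    show (κ*Θ (i+1))/(p (i+1)) = 1 + ((κ*Θ i)/(p i))/(p (i+1)/p i)
    rw [hΘ1 i]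
    field_simp [hpne i, hpne (i+1)]
    ring
  have H := icpdps_aux d hd b s t hbe hs_pos hs2 hbrec ht0 htrec
  intro i
  obtain ⟨htpi, htd, hbB, hv⟩ := H i
  set r := Real.sqrt (1+d) with hr_def
  set e := Real.sqrt d with he_def
  have hr2 : r^2 = 1+d := Real.sq_sqrt (by linarith)
  have hr0 : 0 ≤ r := Real.sqrt_nonneg _
  have hr1 : 1 ≤ r := one_le_of_sq hr0 (by linarith only [hr2, hd])
  have he2 : e^2 = d := Real.sq_sqrt hd
  have he0 : 0 ≤ e := Real.sqrt_nonneg _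
  have hb0i : 0 ≤ b i := le_trans he0 (hbe i)
  have hb00 : 0 ≤ b 0 := le_trans he0 (hbe 0)
  have hspi := hs_pos i
  have hs1i : 1 ≤ s i := one_le_of_sq hspi.le (by rw [hs2 i]; linarith only [hd, hb0i])
  have hlp := hlam_pos i
  have hrb : r ≤ 1 + d/2 := by
    apply sq_le_imp_le' hr0 (by linarith only [hd])
    have hexp : (1+d/2)^2 = 1+d+d^2/4 := by ring
    linarith only [hr2, sq_nonneg d, hexp]
  have heb : e ≤ (1+d)/2 := by
    apply sq_le_imp_le' he0 (by linarith only [hd])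
    have hexp : ((1+d)/2)^2 = (1+2*d+d^2)/4 := by ring
    have hexp2 : (1-d)^2 = 1-2*d+d^2 := by ring
    linarith only [he2, sq_nonneg (1-d), hexp, hexp2]
  have hKeq : 1 + 2 * (10 + 24 * γ * ρ / κ ^ 2 + (8 * γ * Ψ 0 + 8 * ρ * Φ 0) / (κ ^ 2 * Θ 0))
      = 21 + 12*d + 16*b 0 := by
    have hden : κ^2*Θ 0 = κ * p 0 := by rw [← hκΘ0p]; ring
    show _ = 21 + 12*d + 16*((γ*Ψ 0 + ρ*Φ 0)/(κ * p 0))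
    rw [hden, hd_def]
    field_simp [hκne, hpne 0]
    ring
  rw [hKeq]
  -- the lambda recursion
  have h1 : lam (i+1) * (κ*Θ i + p (i+1)) = p (i+1) := by
    rw [← hΘ1 i]
    linear_combination hΘlamκ (i+1)
  have h2 : s i * lam i = p (i+1) / (κ*Θ i) := by
    show (p (i+1)/p i) * lam i = _
    rw [hlam i, ← hpE i]
    field_simp [hpne i, hΘne i, hκne]
    try ring
  have hlrec : lam (i+1) * (1 + s i * lam i) = s i * lam i := by
    rw [h2]
    field_simp [hΘne i, hκne]
    try linear_combination h1
    try linarith only [h1]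
  have hdiff : (lam (i+1) - lam i) * (1 + s i * lam i)
      = lam i * (s i - 1) - s i * (lam i)^2 := by
    linear_combination hlrec
  have hD : 0 < 1 + s i * lam i := by linarith only [mul_pos hspi hlp]
  have habs : |lam (i+1) - lam i| * (1 + s i * lam i)
      ≤ lam i * (s i - 1) + s i * (lam i)^2 := by
    have e1 : |lam (i+1) - lam i| * (1 + s i * lam i)
        = |(lam (i+1) - lam i) * (1 + s i * lam i)| := by
      rw [abs_mul, abs_of_pos hD]
    rw [e1, hdiff]
    have e2 : 0 ≤ lam i * (s i - 1) := mul_nonneg hlp.le (by linarith)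
    have e3 : 0 ≤ s i * (lam i)^2 := mul_nonneg hspi.le (sq_nonneg _)
    rw [abs_le]
    constructor <;> linarith only [e2, e3]
  have habs2 : |lam (i+1) - lam i| ≤ lam i * (s i - 1) + s i * (lam i)^2 := by
    have h3 : |lam (i+1) - lam i| * 1 ≤ |lam (i+1) - lam i| * (1 + s i * lam i) :=
      mul_le_mul_of_nonneg_left (by linarith only [mul_pos hspi hlp]) (abs_nonneg _)
    linarith only [habs, h3, mul_one |lam (i+1) - lam i|]
  -- bound lam i * (s i - 1)
  have hU : t i * (s i - 1) ≤ (1+d+r)/2 + (1 + e + 2*d + 2*(b 0 + 1 + r)) := by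
    have h4 : s i - 1 ≤ ((s i)^2 - 1)/2 := by
      have hexp : (s i - 1)^2 = (s i)^2 - 2*(s i) + 1 := by ring
      linarith only [sq_nonneg (s i - 1), hexp]
    have h5 : t i * (s i - 1) ≤ t i * (((s i)^2 - 1)/2) := mul_le_mul_of_nonneg_left h4 htpi.le
    have h6 : t i * (((s i)^2 - 1)/2) = (t i * d)/2 + t i * b i := by rw [hs2 i]; ring
    linarith only [htd, hv, h5, h6]
  have hsm1 : s i - 1 ≤ ((1+d+r)/2 + (1 + e + 2*d + 2*(b 0 + 1 + r))) * lam i := by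
    have h7 := mul_le_mul_of_nonneg_right hU hlp.le
    have h8 : t i * (s i - 1) * lam i = s i - 1 := by
      linear_combination (s i - 1) * htlam i
    linarith only [h7, h8]
  have hfin1 : lam i * (s i - 1)
      ≤ ((1+d+r)/2 + (1 + e + 2*d + 2*(b 0 + 1 + r))) * (lam i)^2 := by
    have h9 := mul_le_mul_of_nonneg_left hsm1 hlp.le
    have h10 : lam i * (((1+d+r)/2 + (1 + e + 2*d + 2*(b 0 + 1 + r))) * lam i)
        = ((1+d+r)/2 + (1 + e + 2*d + 2*(b 0 + 1 + r))) * (lam i)^2 := by ring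
    linarith only [h9, h10]
  have hsS : s i ≤ 3 + d + b 0 := by
    apply sq_le_imp_le' hspi.le (by linarith only [hd, hb00])
    rw [hs2 i]
    have hexp : (3+d+b 0)^2 = 9+6*d+6*(b 0)+(d^2+(b 0)^2+2*(d*(b 0))) := by ring
    linarith only [hbB, hrb, hd, hb00, sq_nonneg d, sq_nonneg (b 0),
      mul_nonneg hd hb00, hexp]
  have hfin2 : s i * (lam i)^2 ≤ (3 + d + b 0) * (lam i)^2 :=
    mul_le_mul_of_nonneg_right hsS (sq_nonneg _)
  have hcoef : (((1+d+r)/2 + (1 + e + 2*d + 2*(b 0 + 1 + r))) + (3 + d + b 0))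
      ≤ 21 + 12*d + 16*b 0 := by linarith only [hrb, heb, hd, hb00]
  have hfin3 : (((1+d+r)/2 + (1 + e + 2*d + 2*(b 0 + 1 + r))) + (3 + d + b 0)) * (lam i)^2
      ≤ (21 + 12*d + 16*b 0) * (lam i)^2 :=
    mul_le_mul_of_nonneg_right hcoef (sq_nonneg _)
  calc |lam (i+1) - lam i| ≤ lam i * (s i - 1) + s i * (lam i)^2 := habs2
  _ ≤ (21 + 12*d + 16*b 0) * (lam i)^2 := by linarith only [hfin1, hfin2, hfin3]
end

section
/- For every i ∈ ℕ one has |λ_i/λ_{i+1} − 1| ≤ (1 + C₀)·λ_i. -/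
set_option maxHeartbeats 2000000 in
/-- Statement 6 on the IC-PDPS parameter sequences. -/
theorem stmt_6 (κ γ ρ : ℝ) (hκ : 0 < κ) (hγ : 0 ≤ γ) (hρ : 0 ≤ ρ)
    (Φ Ψ Θ : ℕ → ℝ)
    (hΦpos : ∀ i, 0 < Φ i) (hΨpos : ∀ i, 0 < Ψ i) (hΘpos : ∀ i, 0 < Θ i)
    (hinit : κ ^ 2 * (Θ 0) ^ 2 = Φ 0 * Ψ 0)
    (lam : ℕ → ℝ)
    (hlam : ∀ i, lam i = Real.sqrt (Φ i * Ψ i) / (κ * Θ i))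
    (hΦrec : ∀ i, Φ (i + 1) - Φ i = 2 * γ * Θ i * lam i)
    (hΨrec : ∀ i, Ψ (i + 1) - Ψ i = 2 * ρ * Θ i * lam i)
    (hΘrec : ∀ i, Θ (i + 1) - Θ i = lam (i + 1) * Θ (i + 1)) :
    ∀ i : ℕ, |lam i / lam (i + 1) - 1| ≤ (1 + (10 + 24 * γ * ρ / κ ^ 2 + (8 * γ * Ψ 0 + 8 * ρ * Φ 0) / (κ ^ 2 * Θ 0))) * lam i := by
  have hκ' : κ ≠ 0 := ne_of_gt hκ
  set v : ℝ := Real.sqrt (γ * ρ) with hvdef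
  have hv0 : 0 ≤ v := Real.sqrt_nonneg _
  have hv2 : v ^ 2 = γ * ρ := Real.sq_sqrt (mul_nonneg hγ hρ)
  set s : ℕ → ℝ := fun j => Real.sqrt (Φ j * Ψ j) with hsdef
  have hspos : ∀ j, 0 < s j := fun j => Real.sqrt_pos.2 (mul_pos (hΦpos j) (hΨpos j))
  have hssq : ∀ j, s j ^ 2 = Φ j * Ψ j := fun j =>
    Real.sq_sqrt (mul_pos (hΦpos j) (hΨpos j)).le
  have hlam' : ∀ j, lam j = s j / (κ * Θ j) := hlam
  have hlampos : ∀ j, 0 < lam j := by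
    intro j
    rw [hlam']
    exact div_pos (hspos j) (mul_pos hκ (hΘpos j))
  have hΘlam : ∀ j, κ * (Θ j * lam j) = s j := by
    intro j
    have hne : κ * Θ j ≠ 0 := ne_of_gt (mul_pos hκ (hΘpos j))
    rw [hlam']
    rw [show κ * (Θ j * (s j / (κ * Θ j))) = s j / (κ * Θ j) * (κ * Θ j) from by ring]
    exact div_mul_cancel₀ _ hne
  have hΦ' : ∀ j, κ * Φ (j + 1) = κ * Φ j + 2 * γ * s j := by
    intro j
    have h := hΦrec j
    have h2 := hΘlam j
    linear_combination κ * h + 2 * γ * h2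
  have hΨ' : ∀ j, κ * Ψ (j + 1) = κ * Ψ j + 2 * ρ * s j := by
    intro j
    have h := hΨrec j
    have h2 := hΘlam j
    linear_combination κ * h + 2 * ρ * h2
  have hP : ∀ j, s (j + 1) ^ 2 * κ ^ 2 =
      s j ^ 2 * κ ^ 2 + (2 * γ * Ψ j + 2 * ρ * Φ j) * s j * κ + 4 * γ * ρ * s j ^ 2 := by
    intro j
    have hA := hssq (j + 1)
    have hD := hssq j
    have hB := hΦ' j
    have hC := hΨ' j
    linear_combination κ ^ 2 * hA - κ ^ 2 * hD + (κ * Ψ (j + 1)) * hB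
      + (κ * Φ j + 2 * γ * s j) * hC
  have hs0 : s 0 = κ * Θ 0 := by
    have h : Φ 0 * Ψ 0 = (κ * Θ 0) ^ 2 := by linear_combination -hinit
    show Real.sqrt (Φ 0 * Ψ 0) = κ * Θ 0
    rw [h, Real.sqrt_sq (mul_pos hκ (hΘpos 0)).le]
  have hΘ' : ∀ j, κ * Θ (j + 1) = κ * Θ j + s (j + 1) := by
    intro j
    have h := hΘrec j
    have h2 := hΘlam (j + 1)
    linear_combination κ * h + h2
  -- AM-GM
  have hamgm : ∀ j, 4 * v * s j ≤ 2 * γ * Ψ j + 2 * ρ * Φ j := by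
    intro j
    have hgp : (0:ℝ) ≤ γ * Ψ j := mul_nonneg hγ (hΨpos j).le
    have hrf : (0:ℝ) ≤ ρ * Φ j := mul_nonneg hρ (hΦpos j).le
    have h1 : v * s j = Real.sqrt ((γ * ρ) * (Φ j * Ψ j)) :=
      (Real.sqrt_mul (mul_nonneg hγ hρ) _).symm
    have h2 : (γ * ρ) * (Φ j * Ψ j) = (γ * Ψ j) * (ρ * Φ j) := by ring
    have h3 : v * s j = Real.sqrt (γ * Ψ j) * Real.sqrt (ρ * Φ j) := by
      rw [h1, h2, Real.sqrt_mul hgp]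
    nlinarith [Real.sq_sqrt hgp, Real.sq_sqrt hrf,
      sq_nonneg (Real.sqrt (γ * Ψ j) - Real.sqrt (ρ * Φ j))]
  -- monotone growth of s
  have hmono : ∀ j, (1 + 2 * v / κ) * s j ≤ s (j + 1) := by
    intro j
    have hx : (0:ℝ) ≤ (1 + 2 * v / κ) * s j := by positivity
    have hmg : 4 * v * s j * (s j * κ) ≤ (2 * γ * Ψ j + 2 * ρ * Φ j) * (s j * κ) :=
      mul_le_mul_of_nonneg_right (hamgm j) (mul_nonneg (hspos j).le hκ.le)
    have hv2s : v ^ 2 * s j ^ 2 = γ * ρ * s j ^ 2 := by rw [hv2]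
    have hsq2 : ((κ + 2 * v) * s j) ^ 2 ≤ s (j + 1) ^ 2 * κ ^ 2 := by
      linarith [hP j, hmg, hv2s]
    have hsq : ((1 + 2 * v / κ) * s j) ^ 2 ≤ s (j + 1) ^ 2 := by
      have e : ((1 + 2 * v / κ) * s j) ^ 2 * κ ^ 2 = ((κ + 2 * v) * s j) ^ 2 := by
        have e0 : (1 + 2 * v / κ) * κ = κ + 2 * v := by
          field_simp
        linear_combination (2 * v / κ * κ * s j ^ 2 + κ * s j ^ 2 + s j ^ 2 * (κ + 2 * v)) * e0
      have h : ((1 + 2 * v / κ) * s j) ^ 2 * κ ^ 2 ≤ s (j + 1) ^ 2 * κ ^ 2 := by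
        rw [e]; exact hsq2
      exact le_of_mul_le_mul_right h (by positivity)
    have h := Real.sqrt_le_sqrt hsq
    rwa [Real.sqrt_sq hx, Real.sqrt_sq (hspos (j + 1)).le] at h
  have hsle : ∀ j, s j ≤ s (j + 1) := by
    intro j
    have h := hmono j
    have h2 : (0:ℝ) ≤ 2 * v / κ * s j :=
      mul_nonneg (div_nonneg (by linarith) hκ.le) (hspos j).le
    linarith [h, h2]
  have hmonoκ : ∀ j, (κ + 2 * v) * s j ≤ κ * s (j + 1) := by
    intro j
    have h := mul_le_mul_of_nonneg_left (hmono j) hκ.le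
    have e0 : (1 + 2 * v / κ) * κ = κ + 2 * v := by field_simp
    have e : κ * ((1 + 2 * v / κ) * s j) = (κ + 2 * v) * s j := by
      linear_combination (s j) * e0
    linarith [h, e]
  -- linear bounds on Ψ and Φ
  set c : ℝ := 2 * γ * Ψ 0 / (κ * Θ 0) + 2 * v with hcdef
  set c' : ℝ := 2 * ρ * Φ 0 / (κ * Θ 0) + 2 * v with hc'def
  have hΘ0pos : (0:ℝ) < κ * Θ 0 := mul_pos hκ (hΘpos 0)
  have hcid : c * (κ * Θ 0) = 2 * γ * Ψ 0 + 2 * v * (κ * Θ 0) := by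
    rw [hcdef]
    have h := div_mul_cancel₀ (2 * γ * Ψ 0) (ne_of_gt hΘ0pos)
    linear_combination h
  have hc'id : c' * (κ * Θ 0) = 2 * ρ * Φ 0 + 2 * v * (κ * Θ 0) := by
    rw [hc'def]
    have h := div_mul_cancel₀ (2 * ρ * Φ 0) (ne_of_gt hΘ0pos)
    linear_combination h
  have hgΨ : (0:ℝ) ≤ 2 * γ * Ψ 0 := by
    have := mul_nonneg hγ (hΨpos 0).le; linarith
  have hrΦ : (0:ℝ) ≤ 2 * ρ * Φ 0 := by
    have := mul_nonneg hρ (hΦpos 0).le; linarith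
  have hc0 : 2 * v ≤ c := by
    have h : 0 ≤ 2 * γ * Ψ 0 / (κ * Θ 0) := div_nonneg hgΨ hΘ0pos.le
    rw [hcdef]; linarith
  have hc'0 : 2 * v ≤ c' := by
    have h : 0 ≤ 2 * ρ * Φ 0 / (κ * Θ 0) := div_nonneg hrΦ hΘ0pos.le
    rw [hc'def]; linarith
  have hcnn : 0 ≤ c := by linarith
  have hc'nn : 0 ≤ c' := by linarith
  have hc : ∀ j, 2 * γ * Ψ j ≤ c * s j := by
    intro j
    induction j with
    | zero =>
      rw [hs0, hcid]
      linarith [mul_nonneg hv0 hΘ0pos.le]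
    | succ n ih =>
      have h1 := hΨ' n
      have h5 : κ * (2 * γ * Ψ (n + 1)) = κ * (2 * γ * Ψ n) + 4 * γ * ρ * s n := by
        linear_combination 2 * γ * h1
      have k2 : c * ((κ + 2 * v) * s n) ≤ c * (κ * s (n + 1)) :=
        mul_le_mul_of_nonneg_left (hmonoκ n) hcnn
      have k3 : κ * (2 * γ * Ψ n) ≤ κ * (c * s n) :=
        mul_le_mul_of_nonneg_left ih hκ.le
      have p : (0:ℝ) ≤ v * (c - 2 * v) * s n :=
        mul_nonneg (mul_nonneg hv0 (by linarith)) (hspos n).le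
      have hv2s : v ^ 2 * s n = γ * ρ * s n := by rw [hv2]
      have k4 : 4 * γ * ρ * s n ≤ 2 * v * (c * s n) := by linarith [p, hv2s]
      have k5 : κ * (2 * γ * Ψ (n + 1)) ≤ κ * (c * s (n + 1)) := by
        linarith [h5, k2, k3, k4]
      exact le_of_mul_le_mul_left k5 hκ
  have hc' : ∀ j, 2 * ρ * Φ j ≤ c' * s j := by
    intro j
    induction j with
    | zero =>
      rw [hs0, hc'id]
      linarith [mul_nonneg hv0 hΘ0pos.le]
    | succ n ih =>
      have h1 := hΦ' n
      have h5 : κ * (2 * ρ * Φ (n + 1)) = κ * (2 * ρ * Φ n) + 4 * γ * ρ * s n := by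
        linear_combination 2 * ρ * h1
      have k2 : c' * ((κ + 2 * v) * s n) ≤ c' * (κ * s (n + 1)) :=
        mul_le_mul_of_nonneg_left (hmonoκ n) hc'nn
      have k3 : κ * (2 * ρ * Φ n) ≤ κ * (c' * s n) :=
        mul_le_mul_of_nonneg_left ih hκ.le
      have p : (0:ℝ) ≤ v * (c' - 2 * v) * s n :=
        mul_nonneg (mul_nonneg hv0 (by linarith)) (hspos n).le
      have hv2s : v ^ 2 * s n = γ * ρ * s n := by rw [hv2]
      have k4 : 4 * γ * ρ * s n ≤ 2 * v * (c' * s n) := by linarith [p, hv2s]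
      have k5 : κ * (2 * ρ * Φ (n + 1)) ≤ κ * (c' * s (n + 1)) := by
        linarith [h5, k2, k3, k4]
      exact le_of_mul_le_mul_left k5 hκ
  -- linear bounds on Θ
  have hT1 : ∀ j, 2 * γ * (κ * Θ j) ≤ 4 * γ * s j + κ * Φ j := by
    intro j
    induction j with
    | zero =>
      rw [← hs0]
      linarith [mul_nonneg hγ (hspos 0).le, mul_pos hκ (hΦpos 0)]
    | succ n ih =>
      have h1 : 2 * γ * (κ * Θ (n + 1)) = 2 * γ * (κ * Θ n) + 2 * γ * s (n + 1) := by
        linear_combination 2 * γ * hΘ' n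
      have h2 := hΦ' n
      have h4 : 2 * γ * s n ≤ 2 * γ * s (n + 1) :=
        mul_le_mul_of_nonneg_left (hsle n) (by linarith)
      linarith [h1, h2, ih, h4]
  have hT2 : ∀ j, 2 * ρ * (κ * Θ j) ≤ 4 * ρ * s j + κ * Ψ j := by
    intro j
    induction j with
    | zero =>
      rw [← hs0]
      linarith [mul_nonneg hρ (hspos 0).le, mul_pos hκ (hΨpos 0)]
    | succ n ih =>
      have h1 : 2 * ρ * (κ * Θ (n + 1)) = 2 * ρ * (κ * Θ n) + 2 * ρ * s (n + 1) := by
        linear_combination 2 * ρ * hΘ' n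
      have h2 := hΨ' n
      have h4 : 2 * ρ * s n ≤ 2 * ρ * s (n + 1) :=
        mul_le_mul_of_nonneg_left (hsle n) (by linarith)
      linarith [h1, h2, ih, h4]
  intro i
  set C : ℝ := 10 + 24 * γ * ρ / κ ^ 2 + (8 * γ * Ψ 0 + 8 * ρ * Φ 0) / (κ ^ 2 * Θ 0) with hCdef
  have hCnn : 0 ≤ C := by
    have h1 : 0 ≤ 24 * γ * ρ / κ ^ 2 := by
      apply div_nonneg _ (by positivity)
      linarith [mul_nonneg hγ hρ]
    have h2 : 0 ≤ (8 * γ * Ψ 0 + 8 * ρ * Φ 0) / (κ ^ 2 * Θ 0) := by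
      apply div_nonneg _ (mul_pos (by positivity : (0:ℝ) < κ ^ 2) (hΘpos 0)).le
      linarith [mul_nonneg hγ (hΨpos 0).le, mul_nonneg hρ (hΦpos 0).le]
    rw [hCdef]; linarith
  -- comparison of constants
  have hCid : C * (κ ^ 2 * Θ 0) =
      10 * (κ ^ 2 * Θ 0) + 24 * γ * ρ * Θ 0 + 8 * γ * Ψ 0 + 8 * ρ * Φ 0 := by
    rw [hCdef]
    have hκ2 : (κ:ℝ) ^ 2 ≠ 0 := pow_ne_zero 2 hκ'
    have hκ2Θ : κ ^ 2 * Θ 0 ≠ 0 :=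
      ne_of_gt (mul_pos (by positivity : (0:ℝ) < κ ^ 2) (hΘpos 0))
    have e1 : 24 * γ * ρ / κ ^ 2 * κ ^ 2 = 24 * γ * ρ := div_mul_cancel₀ _ hκ2
    have e2 : (8 * γ * Ψ 0 + 8 * ρ * Φ 0) / (κ ^ 2 * Θ 0) * (κ ^ 2 * Θ 0)
        = 8 * γ * Ψ 0 + 8 * ρ * Φ 0 := div_mul_cancel₀ _ hκ2Θ
    linear_combination Θ 0 * e1 + e2
  have hvκ : 2 * v * κ ≤ κ ^ 2 + γ * ρ := by nlinarith [sq_nonneg (v - κ), hv2]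
  have econst : 8 * γ * ρ + 2 * κ ^ 2 + 2 * c * κ + 3 * c' * κ ≤ C * κ ^ 2 := by
    apply le_of_mul_le_mul_right _ (hΘpos 0)
    have h4 := mul_le_mul_of_nonneg_right hvκ (hΘpos 0).le
    linarith [hcid, hc'id, hCid, h4, mul_nonneg (mul_nonneg hγ hρ) (hΘpos 0).le,
      mul_nonneg hγ (hΨpos 0).le, mul_nonneg hρ (hΦpos 0).le,
      mul_pos (mul_pos hκ hκ) (hΘpos 0)]
  -- the big inequality
  set t : ℝ := κ * Θ i with htdef
  have htpos : 0 < t := mul_pos hκ (hΘpos i)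
  have hsi1 := hspos (i + 1)
  have hsi := hspos i
  have hbig : (s (i + 1) ^ 2 - s i ^ 2) * t ≤ C * s i ^ 3 := by
    have hPt : (s (i + 1) ^ 2 - s i ^ 2) * t * κ ^ 2 =
        ((2 * γ * Ψ i + 2 * ρ * Φ i) * s i * κ + 4 * γ * ρ * s i ^ 2) * t := by
      linear_combination t * hP i
    have hT1i := hT1 i
    have hT2i := hT2 i
    have hci := hc i
    have hc'i := hc' i
    have hFPs : Φ i * Ψ i * s i * κ ^ 2 = s i ^ 3 * κ ^ 2 := by
      linear_combination (-(s i * κ ^ 2)) * hssq i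
    have hb1 : 2 * ρ * s i ^ 2 * (2 * γ * t) ≤ 2 * ρ * s i ^ 2 * (4 * γ * s i + κ * Φ i) :=
      mul_le_mul_of_nonneg_left hT1i
        (by nlinarith [mul_nonneg hρ (sq_nonneg (s i))])
    have hb1' : 2 * ρ * Φ i * (κ * s i ^ 2) ≤ c' * s i * (κ * s i ^ 2) :=
      mul_le_mul_of_nonneg_right hc'i (by positivity)
    have hb2 : Ψ i * (s i * κ) * (2 * γ * t) ≤ Ψ i * (s i * κ) * (4 * γ * s i + κ * Φ i) :=
      mul_le_mul_of_nonneg_left hT1i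
        (mul_nonneg (hΨpos i).le (mul_nonneg hsi.le hκ.le))
    have hb2' : 2 * γ * Ψ i * (2 * s i ^ 2 * κ) ≤ c * s i * (2 * s i ^ 2 * κ) :=
      mul_le_mul_of_nonneg_right hci (by positivity)
    have hb3 : Φ i * (s i * κ) * (2 * ρ * t) ≤ Φ i * (s i * κ) * (4 * ρ * s i + κ * Ψ i) :=
      mul_le_mul_of_nonneg_left hT2i
        (mul_nonneg (hΦpos i).le (mul_nonneg hsi.le hκ.le))
    have hb3' : 2 * ρ * Φ i * (2 * s i ^ 2 * κ) ≤ c' * s i * (2 * s i ^ 2 * κ) :=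
      mul_le_mul_of_nonneg_right hc'i (by positivity)
    have g1 : 4 * γ * ρ * s i ^ 2 * t ≤ 8 * γ * ρ * s i ^ 3 + c' * κ * s i ^ 3 := by
      linarith [hb1, hb1']
    have g2 : 2 * γ * Ψ i * s i * κ * t ≤ 2 * c * κ * s i ^ 3 + κ ^ 2 * s i ^ 3 := by
      linarith [hb2, hb2', hFPs]
    have g3 : 2 * ρ * Φ i * s i * κ * t ≤ 2 * c' * κ * s i ^ 3 + κ ^ 2 * s i ^ 3 := by
      linarith [hb3, hb3', hFPs]
    have hmulC : (8 * γ * ρ + 2 * κ ^ 2 + 2 * c * κ + 3 * c' * κ) * s i ^ 3 ≤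
        C * κ ^ 2 * s i ^ 3 :=
      mul_le_mul_of_nonneg_right econst (by positivity)
    have hE : (s (i + 1) ^ 2 - s i ^ 2) * t * κ ^ 2 ≤ C * s i ^ 3 * κ ^ 2 := by
      rw [hPt]
      linarith [g1, g2, g3, hmulC]
    exact le_of_mul_le_mul_right hE (by positivity : (0:ℝ) < κ ^ 2)
  -- ratio identity
  have hΘi1 : κ * Θ (i + 1) = κ * Θ i + s (i + 1) := hΘ' i
  have hlam1 : lam (i + 1) = s (i + 1) / (t + s (i + 1)) := by
    rw [hlam' (i + 1), hΘi1, htdef]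
  have hts : t + s (i + 1) ≠ 0 := ne_of_gt (by linarith)
  have hid : lam i / lam (i + 1) - 1 = lam i - (1 - s i / s (i + 1)) := by
    rw [hlam' i, hlam1, ← htdef]
    have h1 : t ≠ 0 := ne_of_gt htpos
    have h2 : s (i + 1) ≠ 0 := ne_of_gt hsi1
    field_simp
    ring
  set d : ℝ := 1 - s i / s (i + 1) with hddef
  have hd0 : 0 ≤ d := by
    rw [hddef]
    have : s i / s (i + 1) ≤ 1 := (div_le_one hsi1).2 (hsle i)
    linarith
  have hmul' : (s (i + 1) - s i) * t ≤ C * s i * s (i + 1) := by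
    have hineq := hsle i
    have p2 : (0:ℝ) ≤ t * (s (i + 1) - s i) * (s (i + 1) - s i) :=
      mul_nonneg (mul_nonneg htpos.le (by linarith)) (by linarith)
    have p3 : (0:ℝ) ≤ C * (s i * s i) * (s (i + 1) - s i) :=
      mul_nonneg (mul_nonneg hCnn (mul_nonneg hsi.le hsi.le)) (by linarith)
    have p4 : (0:ℝ) ≤ C * (s i * s i) * s (i + 1) :=
      mul_nonneg (mul_nonneg hCnn (mul_nonneg hsi.le hsi.le)) hsi1.le
    have q3 : 2 * s i * ((s (i + 1) - s i) * t) ≤ 2 * s i * (C * s i * s (i + 1)) := by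
      linarith [hbig, p2, p3, p4]
    exact le_of_mul_le_mul_left q3 (by linarith [hsi])
  have hd1 : d ≤ C * lam i := by
    have hslt : (0:ℝ) < s (i + 1) * t := mul_pos hsi1 htpos
    apply le_of_mul_le_mul_right _ hslt
    have hdc : s i / s (i + 1) * s (i + 1) = s i := div_mul_cancel₀ _ (ne_of_gt hsi1)
    have e1 : d * (s (i + 1) * t) = (s (i + 1) - s i) * t := by
      rw [hddef]
      linear_combination (-t) * hdc
    have hlc : s i / t * t = s i := div_mul_cancel₀ _ (ne_of_gt htpos)
    have e2 : (C * lam i) * (s (i + 1) * t) = C * s i * s (i + 1) := by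
      rw [hlam' i, ← htdef]
      linear_combination (C * s (i + 1)) * hlc
    rw [e1, e2]
    exact hmul'
  have hlami := hlampos i
  have hClam : 0 ≤ C * lam i := mul_nonneg hCnn hlami.le
  rw [hid, abs_le]
  constructor
  · linarith [hd1, hlami, hClam]
  · linarith [hd0, hlami, hClam]
end

section
/- For every i ∈ ℕ one has the key estimate 0 ≤ A_i − 1 ≤ C₀·λ_i. -/
lemma stmt7_key (a b T s0 s : ℝ) (ha : 0 ≤ a) (hb : 0 ≤ b) (hT : 0 ≤ T)
    (hs0 : 0 < s0) (hs : 0 < s) (hsq : s^2 = s0^2 + b*T + a*T^2) :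
    (a + (b + 2*a*T)/s) * (T + s) ≤ (10 + 6*a + 4*b/s0) * s := by
  have hss0 : s0 ≤ s := by nlinarith [mul_nonneg hb hT, mul_nonneg (mul_nonneg ha hT) hT]
  have haT2 : a*T^2 ≤ s^2 := by nlinarith [mul_nonneg hb hT]
  have hbT : b*T ≤ s^2 := by nlinarith [mul_nonneg (mul_nonneg ha hT) hT]
  have h2aT : 2*a*T ≤ (1+a)*s := by
    have has : (0:ℝ) ≤ (1+a)*s := by positivity
    refine le_of_pow_le_pow_left₀ two_ne_zero has ?_
    nlinarith [sq_nonneg ((1-a)*s), mul_le_mul_of_nonneg_left haT2 ha]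
  have e1 : (a + (b + 2*a*T)/s) * (T + s) = ((a*s + (b+2*a*T)) * (T+s)) / s := by
    field_simp
  have e2 : (10 + 6*a + 4*b/s0) * s = (((10+6*a)*s0 + 4*b) * s) / s0 := by
    field_simp
  rw [e1, e2, div_le_div_iff₀ hs hs0]
  have h1 : 2*a*T*(s*s0) ≤ (1+a)*s*(s*s0) :=
    mul_le_mul_of_nonneg_right h2aT (mul_nonneg hs.le hs0.le)
  have h2 : b*T*s0 ≤ s^2*s0 := mul_le_mul_of_nonneg_right hbT hs0.le
  have h3 : a*T^2*s0 ≤ s^2*s0 := mul_le_mul_of_nonneg_right haT2 hs0.le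
  have h4 : b*s0*s ≤ b*s*s := by nlinarith [mul_le_mul_of_nonneg_left hss0 hb]
  nlinarith [mul_nonneg (mul_nonneg ha (sq_nonneg s)) hs0.le,
    mul_nonneg hb (sq_nonneg s)]

/-- Statement 7 on the IC-PDPS parameter sequences. -/
theorem stmt_7 (κ γ ρ : ℝ) (hκ : 0 < κ) (hγ : 0 ≤ γ) (hρ : 0 ≤ ρ)
    (Φ Ψ Θ : ℕ → ℝ)
    (hΦpos : ∀ i, 0 < Φ i) (hΨpos : ∀ i, 0 < Ψ i) (hΘpos : ∀ i, 0 < Θ i)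
    (hinit : κ ^ 2 * (Θ 0) ^ 2 = Φ 0 * Ψ 0)
    (lam : ℕ → ℝ)
    (hlam : ∀ i, lam i = Real.sqrt (Φ i * Ψ i) / (κ * Θ i))
    (hΦrec : ∀ i, Φ (i + 1) - Φ i = 2 * γ * Θ i * lam i)
    (hΨrec : ∀ i, Ψ (i + 1) - Ψ i = 2 * ρ * Θ i * lam i)
    (hΘrec : ∀ i, Θ (i + 1) - Θ i = lam (i + 1) * Θ (i + 1))
    (A : ℕ → ℝ)
    (hA : ∀ i, A i = 1 + 4 * γ * ρ / κ ^ 2 + (2 * γ * Ψ i + 2 * ρ * Φ i) / (κ * Real.sqrt (Φ i * Ψ i))) :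
    ∀ i : ℕ, 0 ≤ A i - 1 ∧ A i - 1 ≤ (10 + 24 * γ * ρ / κ ^ 2 + (8 * γ * Ψ 0 + 8 * ρ * Φ 0) / (κ ^ 2 * Θ 0)) * lam i := by
  set s : ℕ → ℝ := fun i => Real.sqrt (Φ i * Ψ i) with hs_def
  have hspos : ∀ i, 0 < s i := fun i =>
    Real.sqrt_pos.mpr (mul_pos (hΦpos i) (hΨpos i))
  have hssq : ∀ i, (s i)^2 = Φ i * Ψ i := fun i =>
    Real.sq_sqrt (mul_pos (hΦpos i) (hΨpos i)).le
  have hs0 : s 0 = κ * Θ 0 := by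
    have : Φ 0 * Ψ 0 = (κ * Θ 0)^2 := by rw [← hinit]; ring
    rw [hs_def]; simp only []
    rw [this, Real.sqrt_sq (mul_pos hκ (hΘpos 0)).le]
  -- difference of consecutive sqrt values
  have hΦstep : ∀ i, Φ (i+1) = Φ i + (2*γ/κ) * s i := by
    intro i
    have h := hΦrec i
    rw [hlam i] at h
    have hΘ := (hΘpos i).ne'
    have : 2 * γ * Θ i * (Real.sqrt (Φ i * Ψ i) / (κ * Θ i)) = (2*γ/κ) * s i := by
      rw [hs_def]; field_simp
    rw [this] at h; linarith
  have hΨstep : ∀ i, Ψ (i+1) = Ψ i + (2*ρ/κ) * s i := by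
    intro i
    have h := hΨrec i
    rw [hlam i] at h
    have hΘ := (hΘpos i).ne'
    have : 2 * ρ * Θ i * (Real.sqrt (Φ i * Ψ i) / (κ * Θ i)) = (2*ρ/κ) * s i := by
      rw [hs_def]; field_simp
    rw [this] at h; linarith
  have hΘstep : ∀ i, κ * Θ (i+1) = κ * Θ i + s (i+1) := by
    intro i
    have h := hΘrec i
    rw [hlam (i+1)] at h
    have hΘ := (hΘpos (i+1)).ne'
    have : Real.sqrt (Φ (i+1) * Ψ (i+1)) / (κ * Θ (i+1)) * Θ (i+1) = s (i+1) / κ := by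
      rw [hs_def]; field_simp
    rw [this] at h
    field_simp at h ⊢
    linarith
  -- the inductive structure
  have main : ∀ i, ∃ T : ℝ, 0 ≤ T ∧ Φ i = Φ 0 + (2*γ/κ) * T ∧
      Ψ i = Ψ 0 + (2*ρ/κ) * T ∧ κ * Θ i = s i + T := by
    intro i
    induction i with
    | zero => exact ⟨0, le_refl 0, by ring, by ring, by rw [hs0]; ring⟩
    | succ n ih =>
      obtain ⟨T, hT, hΦT, hΨT, hΘT⟩ := ih
      refine ⟨T + s n, by positivity, ?_, ?_, ?_⟩
      · rw [hΦstep n, hΦT]; ring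
      · rw [hΨstep n, hΨT]; ring
      · rw [hΘstep n, hΘT]; ring
  intro i
  obtain ⟨T, hT, hΦT, hΨT, hΘT⟩ := main i
  set a : ℝ := 4*γ*ρ/κ^2 with ha_def
  set b : ℝ := (2*γ*Ψ 0 + 2*ρ*Φ 0)/κ with hb_def
  have ha : 0 ≤ a := by positivity
  have hb : 0 ≤ b := by
    have : 0 ≤ 2*γ*Ψ 0 + 2*ρ*Φ 0 := by
      have := (hΦpos 0).le; have := (hΨpos 0).le; positivity
    positivity
  have hs0pos : 0 < s 0 := hspos 0
  have hsi : 0 < s i := hspos i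
  have hκ2 : (κ:ℝ) ≠ 0 := hκ.ne'
  have hsq : (s i)^2 = (s 0)^2 + b*T + a*T^2 := by
    rw [hssq i, hssq 0, hΦT, hΨT, ha_def, hb_def]
    field_simp; ring
  have hAi : A i - 1 = a + (b + 2*a*T)/(s i) := by
    rw [hA i, show Real.sqrt (Φ i * Ψ i) = s i from rfl, hΦT, hΨT, ha_def, hb_def]
    field_simp
    ring
  have hC0 : 10 + 24 * γ * ρ / κ ^ 2 + (8 * γ * Ψ 0 + 8 * ρ * Φ 0) / (κ ^ 2 * Θ 0)
      = 10 + 6*a + 4*b/(s 0) := by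
    rw [ha_def, hb_def, hs0]
    have hΘ0 := (hΘpos 0).ne'
    field_simp; ring
  have hlami : lam i = s i / (T + s i) := by
    rw [hlam i, show Real.sqrt (Φ i * Ψ i) = s i from rfl, hΘT, add_comm (s i) T]
  constructor
  · rw [hAi]
    have : 0 ≤ (b + 2*a*T)/(s i) := by positivity
    linarith
  · have hkey := stmt7_key a b T (s 0) (s i) ha hb hT hs0pos hsi hsq
    have hTs : 0 < T + s i := by linarith
    have h2 : A i - 1 ≤ ((10 + 6*a + 4*b/(s 0)) * s i) / (T + s i) := by
      rw [hAi, le_div_iff₀ hTs]; exact hkey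
    have h3 : ((10 + 6*a + 4*b/(s 0)) * s i) / (T + s i)
        = (10 + 24 * γ * ρ / κ ^ 2 + (8 * γ * Ψ 0 + 8 * ρ * Φ 0) / (κ ^ 2 * Θ 0)) * lam i := by
      rw [hC0, hlami]; ring
    linarith
end

section
/- For every i ∈ ℕ one has the explicit recursion λ_{i+1} = λ_i·√(A_i)/(1 + λ_i·√(A_i)). -/
/-- Statement 8 on the IC-PDPS parameter sequences. -/
theorem stmt_8 (κ γ ρ : ℝ) (hκ : 0 < κ) (hγ : 0 ≤ γ) (hρ : 0 ≤ ρ)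
    (Φ Ψ Θ : ℕ → ℝ)
    (hΦpos : ∀ i, 0 < Φ i) (hΨpos : ∀ i, 0 < Ψ i) (hΘpos : ∀ i, 0 < Θ i)
    (hinit : κ ^ 2 * (Θ 0) ^ 2 = Φ 0 * Ψ 0)
    (lam : ℕ → ℝ)
    (hlam : ∀ i, lam i = Real.sqrt (Φ i * Ψ i) / (κ * Θ i))
    (hΦrec : ∀ i, Φ (i + 1) - Φ i = 2 * γ * Θ i * lam i)
    (hΨrec : ∀ i, Ψ (i + 1) - Ψ i = 2 * ρ * Θ i * lam i)
    (hΘrec : ∀ i, Θ (i + 1) - Θ i = lam (i + 1) * Θ (i + 1))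
    (A : ℕ → ℝ)
    (hA : ∀ i, A i = 1 + 4 * γ * ρ / κ ^ 2 + (2 * γ * Ψ i + 2 * ρ * Φ i) / (κ * Real.sqrt (Φ i * Ψ i))) :
    ∀ i : ℕ, lam (i + 1) = lam i * Real.sqrt (A i) / (1 + lam i * Real.sqrt (A i)) := by
  intro i
  have hΦΨ : 0 < Φ i * Ψ i := mul_pos (hΦpos i) (hΨpos i)
  set s := Real.sqrt (Φ i * Ψ i) with hs
  have hspos : 0 < s := Real.sqrt_pos.mpr hΦΨ
  have hs2 : s ^ 2 = Φ i * Ψ i := Real.sq_sqrt hΦΨ.le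
  have hΘi := hΘpos i
  have hΘi1 := hΘpos (i + 1)
  have hΘlam : Θ i * lam i = s / κ := by
    rw [hlam i]; field_simp; ring
  have hApos : 0 ≤ A i := by
    rw [hA i]
    have h1 : (0:ℝ) ≤ 4 * γ * ρ / κ ^ 2 := by positivity
    have h2 : (0:ℝ) ≤ (2 * γ * Ψ i + 2 * ρ * Φ i) / (κ * s) :=
      div_nonneg (by nlinarith [(hΨpos i).le, (hΦpos i).le]) (by positivity)
    linarith
  have hΦ1 : Φ (i + 1) = Φ i + 2 * γ * (Θ i * lam i) := by
    have := hΦrec i; linarith [this.symm]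
  have hΨ1 : Ψ (i + 1) = Ψ i + 2 * ρ * (Θ i * lam i) := by
    have := hΨrec i; linarith [this.symm]
  have hprod : Φ (i + 1) * Ψ (i + 1) = Φ i * Ψ i * A i := by
    rw [hΦ1, hΨ1, hΘlam, hA i, ← hs]
    field_simp
    linear_combination ((2 * ρ * Φ i + 2 * γ * Ψ i) * κ + 4 * γ * ρ * s) * hs2
  have hsqrt : Real.sqrt (Φ (i + 1) * Ψ (i + 1)) = s * Real.sqrt (A i) := by
    rw [hprod, Real.sqrt_mul hΦΨ.le, ← hs]
  have hΘrel : Θ i = Θ (i + 1) * (1 - lam (i + 1)) := by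
    have := hΘrec i; nlinarith [this]
  have hlampos : 0 ≤ lam i := by
    rw [hlam i]; positivity
  have htnn : 0 ≤ lam i * Real.sqrt (A i) :=
    mul_nonneg hlampos (Real.sqrt_nonneg _)
  have ht1 : 0 < 1 + lam i * Real.sqrt (A i) := by linarith
  have hkey1 : lam (i + 1) * (κ * Θ (i + 1)) = s * Real.sqrt (A i) := by
    rw [hlam (i + 1), hsqrt]
    field_simp
  have hkey2 : lam i * Real.sqrt (A i) * (κ * Θ i) = s * Real.sqrt (A i) := by
    rw [hlam i]
    field_simp
    rw [hs]; ring
  -- derive lam(i+1) * (1 + t) = t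
  have hmain : lam (i + 1) * (1 + lam i * Real.sqrt (A i)) = lam i * Real.sqrt (A i) := by
    have h3 : lam i * Real.sqrt (A i) * (κ * (Θ (i + 1) * (1 - lam (i + 1)))) =
        lam (i + 1) * (κ * Θ (i + 1)) := by
      rw [← hΘrel, hkey2, hkey1]
    have hκΘ : κ * Θ (i + 1) ≠ 0 := by positivity
    apply mul_right_cancel₀ hκΘ
    linear_combination -h3
  rw [eq_div_iff (ne_of_gt ht1)]
  exact hmain
end

section
/- For every i ∈ ℕ one has the closed forms Φ_{i+1} = Φ₀ + 2γΘ_i and Ψ_{i+1} = Ψ₀ + 2ρΘ_i. -/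
/-- Statement 9 on the IC-PDPS parameter sequences. -/
theorem stmt_9 (κ γ ρ : ℝ) (hκ : 0 < κ) (hγ : 0 ≤ γ) (hρ : 0 ≤ ρ)
    (Φ Ψ Θ : ℕ → ℝ)
    (hΦpos : ∀ i, 0 < Φ i) (hΨpos : ∀ i, 0 < Ψ i) (hΘpos : ∀ i, 0 < Θ i)
    (hinit : κ ^ 2 * (Θ 0) ^ 2 = Φ 0 * Ψ 0)
    (lam : ℕ → ℝ)
    (hlam : ∀ i, lam i = Real.sqrt (Φ i * Ψ i) / (κ * Θ i))
    (hΦrec : ∀ i, Φ (i + 1) - Φ i = 2 * γ * Θ i * lam i)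
    (hΨrec : ∀ i, Ψ (i + 1) - Ψ i = 2 * ρ * Θ i * lam i)
    (hΘrec : ∀ i, Θ (i + 1) - Θ i = lam (i + 1) * Θ (i + 1)) :
    ∀ i : ℕ, Φ (i + 1) = Φ 0 + 2 * γ * Θ i ∧ Ψ (i + 1) = Ψ 0 + 2 * ρ * Θ i := by
  have hlam0 : lam 0 = 1 := by
    have h1 : (0:ℝ) < κ * Θ 0 := mul_pos hκ (hΘpos 0)
    rw [hlam, ← hinit]
    have h2 : κ ^ 2 * Θ 0 ^ 2 = (κ * Θ 0) ^ 2 := by ring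
    rw [h2, Real.sqrt_sq h1.le]
    exact div_self h1.ne'
  intro i
  induction i with
  | zero =>
    have h1 := hΦrec 0
    have h2 := hΨrec 0
    rw [hlam0] at h1 h2
    constructor <;> linarith
  | succ n ih =>
    obtain ⟨ih1, ih2⟩ := ih
    have h1 := hΦrec (n + 1)
    have h2 := hΨrec (n + 1)
    have h3 := hΘrec n
    constructor
    · linear_combination h1 + ih1 - 2 * γ * h3
    · linear_combination h2 + ih2 - 2 * ρ * h3
end

section
/- For every i ≥ 1 one has the lower bound λ_i ≥ 2√(γρ)/(κ + 2√(γρ)). -/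
/-- Statement 10 on the IC-PDPS parameter sequences. -/
theorem stmt_10 (κ γ ρ : ℝ) (hκ : 0 < κ) (hγ : 0 ≤ γ) (hρ : 0 ≤ ρ)
    (Φ Ψ Θ : ℕ → ℝ)
    (hΦpos : ∀ i, 0 < Φ i) (hΨpos : ∀ i, 0 < Ψ i) (hΘpos : ∀ i, 0 < Θ i)
    (hinit : κ ^ 2 * (Θ 0) ^ 2 = Φ 0 * Ψ 0)
    (lam : ℕ → ℝ)
    (hlam : ∀ i, lam i = Real.sqrt (Φ i * Ψ i) / (κ * Θ i))
    (hΦrec : ∀ i, Φ (i + 1) - Φ i = 2 * γ * Θ i * lam i)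
    (hΨrec : ∀ i, Ψ (i + 1) - Ψ i = 2 * ρ * Θ i * lam i)
    (hΘrec : ∀ i, Θ (i + 1) - Θ i = lam (i + 1) * Θ (i + 1)) :
    ∀ i : ℕ, 1 ≤ i → 2 * Real.sqrt (γ * ρ) / (κ + 2 * Real.sqrt (γ * ρ)) ≤ lam i := by
  set s := Real.sqrt (γ * ρ) with hs
  have hs0 : 0 ≤ s := Real.sqrt_nonneg _
  have hden : 0 < κ + 2 * s := by linarith
  have hlampos : ∀ i, 0 < lam i := fun i => by
    rw [hlam i]
    exact div_pos (Real.sqrt_pos.2 (mul_pos (hΦpos i) (hΨpos i))) (mul_pos hκ (hΘpos i))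
  have hlam' : ∀ i, Real.sqrt (Φ i * Ψ i) = lam i * (κ * Θ i) := fun i => by
    rw [hlam i, div_mul_cancel₀ _ (ne_of_gt (mul_pos hκ (hΘpos i)))]
  have main : ∀ i, 2 * s / (κ + 2 * s) ≤ lam i := by
    intro i
    induction i with
    | zero =>
      have h0 : lam 0 = 1 := by
        rw [hlam 0]
        have h : Φ 0 * Ψ 0 = (κ * Θ 0) ^ 2 := by rw [← hinit]; ring
        rw [h, Real.sqrt_sq (mul_pos hκ (hΘpos 0)).le,
          div_self (ne_of_gt (mul_pos hκ (hΘpos 0)))]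
      rw [h0, div_le_one hden]; linarith
    | succ i ih =>
      have hgrow : Real.sqrt (Φ i * Ψ i) + 2 * s * (Θ i * lam i)
          ≤ Real.sqrt (Φ (i + 1) * Ψ (i + 1)) := by
        have hΦ1 : Φ (i + 1) = Φ i + 2 * γ * Θ i * lam i := by linarith [hΦrec i]
        have hΨ1 : Ψ (i + 1) = Ψ i + 2 * ρ * Θ i * lam i := by linarith [hΨrec i]
        have hsq : (Real.sqrt (Φ i * Ψ i) + 2 * s * (Θ i * lam i)) ^ 2
            ≤ Φ (i + 1) * Ψ (i + 1) := by
          have h1 : Real.sqrt (Φ i * Ψ i) ^ 2 = Φ i * Ψ i :=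
            Real.sq_sqrt (mul_pos (hΦpos i) (hΨpos i)).le
          have h2 : s ^ 2 = γ * ρ := Real.sq_sqrt (mul_nonneg hγ hρ)
          have hamgm : 2 * (s * Real.sqrt (Φ i * Ψ i)) ≤ γ * Ψ i + ρ * Φ i := by
            have hne := sq_nonneg (Real.sqrt (γ * Ψ i) - Real.sqrt (ρ * Φ i))
            have e1 : Real.sqrt (γ * Ψ i) ^ 2 = γ * Ψ i :=
              Real.sq_sqrt (mul_nonneg hγ (hΨpos i).le)
            have e2 : Real.sqrt (ρ * Φ i) ^ 2 = ρ * Φ i :=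
              Real.sq_sqrt (mul_nonneg hρ (hΦpos i).le)
            have e3 : s * Real.sqrt (Φ i * Ψ i)
                = Real.sqrt (γ * Ψ i) * Real.sqrt (ρ * Φ i) := by
              rw [hs, ← Real.sqrt_mul (mul_nonneg hγ hρ),
                ← Real.sqrt_mul (mul_nonneg hγ (hΨpos i).le)]
              ring_nf
            nlinarith
          have hTl : (0:ℝ) ≤ Θ i * lam i := (mul_pos (hΘpos i) (hlampos i)).le
          have h2' : s ^ 2 * (Θ i * lam i) ^ 2 = γ * ρ * (Θ i * lam i) ^ 2 := by
            rw [h2]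
          rw [hΦ1, hΨ1]
          nlinarith [mul_le_mul_of_nonneg_right hamgm hTl, h2']
        have hnn : 0 ≤ Real.sqrt (Φ i * Ψ i) + 2 * s * (Θ i * lam i) := by
          have := Real.sqrt_nonneg (Φ i * Ψ i)
          have hTl : (0:ℝ) ≤ Θ i * lam i := (mul_pos (hΘpos i) (hlampos i)).le
          nlinarith
        calc Real.sqrt (Φ i * Ψ i) + 2 * s * (Θ i * lam i)
            = Real.sqrt ((Real.sqrt (Φ i * Ψ i) + 2 * s * (Θ i * lam i)) ^ 2) := by
              rw [Real.sqrt_sq hnn]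
          _ ≤ Real.sqrt (Φ (i + 1) * Ψ (i + 1)) := Real.sqrt_le_sqrt hsq
      rw [hlam' i, hlam' (i + 1)] at hgrow
      have ih' : 2 * s ≤ lam i * (κ + 2 * s) := (div_le_iff₀ hden).1 ih
      have hTi := hΘpos i
      have hTi1 := hΘpos (i + 1)
      have hTeq := hΘrec i
      rw [div_le_iff₀ hden]
      have key : 2 * s * Θ (i + 1) ≤ lam (i + 1) * (κ + 2 * s) * Θ (i + 1) := by
        nlinarith [mul_le_mul_of_nonneg_right ih' hTi.le]
      nlinarith [key]
  exact fun i _ => main i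
end

section
/- For every i ≥ 1 one has the lower bound λ_i · √(Θ_i) ≥ √(2(γΨ₀ + ρΦ₀)) / (κ + √(2(γΨ₀ + ρΦ₀)/Θ₀)). -/
set_option maxHeartbeats 1000000

/-- Statement 11 on the IC-PDPS parameter sequences. -/
theorem stmt_11 (κ γ ρ : ℝ) (hκ : 0 < κ) (hγ : 0 ≤ γ) (hρ : 0 ≤ ρ)
    (Φ Ψ Θ : ℕ → ℝ)
    (hΦpos : ∀ i, 0 < Φ i) (hΨpos : ∀ i, 0 < Ψ i) (hΘpos : ∀ i, 0 < Θ i)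
    (hinit : κ ^ 2 * (Θ 0) ^ 2 = Φ 0 * Ψ 0)
    (lam : ℕ → ℝ)
    (hlam : ∀ i, lam i = Real.sqrt (Φ i * Ψ i) / (κ * Θ i))
    (hΦrec : ∀ i, Φ (i + 1) - Φ i = 2 * γ * Θ i * lam i)
    (hΨrec : ∀ i, Ψ (i + 1) - Ψ i = 2 * ρ * Θ i * lam i)
    (hΘrec : ∀ i, Θ (i + 1) - Θ i = lam (i + 1) * Θ (i + 1)) :
    ∀ i : ℕ, 1 ≤ i → Real.sqrt (2 * (γ * Ψ 0 + ρ * Φ 0)) / (κ + Real.sqrt (2 * (γ * Ψ 0 + ρ * Φ 0) / Θ 0)) ≤ lam i * Real.sqrt (Θ i) := by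
  set M : ℝ := 2 * (γ * Ψ 0 + ρ * Φ 0) with hMdef
  have hMnn : 0 ≤ M := by
    have h1 := mul_nonneg hγ (hΨpos 0).le
    have h2 := mul_nonneg hρ (hΦpos 0).le
    simp only [hMdef]; linarith
  set s : ℝ := Real.sqrt (M / Θ 0) with hsdef
  have hsnn : 0 ≤ s := Real.sqrt_nonneg _
  have hs2 : s ^ 2 * Θ 0 = M := by
    rw [hsdef, Real.sq_sqrt (div_nonneg hMnn (hΘpos 0).le)]
    exact div_mul_cancel₀ M (hΘpos 0).ne'
  set x : ℕ → ℝ := fun i => Real.sqrt (Φ i * Ψ i) with hxdef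
  have hxpos : ∀ i, 0 < x i := fun i =>
    Real.sqrt_pos.mpr (mul_pos (hΦpos i) (hΨpos i))
  have hx2 : ∀ i, (x i) ^ 2 = Φ i * Ψ i := fun i =>
    Real.sq_sqrt (mul_pos (hΦpos i) (hΨpos i)).le
  have hlamx : ∀ i, lam i * Θ i = x i / κ := by
    intro i
    simp only [hxdef]
    rw [hlam i]
    field_simp [(hΘpos i).ne', hκ.ne']
  have hΦstep : ∀ i, Φ (i + 1) = Φ i + 2 * γ * (x i / κ) := by
    intro i
    have h := hΦrec i
    have h2 : 2 * γ * Θ i * lam i = 2 * γ * (lam i * Θ i) := by ring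
    rw [h2, hlamx i] at h
    linarith
  have hΨstep : ∀ i, Ψ (i + 1) = Ψ i + 2 * ρ * (x i / κ) := by
    intro i
    have h := hΨrec i
    have h2 : 2 * ρ * Θ i * lam i = 2 * ρ * (lam i * Θ i) := by ring
    rw [h2, hlamx i] at h
    linarith
  have hΘstep : ∀ i, Θ (i + 1) = Θ i + x (i + 1) / κ := by
    intro i
    have h := hΘrec i
    rw [hlamx (i + 1)] at h
    linarith
  have hΦmono : ∀ i, Φ 0 ≤ Φ i := by
    intro i
    induction i with
    | zero => exact le_refl _
    | succ n ih =>
      have h := hΦstep n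
      have h2 : 0 ≤ 2 * γ * (x n / κ) :=
        mul_nonneg (by linarith) (div_nonneg (hxpos n).le hκ.le)
      linarith
  have hΨmono : ∀ i, Ψ 0 ≤ Ψ i := by
    intro i
    induction i with
    | zero => exact le_refl _
    | succ n ih =>
      have h := hΨstep n
      have h2 : 0 ≤ 2 * ρ * (x n / κ) :=
        mul_nonneg (by linarith) (div_nonneg (hxpos n).le hκ.le)
      linarith
  have hx0 : x 0 = κ * Θ 0 := by
    simp only [hxdef]
    rw [← hinit, show κ ^ 2 * Θ 0 ^ 2 = (κ * Θ 0) ^ 2 by ring]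
    exact Real.sqrt_sq (mul_nonneg hκ.le (hΘpos 0).le)
  have hxlb : ∀ i, κ * Θ 0 ≤ x i := by
    intro i
    rw [← hx0]
    apply Real.sqrt_le_sqrt
    have h1 := hΦmono i
    have h2 := hΨmono i
    nlinarith [hΦpos 0, hΨpos 0, hΦpos i, hΨpos i]
  -- growth of x
  have hxgrow : ∀ i, (x i) ^ 2 + M * (x i / κ) ≤ (x (i + 1)) ^ 2 := by
    intro i
    rw [hx2, hx2, hΦstep i, hΨstep i, hMdef]
    have hu : 0 ≤ x i / κ := div_nonneg (hxpos i).le hκ.le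
    have e1 : 0 ≤ γ * (Ψ i - Ψ 0) := mul_nonneg hγ (by linarith [hΨmono i])
    have e2 : 0 ≤ ρ * (Φ i - Φ 0) := mul_nonneg hρ (by linarith [hΦmono i])
    nlinarith [mul_nonneg e1 hu, mul_nonneg e2 hu,
      mul_nonneg (mul_nonneg hγ hρ) (mul_nonneg hu hu)]
  -- main invariant
  have main : ∀ i, M * κ ^ 2 * Θ i ≤ (x i) ^ 2 * (κ + s) ^ 2 := by
    intro i
    induction i with
    | zero =>
      rw [hx0]
      have hss : s ^ 2 ≤ (κ + s) ^ 2 := by nlinarith [mul_nonneg hκ.le hsnn]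
      have hfac : (0:ℝ) ≤ κ ^ 2 * Θ 0 ^ 2 := by positivity
      nlinarith [mul_le_mul_of_nonneg_left hss hfac, hΘpos 0]
    | succ n ih =>
      set a : ℝ := x n with hadef
      set b : ℝ := x (n + 1) with hbdef
      have hb2 : a ^ 2 + M * (a / κ) ≤ b ^ 2 := hxgrow n
      have hann := (hxpos n).le
      have hbnn := (hxpos (n + 1)).le
      have halb : κ * Θ 0 ≤ a := hxlb n
      have hMa : 0 ≤ M * (a / κ) := mul_nonneg hMnn (div_nonneg hann hκ.le)
      set y : ℝ := Real.sqrt (a ^ 2 + M * (a / κ)) with hydef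
      have hynn : 0 ≤ y := Real.sqrt_nonneg _
      have hy2 : y ^ 2 = a ^ 2 + M * (a / κ) :=
        Real.sq_sqrt (add_nonneg (sq_nonneg a) hMa)
      have hay : a ≤ y := by nlinarith
      have hyb : y ≤ b := by nlinarith
      have hyub : y ≤ a + M / (2 * κ) := by
        have hMk : 0 ≤ M / (2 * κ) := div_nonneg hMnn (by linarith)
        have hexp : (a + M / (2 * κ)) ^ 2 = a ^ 2 + M * (a / κ) + (M / (2 * κ)) ^ 2 := by
          field_simp
          ring
        nlinarith [sq_nonneg (M / (2 * κ))]
      have has2 : κ * M ≤ a * s ^ 2 := by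
        have h := mul_le_mul_of_nonneg_right halb (sq_nonneg s)
        nlinarith
      -- g(y) ≥ 0
      have key1 : M * κ * y + M * κ ^ 2 * Θ n ≤ y ^ 2 * (κ + s) ^ 2 := by
        have hMy : M * κ * y ≤ M * κ * (a + M / (2 * κ)) :=
          mul_le_mul_of_nonneg_left hyub (mul_nonneg hMnn hκ.le)
        have hMy2 : M * κ * (a + M / (2 * κ)) = M * κ * a + M * M / 2 := by
          field_simp
        have h3 : (M * (a / κ)) * (κ + s) ^ 2 =
            M * κ * a + 2 * M * a * s + M * (a * s ^ 2) / κ := by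
          field_simp
          ring
        have h4 : M * M ≤ M * (a * s ^ 2) / κ := by
          have h5 : 0 ≤ M * (a * s ^ 2 - κ * M) / κ :=
            div_nonneg (mul_nonneg hMnn (by linarith)) hκ.le
          have h6 : M * (a * s ^ 2 - κ * M) / κ
              = M * (a * s ^ 2) / κ - M * M := by
            field_simp
          linarith [h6 ▸ h5]
        have hMas : 0 ≤ 2 * M * a * s := by positivity
        nlinarith [hy2, ih]
      -- g increasing beyond y
      have key2 : M * κ * b + M * κ ^ 2 * Θ n ≤ b ^ 2 * (κ + s) ^ 2 := by
        have hby : 0 ≤ b - y := by linarith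
        have hsum : M * κ ≤ (b + y) * (κ + s) ^ 2 := by
          have h1 : κ * Θ 0 * s ^ 2 ≤ y * s ^ 2 :=
            mul_le_mul_of_nonneg_right (le_trans halb hay) (sq_nonneg s)
          nlinarith [mul_nonneg hbnn (sq_nonneg (κ + s)),
            mul_nonneg hynn (sq_nonneg κ),
            mul_nonneg hynn (mul_nonneg hκ.le hsnn)]
        nlinarith [mul_le_mul_of_nonneg_left hsum hby]
      have hrw : M * κ ^ 2 * Θ (n + 1) = M * κ ^ 2 * Θ n + M * κ * b := by
        rw [hΘstep n]
        field_simp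
        ring
      rw [hrw]
      linarith
  -- conclude
  intro i _
  have hQ := main i
  set T : ℝ := Real.sqrt (Θ i) with hTdef
  have hTpos : 0 < T := Real.sqrt_pos.mpr (hΘpos i)
  have hT2 : T ^ 2 = Θ i := Real.sq_sqrt (hΘpos i).le
  have hlamT : lam i * T = x i / (κ * T) := by
    rw [hlam i]
    have hxi : Real.sqrt (Φ i * Ψ i) = x i := rfl
    rw [hxi]
    rw [div_mul_eq_mul_div,
      div_eq_div_iff (mul_pos hκ (hΘpos i)).ne' (mul_pos hκ hTpos).ne']
    rw [← hT2]
    ring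
  rw [hlamT]
  have hκs : 0 < κ + s := by linarith
  rw [div_le_div_iff₀ hκs (mul_pos hκ hTpos)]
  have hL : 0 ≤ Real.sqrt M * (κ * T) :=
    mul_nonneg (Real.sqrt_nonneg _) (mul_pos hκ hTpos).le
  have hR : 0 ≤ x i * (κ + s) := mul_nonneg (hxpos i).le hκs.le
  have hsq : (Real.sqrt M * (κ * T)) ^ 2 ≤ (x i * (κ + s)) ^ 2 := by
    have hM2 : (Real.sqrt M) ^ 2 = M := Real.sq_sqrt hMnn
    calc (Real.sqrt M * (κ * T)) ^ 2 = M * κ ^ 2 * Θ i := by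
          rw [mul_pow, mul_pow, hM2, hT2]; ring
    _ ≤ (x i) ^ 2 * (κ + s) ^ 2 := hQ
    _ = (x i * (κ + s)) ^ 2 := by ring
  nlinarith [hsq, hL, hR]
end

section
/- Define the overrelaxation parameter ω_i := λ_i·Θ_i/(λ_{i+1}·Θ_{i+1}). Then for every i ∈ ℕ one has ω_i = λ_i/λ_{i+1} − λ_i and |ω_i − 1| ≤ (2 + C₀)·λ_i. -/
private lemma aux_rle (r y y0 : ℝ) (h1 : r ^ 2 = 1 + y) (h2 : y ≤ y0)
    (h3 : 0 ≤ y0) (h0 : 0 < r) : r ≤ 1 + y0 / 2 := by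
  nlinarith [sq_nonneg y0]

private lemma aux_cr (c e r y : ℝ) (he : 0 ≤ e) (hc : c = e ^ 2)
    (hy : 2 * e + e ^ 2 ≤ y) (hry : r ^ 2 = 1 + y) (hr0 : 0 < r) :
    c * (1 + r) ≤ y * (r - 1) := by
  have hre : 1 + e ≤ r := by nlinarith
  have h1 : e ≤ r - 1 := by linarith
  nlinarith [mul_nonneg he he, sq_nonneg (r - 1 - e)]

private lemma aux_step (c r y y' ν ν' β : ℝ) (hr1 : 1 ≤ r)
    (hν : ν' * r = r + ν) (hyr : y' * r = y + c * (1 + r))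
    (hcr : c * (1 + r) ≤ y * (r - 1)) (hry : r ^ 2 = 1 + y)
    (hβ : r + 1 ≤ β) (hν0 : 0 ≤ ν) (hy0 : 0 ≤ y) (ih : ν * y ≤ y + β) :
    ν' * y' ≤ y' + β := by
  have hr0 : 0 < r := by linarith
  have key : ν' * y' * (r * r) ≤ (y' + β) * (r * r) := by
    have e1 : ν' * y' * (r * r) = (r + ν) * (y + c * (1 + r)) := by
      calc ν' * y' * (r * r) = (ν' * r) * (y' * r) := by ring
        _ = (r + ν) * (y + c * (1 + r)) := by rw [hν, hyr]
    have e2 : (y' + β) * (r * r) = (y + c * (1 + r)) * r + β * (1 + y) := by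
      calc (y' + β) * (r * r) = (y' * r) * r + β * (r ^ 2) := by ring
        _ = (y + c * (1 + r)) * r + β * (1 + y) := by rw [hyr, hry]
    rw [e1, e2]
    have h8 : ν * (c * (1 + r)) ≤ ν * (y * (r - 1)) := mul_le_mul_of_nonneg_left hcr hν0
    have h9 : ν * y * r ≤ (y + β) * r := mul_le_mul_of_nonneg_right ih hr0.le
    have h10 : (y + β) * r ≤ β * (1 + y) := by
      have h11 : y ≤ β * (r - 1) := by
        have h12 : y * (r + 1) ≤ β * (r - 1) * (r + 1) := by nlinarith
        nlinarith
      nlinarith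
    nlinarith
  exact le_of_mul_le_mul_right key (by positivity)

private lemma aux_final (r y y0 ν β l : ℝ) (hr1 : 1 ≤ r) (hry : r ^ 2 = 1 + y)
    (hyle : y ≤ y0) (hP : ν * y ≤ y + β) (hνl : ν * l = 1) (hl : 0 < l)
    (hν0 : 0 ≤ ν) : r - 1 ≤ ((y0 + β) / 2) * l := by
  have h4 : ν * (r - 1) * (r + 1) = ν * y := by linear_combination ν * hry
  have h5 : ν * y ≤ y0 + β := by linarith
  have h7 : 0 ≤ ν * (r - 1) := mul_nonneg hν0 (by linarith)
  have h6 : ν * (r - 1) ≤ (y0 + β) / 2 := by nlinarith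
  have h8 : r - 1 = (ν * (r - 1)) * l := by
    calc r - 1 = (ν * l) * (r - 1) := by rw [hνl]; ring
      _ = (ν * (r - 1)) * l := by ring
  rw [h8]
  exact mul_le_mul_of_nonneg_right h6 hl.le

set_option maxHeartbeats 1000000 in
/-- Statement 12 on the IC-PDPS parameter sequences. -/
theorem stmt_12 (κ γ ρ : ℝ) (hκ : 0 < κ) (hγ : 0 ≤ γ) (hρ : 0 ≤ ρ)
    (Φ Ψ Θ : ℕ → ℝ)
    (hΦpos : ∀ i, 0 < Φ i) (hΨpos : ∀ i, 0 < Ψ i) (hΘpos : ∀ i, 0 < Θ i)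
    (hinit : κ ^ 2 * (Θ 0) ^ 2 = Φ 0 * Ψ 0)
    (lam : ℕ → ℝ)
    (hlam : ∀ i, lam i = Real.sqrt (Φ i * Ψ i) / (κ * Θ i))
    (hΦrec : ∀ i, Φ (i + 1) - Φ i = 2 * γ * Θ i * lam i)
    (hΨrec : ∀ i, Ψ (i + 1) - Ψ i = 2 * ρ * Θ i * lam i)
    (hΘrec : ∀ i, Θ (i + 1) - Θ i = lam (i + 1) * Θ (i + 1))
    (ω : ℕ → ℝ)
    (hω : ∀ i, ω i = lam i * Θ i / (lam (i + 1) * Θ (i + 1))) :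
    ∀ i : ℕ, ω i = lam i / lam (i + 1) - lam i ∧ |ω i - 1| ≤ (2 + (10 + 24 * γ * ρ / κ ^ 2 + (8 * γ * Ψ 0 + 8 * ρ * Φ 0) / (κ ^ 2 * Θ 0))) * lam i := by
  -- basic abbreviations
  obtain ⟨s, hs_eq⟩ : ∃ f : ℕ → ℝ, ∀ i, f i = Real.sqrt (Φ i * Ψ i) := ⟨_, fun _ => rfl⟩
  have hs : ∀ i, 0 < s i := fun i =>
    (hs_eq i) ▸ Real.sqrt_pos.mpr (mul_pos (hΦpos i) (hΨpos i))
  have hssq : ∀ i, s i ^ 2 = Φ i * Ψ i := fun i =>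
    (hs_eq i) ▸ Real.sq_sqrt (le_of_lt (mul_pos (hΦpos i) (hΨpos i)))
  have hκΘ : ∀ i, 0 < κ * Θ i := fun i => mul_pos hκ (hΘpos i)
  have hlam' : ∀ i, κ * Θ i * lam i = s i := by
    intro i
    rw [hlam i, ← hs_eq i]
    field_simp
    exact mul_div_cancel_left₀ _ (hΘpos i).ne'
  have hlampos : ∀ i, 0 < lam i := by
    intro i
    rw [hlam i, ← hs_eq i]
    exact div_pos (hs i) (hκΘ i)
  -- step relation for Θ
  have hstep : ∀ i, κ * Θ (i + 1) = κ * Θ i + s (i + 1) := by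
    intro i
    linear_combination κ * hΘrec i + hlam' (i + 1)
  -- recursions multiplied by κ
  have hΦ1 : ∀ i, κ * Φ (i + 1) = κ * Φ i + 2 * γ * s i := by
    intro i
    linear_combination κ * hΦrec i + 2 * γ * hlam' i
  have hΨ1 : ∀ i, κ * Ψ (i + 1) = κ * Ψ i + 2 * ρ * s i := by
    intro i
    linear_combination κ * hΨrec i + 2 * ρ * hlam' i
  have hssqrec : ∀ i, κ ^ 2 * s (i + 1) ^ 2
      = κ ^ 2 * s i ^ 2 + 2 * κ * (ρ * Φ i + γ * Ψ i) * s i + 4 * γ * ρ * s i ^ 2 := by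
    intro i
    have e1 : κ ^ 2 * s (i + 1) ^ 2 = (κ * Φ (i + 1)) * (κ * Ψ (i + 1)) := by
      rw [hssq (i + 1)]; ring
    rw [e1, hΦ1 i, hΨ1 i]
    linear_combination (-(κ ^ 2)) * hssq i
  -- ratio and y sequences
  obtain ⟨r, hr_eq⟩ : ∃ f : ℕ → ℝ, ∀ i, f i = s (i + 1) / s i := ⟨_, fun _ => rfl⟩
  obtain ⟨y, hy_eq⟩ : ∃ f : ℕ → ℝ, ∀ i,
      f i = 2 * (ρ * Φ i + γ * Ψ i) / (κ * s i) + 4 * γ * ρ / κ ^ 2 := ⟨_, fun _ => rfl⟩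
  have hrpos : ∀ i, 0 < r i := fun i => (hr_eq i) ▸ div_pos (hs (i + 1)) (hs i)
  have hrs : ∀ i, s (i + 1) = r i * s i := by
    intro i
    rw [hr_eq i, div_mul_cancel₀ _ (hs i).ne']
  have hy_mul : ∀ i, y i * (κ ^ 2 * s i) = 2 * κ * (ρ * Φ i + γ * Ψ i) + 4 * γ * ρ * s i := by
    intro i
    rw [hy_eq i]
    field_simp [(hs i).ne', hκ.ne']
  have hry : ∀ i, r i ^ 2 = 1 + y i := by
    intro i
    have h := hssqrec i
    have hne : (κ ^ 2 * s i ^ 2) ≠ 0 := (mul_pos (pow_pos hκ 2) (pow_pos (hs i) 2)).ne'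
    apply mul_right_cancel₀ hne
    have e1 : r i ^ 2 * (κ ^ 2 * s i ^ 2) = κ ^ 2 * s (i + 1) ^ 2 := by
      rw [hr_eq i]
      field_simp [(hs i).ne']
    calc r i ^ 2 * (κ ^ 2 * s i ^ 2) = κ ^ 2 * s (i + 1) ^ 2 := e1
      _ = κ ^ 2 * s i ^ 2 + (2 * κ * (ρ * Φ i + γ * Ψ i) + 4 * γ * ρ * s i) * s i := by
          rw [h]; ring
      _ = κ ^ 2 * s i ^ 2 + (y i * (κ ^ 2 * s i)) * s i := by rw [hy_mul i]
      _ = (1 + y i) * (κ ^ 2 * s i ^ 2) := by ring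
  have hy0 : ∀ i, 0 ≤ y i := by
    intro i
    have h1 : 0 ≤ 2 * (ρ * Φ i + γ * Ψ i) / (κ * s i) := by
      apply div_nonneg
      · nlinarith [mul_nonneg hρ (hΦpos i).le, mul_nonneg hγ (hΨpos i).le]
      · exact (mul_pos hκ (hs i)).le
    have h2 : 0 ≤ 4 * γ * ρ / κ ^ 2 := by positivity
    rw [hy_eq i]
    linarith
  have hr1 : ∀ i, 1 ≤ r i := by
    intro i
    nlinarith [hry i, hy0 i, hrpos i]
  -- AM-GM lower bound : c * (1 + r) ≤ y * (r - 1)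
  have hcr : ∀ i, 4 * γ * ρ / κ ^ 2 * (1 + r i) ≤ y i * (r i - 1) := by
    intro i
    have hE0 : (0:ℝ) ≤ Real.sqrt (γ * ρ) := Real.sqrt_nonneg _
    have hE2 : Real.sqrt (γ * ρ) ^ 2 = γ * ρ := Real.sq_sqrt (mul_nonneg hγ hρ)
    have hd : 2 * Real.sqrt (γ * ρ) * s i ≤ ρ * Φ i + γ * Ψ i := by
      have h1 : Real.sqrt (ρ * Φ i) * Real.sqrt (γ * Ψ i) = Real.sqrt (γ * ρ) * s i := by
        rw [← Real.sqrt_mul (mul_nonneg hρ (hΦpos i).le), hs_eq i,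
          ← Real.sqrt_mul (mul_nonneg hγ hρ)]
        congr 1
        ring
      have h2 := sq_nonneg (Real.sqrt (ρ * Φ i) - Real.sqrt (γ * Ψ i))
      have h3 : Real.sqrt (ρ * Φ i) ^ 2 = ρ * Φ i := Real.sq_sqrt (mul_nonneg hρ (hΦpos i).le)
      have h4 : Real.sqrt (γ * Ψ i) ^ 2 = γ * Ψ i := Real.sq_sqrt (mul_nonneg hγ (hΨpos i).le)
      nlinarith [h1, h2, h3, h4]
    have hc : 4 * γ * ρ / κ ^ 2 = (2 * Real.sqrt (γ * ρ) / κ) ^ 2 := by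
      rw [div_pow, show (2 * Real.sqrt (γ * ρ)) ^ 2 = 4 * (Real.sqrt (γ * ρ) ^ 2) by ring, hE2]
      ring
    have he0 : 0 ≤ 2 * Real.sqrt (γ * ρ) / κ := by positivity
    have hy2 : 2 * (2 * Real.sqrt (γ * ρ) / κ) + (2 * Real.sqrt (γ * ρ) / κ) ^ 2 ≤ y i := by
      have h1 : 2 * (2 * Real.sqrt (γ * ρ) / κ) ≤ 2 * (ρ * Φ i + γ * Ψ i) / (κ * s i) := by
        rw [show 2 * (2 * Real.sqrt (γ * ρ) / κ) = 4 * Real.sqrt (γ * ρ) / κ by ring]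
        rw [div_le_div_iff₀ hκ (mul_pos hκ (hs i))]
        nlinarith [mul_le_mul_of_nonneg_left hd (by positivity : (0:ℝ) ≤ 2 * κ)]
      calc 2 * (2 * Real.sqrt (γ * ρ) / κ) + (2 * Real.sqrt (γ * ρ) / κ) ^ 2
          ≤ 2 * (ρ * Φ i + γ * Ψ i) / (κ * s i) + (2 * Real.sqrt (γ * ρ) / κ) ^ 2 := by linarith
        _ = y i := by rw [hy_eq i, hc]
    exact aux_cr _ _ _ _ he0 hc hy2 (hry i) (hrpos i)
  -- recursion for y
  have hsum1 : ∀ i, κ * (ρ * Φ (i + 1) + γ * Ψ (i + 1))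
      = κ * (ρ * Φ i + γ * Ψ i) + 4 * γ * ρ * s i := by
    intro i
    linear_combination ρ * hΦ1 i + γ * hΨ1 i
  have hyrec : ∀ i, y (i + 1) * r i = y i + 4 * γ * ρ / κ ^ 2 * (1 + r i) := by
    intro i
    have h1 := hsum1 i
    have h2 := hrs i
    have hne : (κ ^ 2 * s i) ≠ 0 := (mul_pos (pow_pos hκ 2) (hs i)).ne'
    apply mul_right_cancel₀ hne
    have e1 : y (i + 1) * r i * (κ ^ 2 * s i) = y (i + 1) * (κ ^ 2 * s (i + 1)) := by
      rw [h2]; ring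
    rw [e1, hy_mul (i + 1)]
    have e2 : (y i + 4 * γ * ρ / κ ^ 2 * (1 + r i)) * (κ ^ 2 * s i)
        = y i * (κ ^ 2 * s i) + 4 * γ * ρ * (s i + s (i + 1)) := by
      rw [h2]
      field_simp
    rw [e2, hy_mul i]
    linear_combination 2 * h1
  -- y is nonincreasing
  have hymono : ∀ i, y (i + 1) ≤ y i := by
    intro i
    have h1 := hyrec i
    have h2 := hcr i
    have h4 : y (i + 1) * r i ≤ y i * r i := by nlinarith [h1, h2, hry i, hrpos i, hy0 i, hy0 (i + 1), hr1 i]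
    exact le_of_mul_le_mul_right h4 (hrpos i)
  have hyle : ∀ i, y i ≤ y 0 := by
    intro i
    induction i with
    | zero => exact le_refl _
    | succ n ih => exact le_trans (hymono n) ih
  have hrle : ∀ i, r i ≤ 1 + y 0 / 2 := by
    intro i
    exact aux_rle (r i) (y i) (y 0) (hry i) (hyle i) (hy0 0) (hrpos i)
  -- inverse lam recursion
  have hinv : ∀ j, 1 / lam j = κ * Θ j / s j := by
    intro j
    rw [hlam j, one_div_div, ← hs_eq j]
  have hν : ∀ i, (1 / lam (i + 1)) * r i = r i + 1 / lam i := by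
    intro i
    rw [hinv (i + 1), hinv i]
    have h := hstep i
    have hne : (s i * s (i + 1)) ≠ 0 := (mul_pos (hs i) (hs (i + 1))).ne'
    apply mul_right_cancel₀ hne
    have e1 : κ * Θ (i + 1) / s (i + 1) * r i * (s i * s (i + 1))
        = (κ * Θ (i + 1)) * s (i + 1) := by
      rw [hr_eq i]
      field_simp [(hs i).ne', (hs (i + 1)).ne']
    have e2 : (r i + κ * Θ i / s i) * (s i * s (i + 1))
        = s (i + 1) ^ 2 + (κ * Θ i) * s (i + 1) := by
      rw [hr_eq i]
      field_simp [(hs i).ne', (hs (i + 1)).ne']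
    rw [e1, e2, h]
    ring
  -- lam 0 = 1
  have hs0 : s 0 = κ * Θ 0 := by
    have h : Φ 0 * Ψ 0 = (κ * Θ 0) ^ 2 := by rw [← hinit]; ring
    rw [hs_eq 0, h, Real.sqrt_sq (hκΘ 0).le]
  have hlam0 : lam 0 = 1 := by
    rw [hlam 0, ← hs_eq 0, hs0, div_self (hκΘ 0).ne']
  -- the invariant
  have hβr : ∀ i, r i + 1 ≤ 2 + y 0 / 2 := by
    intro i
    have := hrle i
    linarith
  have hP : ∀ i, (1 / lam i) * y i ≤ y i + (2 + y 0 / 2) := by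
    intro i
    induction i with
    | zero =>
      rw [hlam0]
      have h := hy0 0
      have e : (1 : ℝ) / 1 * y 0 = y 0 := by norm_num
      rw [e]
      linarith
    | succ n ih =>
      exact aux_step (4 * γ * ρ / κ ^ 2) (r n) (y n) (y (n + 1)) (1 / lam n)
        (1 / lam (n + 1)) (2 + y 0 / 2) (hr1 n) (hν n) (hyrec n) (hcr n) (hry n)
        (hβr n) (one_div_nonneg.mpr (hlampos n).le) (hy0 n) ih
  -- conclusion
  intro i
  have hlamne' := (hlampos (i + 1)).ne'
  have hlamΘ : ∀ j, lam j * Θ j = s j / κ := by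
    intro j
    rw [eq_div_iff hκ.ne']
    linear_combination hlam' j
  have hωs : ω i = s i / s (i + 1) := by
    rw [hω i, hlamΘ i, hlamΘ (i + 1)]
    rw [div_div_div_comm, div_self hκ.ne', div_one]
  have hkey : lam i / lam (i + 1) = s i / s (i + 1) + lam i := by
    rw [div_eq_iff hlamne']
    have e3 : lam i * (κ * Θ i) = s i := by linear_combination hlam' i
    have e4 : lam (i + 1) * (κ * Θ (i + 1)) = s (i + 1) := by linear_combination hlam' (i + 1)
    apply mul_right_cancel₀ (hs (i + 1)).ne'
    have er : (s i / s (i + 1) + lam i) * lam (i + 1) * s (i + 1)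
        = (s i + lam i * s (i + 1)) * lam (i + 1) := by
      field_simp [(hs (i + 1)).ne']
    rw [er]
    linear_combination lam (i + 1) * e3 - lam i * e4 + (lam i * lam (i + 1)) * hstep i
  have hpart1 : ω i = lam i / lam (i + 1) - lam i := by
    rw [hωs, hkey]
    ring
  refine ⟨hpart1, ?_⟩
  have hri := hr1 i
  have hrpos' := hrpos i
  have hωr : ω i = 1 / r i := by
    rw [hωs, ← one_div_div (s (i + 1)) (s i), ← hr_eq i]
  have hω1 : |ω i - 1| ≤ r i - 1 := by
    rw [hωr, abs_sub_comm, abs_of_nonneg]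
    · have h1 : 1 / r i ≤ 1 := by
        rw [div_le_one hrpos']
        linarith
      have h2 : 0 < 1 / r i := by positivity
      nlinarith [one_div_mul_cancel hrpos'.ne',
        mul_nonneg (sub_nonneg.mpr h1) (sub_nonneg.mpr hri)]
    · have h1 : 1 / r i ≤ 1 := by
        rw [div_le_one hrpos']
        linarith
      linarith
  have hfinal : r i - 1 ≤ ((y 0 + (2 + y 0 / 2)) / 2) * lam i :=
    aux_final (r i) (y i) (y 0) (1 / lam i) (2 + y 0 / 2) (lam i) hri (hry i)
      (hyle i) (hP i) (one_div_mul_cancel (hlampos i).ne') (hlampos i)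
      (one_div_nonneg.mpr (hlampos i).le)
  have hconst : (y 0 + (2 + y 0 / 2)) / 2
      ≤ 2 + (10 + 24 * γ * ρ / κ ^ 2 + (8 * γ * Ψ 0 + 8 * ρ * Φ 0) / (κ ^ 2 * Θ 0)) := by
    have hy0v := hy_eq 0
    rw [hy0v, hs0]
    have hpos : (0:ℝ) < κ ^ 2 * Θ 0 := mul_pos (pow_pos hκ 2) (hΘpos 0)
    have h1 : 0 ≤ (ρ * Φ 0 + γ * Ψ 0) / (κ ^ 2 * Θ 0) := by
      apply div_nonneg _ hpos.le
      nlinarith [mul_nonneg hρ (hΦpos 0).le, mul_nonneg hγ (hΨpos 0).le]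
    have h2 : 0 ≤ γ * ρ / κ ^ 2 := by positivity
    have e1 : κ * (κ * Θ 0) = κ ^ 2 * Θ 0 := by ring
    rw [e1]
    have e2 : 2 * (ρ * Φ 0 + γ * Ψ 0) / (κ ^ 2 * Θ 0)
        = 2 * ((ρ * Φ 0 + γ * Ψ 0) / (κ ^ 2 * Θ 0)) := by ring
    have e3 : (8 * γ * Ψ 0 + 8 * ρ * Φ 0) / (κ ^ 2 * Θ 0)
        = 8 * ((ρ * Φ 0 + γ * Ψ 0) / (κ ^ 2 * Θ 0)) := by ring
    have e4 : 24 * γ * ρ / κ ^ 2 = 24 * (γ * ρ / κ ^ 2) := by ring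
    have e5 : 4 * γ * ρ / κ ^ 2 = 4 * (γ * ρ / κ ^ 2) := by ring
    rw [e2, e3, e4, e5]
    linarith
  calc |ω i - 1| ≤ r i - 1 := hω1
    _ ≤ ((y 0 + (2 + y 0 / 2)) / 2) * lam i := hfinal
    _ ≤ (2 + (10 + 24 * γ * ρ / κ ^ 2 + (8 * γ * Ψ 0 + 8 * ρ * Φ 0) / (κ ^ 2 * Θ 0))) * lam i :=
        mul_le_mul_of_nonneg_right hconst (hlampos i).le
end

section
/- Suppose that for every i ∈ ℕ: (a) ⟨Z_{i+1}M_{i+1}v, v⟩ ≥ 0 for all v ∈ U; (b) Z_{i+1}M_{i+1} = M_{i+1}*Z_{i+1}* (so that Υ_{i+1} := Λ_{i+1}*Z_{i+1}M_{i+1}Λ_{i+1} is self-adjoint and positive semi-definite); and (c) ⟨(Υ_{i+1} + 2Λ_{i+1}*Z_{i+1}Γ_{i+1})v, v⟩ ≥ ⟨Υ_{i+2}v, v⟩ for all v ∈ U. Then for every û ∈ U and every N ≥ 1: (1/2)⟨Υ_{N+1}(z^N − û), z^N − û⟩ + Σ_{i=0}^{N−1} ( V^{i+1}(û) + (1/2)⟨Υ_{i+1}(z^{i+1}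 − z^i), z^{i+1} − z^i⟩ ) ≤ (1/2)⟨Υ_1(z^0 − û), z^0 − û⟩. -/
open scoped RealInnerProductSpace

/-- Valkonen's abstract convergence estimate for the general corrected inertial
proximal point method (Theorem 2.3 of Valkonen 2020). -/
theorem stmt_13
    {U : Type*} [NormedAddCommGroup U] [InnerProductSpace ℝ U] [CompleteSpace U]
    (M Z Γ : ℕ → U →L[ℝ] U) (Λ : ℕ → U ≃L[ℝ] U)
    (u ubar h z : ℕ → U)
    (hubar0 : ubar 0 = u 0)
    (hstep : ∀ i : ℕ,
      h (i + 1) + M (i + 1) (u (i + 1) - ubar i)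
        + Γ (i + 1) ((Λ (i + 1)).symm (u (i + 1) - u i) - (u (i + 1) - u i)) = 0)
    (hinertia : ∀ i : ℕ,
      ubar (i + 1) = u (i + 1)
        + Λ (i + 2) ((Λ (i + 1)).symm (u (i + 1) - u i) - (u (i + 1) - u i)))
    (hz0 : z 0 = u 0)
    (hz : ∀ i : ℕ,
      z (i + 1) = (Λ (i + 1)).symm (u (i + 1)) - ((Λ (i + 1)).symm (u i) - u i))
    (Υ : ℕ → U →L[ℝ] U)
    (hΥ : ∀ i : ℕ,
      Υ (i + 1) = (ContinuousLinearMap.adjoint ((Λ (i + 1) : U →L[ℝ] U))).comp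
        ((Z (i + 1)).comp ((M (i + 1)).comp ((Λ (i + 1) : U →L[ℝ] U)))))
    (hposdef : ∀ i : ℕ, ∀ v : U, 0 ≤ ⟪Z (i + 1) (M (i + 1) v), v⟫)
    (hsym : ∀ i : ℕ,
      (Z (i + 1)).comp (M (i + 1))
        = (ContinuousLinearMap.adjoint (M (i + 1))).comp
            (ContinuousLinearMap.adjoint (Z (i + 1))))
    (hmono : ∀ i : ℕ, ∀ v : U,
      ⟪Υ (i + 2) v, v⟫
        ≤ ⟪Υ (i + 1) v
            + (2 : ℝ) • (ContinuousLinearMap.adjoint ((Λ (i + 1) : U →L[ℝ] U)))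
                (Z (i + 1) (Γ (i + 1) v)), v⟫) :
    ∀ uhat : U, ∀ N : ℕ, 1 ≤ N →
      (1 / 2) * ⟪Υ (N + 1) (z N - uhat), z N - uhat⟫
        + ∑ i ∈ Finset.range N,
            (⟪(ContinuousLinearMap.adjoint ((Λ (i + 1) : U →L[ℝ] U)))
                (Z (i + 1) (h (i + 1) - Γ (i + 1) (u (i + 1) - uhat))),
              z (i + 1) - uhat⟫
              + (1 / 2) * ⟪Υ (i + 1) (z (i + 1) - z i), z (i + 1) - z i⟫)
      ≤ (1 / 2) * ⟪Υ 1 (z 0 - uhat), z 0 - uhat⟫ := by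
  intro uhat N hN
  -- Per-step telescoping inequality
  have key : ∀ i : ℕ,
      ⟪(ContinuousLinearMap.adjoint ((Λ (i + 1) : U →L[ℝ] U)))
          (Z (i + 1) (h (i + 1) - Γ (i + 1) (u (i + 1) - uhat))), z (i + 1) - uhat⟫
        + (1 / 2) * ⟪Υ (i + 1) (z (i + 1) - z i), z (i + 1) - z i⟫
        + (1 / 2) * ⟪Υ (i + 2) (z (i + 1) - uhat), z (i + 1) - uhat⟫
      ≤ (1 / 2) * ⟪Υ (i + 1) (z i - uhat), z i - uhat⟫ := by
    intro i
    set w : U := z (i + 1) - uhat with hw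
    set d : U := z (i + 1) - z i with hdd
    -- self-adjointness of Υ (i+1)
    have hZM : ∀ v : U, Z (i + 1) (M (i + 1) v)
        = (ContinuousLinearMap.adjoint (M (i + 1)))
            ((ContinuousLinearMap.adjoint (Z (i + 1))) v) := by
      intro v
      have := DFunLike.congr_fun (hsym i) v
      simpa using this
    have sa : ∀ a b : U, ⟪Υ (i + 1) a, b⟫ = ⟪Υ (i + 1) b, a⟫ := by
      intro a b
      rw [hΥ i]
      simp only [ContinuousLinearMap.comp_apply]
      rw [ContinuousLinearMap.adjoint_inner_left,
        ContinuousLinearMap.adjoint_inner_left]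
      rw [hZM]
      rw [ContinuousLinearMap.adjoint_inner_left,
        ContinuousLinearMap.adjoint_inner_left]
      rw [real_inner_comm]
    -- z^{i+1} - u^{i+1} identity
    have hzn : (Λ (i + 1)).symm (u (i + 1) - u i) - (u (i + 1) - u i)
        = z (i + 1) - u (i + 1) := by
      rw [hz i, map_sub]
      abel
    -- Λ (i+1) d = u^{i+1} - ubar^i
    have hd : (Λ (i + 1) : U →L[ℝ] U) d = u (i + 1) - ubar i := by
      have : (Λ (i + 1) : U →L[ℝ] U) d = Λ (i + 1) d := rfl
      rw [this, hdd]
      cases i with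
      | zero =>
          rw [hz 0, hz0, hubar0]
          simp [map_sub, sub_sub_eq_add_sub]
          abel
      | succ j =>
          rw [hz (j + 1), hz j, hinertia j]
          simp only [map_sub, map_add, ContinuousLinearEquiv.apply_symm_apply]
          abel
    -- rearrange the step condition
    have hh : h (i + 1) - Γ (i + 1) (u (i + 1) - uhat)
        = -(M (i + 1) ((Λ (i + 1) : U →L[ℝ] U) d)) - Γ (i + 1) w := by
      have hstep' := hstep i
      rw [hzn, ← hd] at hstep'
      have e1 : h (i + 1) = -(M (i + 1) ((Λ (i + 1) : U →L[ℝ] U) d))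
          - Γ (i + 1) (z (i + 1) - u (i + 1)) := by
        rw [add_assoc, add_eq_zero_iff_eq_neg] at hstep'
        rw [hstep']; abel
      have e2 : Γ (i + 1) (z (i + 1) - u (i + 1)) + Γ (i + 1) (u (i + 1) - uhat)
          = Γ (i + 1) w := by
        rw [← map_add]
        congr 1
        rw [hw]; abel
      rw [e1, ← e2]; abel
    -- rewrite the V term
    have hV : ⟪(ContinuousLinearMap.adjoint ((Λ (i + 1) : U →L[ℝ] U)))
          (Z (i + 1) (h (i + 1) - Γ (i + 1) (u (i + 1) - uhat))), w⟫
        = -⟪Υ (i + 1) d, w⟫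
          - ⟪(ContinuousLinearMap.adjoint ((Λ (i + 1) : U →L[ℝ] U)))
              (Z (i + 1) (Γ (i + 1) w)), w⟫ := by
      rw [hh]
      have : (-(M (i + 1) ((Λ (i + 1) : U →L[ℝ] U) d)) - Γ (i + 1) w)
          = -((M (i + 1) ((Λ (i + 1) : U →L[ℝ] U) d)) + Γ (i + 1) w) := by abel
      rw [this, map_neg, map_neg, map_add, map_add, inner_neg_left, inner_add_left,
        hΥ i]
      simp only [ContinuousLinearMap.comp_apply]
      ring
    -- three-point identity
    have hwd : w - d = z i - uhat := by rw [hw, hdd]; abel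
    clear_value w d
    have expand : ⟪Υ (i + 1) (w - d), w - d⟫
        = ⟪Υ (i + 1) w, w⟫ - 2 * ⟪Υ (i + 1) d, w⟫ + ⟪Υ (i + 1) d, d⟫ := by
      rw [map_sub, inner_sub_left, inner_sub_right, inner_sub_right]
      have h1 := sa w d
      linarith
    -- monotonicity rewritten
    have hm := hmono i w
    rw [inner_add_left, real_inner_smul_left] at hm
    -- combine
    rw [hwd] at expand
    linarith [hV, expand, hm]
  -- summing up by induction
  have main : ∀ n : ℕ,
      (1 / 2) * ⟪Υ (n + 1) (z n - uhat), z n - uhat⟫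
        + ∑ i ∈ Finset.range n,
            (⟪(ContinuousLinearMap.adjoint ((Λ (i + 1) : U →L[ℝ] U)))
                (Z (i + 1) (h (i + 1) - Γ (i + 1) (u (i + 1) - uhat))),
              z (i + 1) - uhat⟫
              + (1 / 2) * ⟪Υ (i + 1) (z (i + 1) - z i), z (i + 1) - z i⟫)
      ≤ (1 / 2) * ⟪Υ 1 (z 0 - uhat), z 0 - uhat⟫ := by
    intro n
    induction n with
    | zero => simp
    | succ m ih =>
        rw [Finset.sum_range_succ]
        have := key m
        linarith
  exact main N
end

section
/- Assume in addition that the parameters satisfy φ'(t) = 2γθ(t), ψ'(t) = 2ρθ(t) and θ'(t) = θ(t) for all t ≥ 0. Then the Lyapunov function is nonincreasing: (d/dt)E(t) ≤ 0 for all t ≥ 0, and consequently θ(t)[L̂(x(t), ŷ) − L̂(x̂, y(t))] + (1/2)φ(t)‖ζ(t) − x̂‖² + (1/2)ψ(t)‖η(t) − ŷ‖² ≤ E(0) for all t ≥ 0. -/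
open scoped RealInnerProductSpace

section helpers
variable {X : Type*} [NormedAddCommGroup X] [InnerProductSpace ℝ X] [CompleteSpace X]

lemma grad_comp_hasDerivAt {f : X → ℝ} {fp : X} {c : ℝ → X} {c' : X} {t : ℝ}
    (hf : HasGradientAt f fp (c t)) (hc : HasDerivAt c c' t) :
    HasDerivAt (fun s => f (c s)) (⟪fp, c'⟫) t := by
  have h := (hasGradientAt_iff_hasFDerivAt.mp hf).comp_hasDerivAt t hc
  simp [InnerProductSpace.toDual_apply_apply] at h
  exact h

omit [CompleteSpace X] in
lemma inner_self_hasDerivAt {c : ℝ → X} {c' : X} {t : ℝ} (h : HasDerivAt c c' t) :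
    HasDerivAt (fun s => ⟪c s, c s⟫) (2 * ⟪c t, c'⟫) t := by
  have h2 := h.inner ℝ h
  have e : ⟪c t, c'⟫ + ⟪c', c t⟫ = 2 * ⟪c t, c'⟫ := by
    linarith [real_inner_comm c' (c t)]
  rwa [e] at h2

lemma subgrad (f : X → ℝ) (f' : X → X) (c : ℝ)
    (hf : ∀ p, HasGradientAt f (f' p) p)
    (hconv : ConvexOn ℝ Set.univ (fun p => f p - c / 2 * ‖p‖ ^ 2)) (p q : X) :
    f p + ⟪f' p, q - p⟫ + c / 2 * ‖q - p‖ ^ 2 ≤ f q := by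
  set L : ℝ → X := fun s => s • (q - p) + p with hLdef
  have hL : ∀ s : ℝ, HasDerivAt L (q - p) s := fun s => by
    simpa [hLdef] using ((hasDerivAt_id s).smul_const (q - p)).add_const p
  set h : ℝ → ℝ := fun s => f (L s) - c / 2 * ⟪L s, L s⟫ with hhdef
  have hconv2 : ConvexOn ℝ Set.univ h := by
    have H := hconv.comp_affineMap (AffineMap.lineMap p q : ℝ →ᵃ[ℝ] X)
    simp only [Set.preimage_univ] at H
    have : h = (fun v => f v - c / 2 * ‖v‖ ^ 2) ∘ (AffineMap.lineMap p q : ℝ →ᵃ[ℝ] X) := by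
      funext s
      simp [hhdef, hLdef, AffineMap.lineMap_apply, real_inner_self_eq_norm_sq]
    rw [this]; exact H
  have hd : HasDerivAt h (⟪f' (L 0), q - p⟫ - c / 2 * (2 * ⟪L 0, q - p⟫)) 0 :=
    (grad_comp_hasDerivAt (hf (L 0)) (hL 0)).sub ((inner_self_hasDerivAt (hL 0)).const_mul (c / 2))
  have key := hconv2.le_slope_of_hasDerivAt (Set.mem_univ 0) (Set.mem_univ 1) one_pos hd
  have hs : slope h 0 1 = h 1 - h 0 := by simp [slope_def_field]
  rw [hs] at key
  have hL0 : L 0 = p := by simp [hLdef]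
  have hL1 : L 1 = q := by simp [hLdef]
  simp only [hhdef, hL0, hL1] at key
  have e1 : ‖q - p‖ ^ 2 = ⟪q - p, q - p⟫ := (real_inner_self_eq_norm_sq _).symm
  rw [e1]
  have comm := real_inner_comm p q
  simp only [inner_sub_left, inner_sub_right] at key ⊢
  have comm2 : c / 2 * ⟪q, p⟫ = c / 2 * ⟪p, q⟫ := by rw [comm]
  linarith [key, comm2]
end helpers

/-- Lyapunov analysis of the rescaled IC-PDPS ODE: with the parameter equations
`φ' = 2γθ`, `ψ' = 2ρθ`, `θ' = θ`, the Lyapunov function `E` is nonincreasing and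
hence bounded by its initial value. -/
theorem stmt_14
    {X Y : Type*} [NormedAddCommGroup X] [InnerProductSpace ℝ X] [CompleteSpace X]
    [NormedAddCommGroup Y] [InnerProductSpace ℝ Y] [CompleteSpace Y]
    (K : X →L[ℝ] Y) (γ ρ : ℝ) (hγ : 0 ≤ γ) (hρ : 0 ≤ ρ)
    (G : X → ℝ) (Fs : Y → ℝ) (G' : X → X) (Fs' : Y → Y)
    (hG : ∀ p, HasGradientAt G (G' p) p)
    (hFs : ∀ q, HasGradientAt Fs (Fs' q) q)
    (hGconv : ConvexOn ℝ Set.univ (fun p => G p - γ / 2 * ‖p‖ ^ 2))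
    (hFconv : ConvexOn ℝ Set.univ (fun q => Fs q - ρ / 2 * ‖q‖ ^ 2))
    (xhat : X) (yhat : Y)
    (hsadx : G' xhat + ContinuousLinearMap.adjoint K yhat = 0)
    (hsady : Fs' yhat - K xhat = 0)
    (Lhat : X → Y → ℝ)
    (hLhat : ∀ p q, Lhat p q
      = G p - γ / 2 * ‖p - xhat‖ ^ 2 + ⟪K p, q⟫ - Fs q + ρ / 2 * ‖q - yhat‖ ^ 2)
    (x ζ : ℝ → X) (y η : ℝ → Y) (φ ψ θ : ℝ → ℝ)
    (hφpos : ∀ t, 0 ≤ t → 0 < φ t) (hψpos : ∀ t, 0 ≤ t → 0 < ψ t)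
    (hθpos : ∀ t, 0 ≤ t → 0 < θ t)
    (hx : ∀ t, 0 ≤ t → HasDerivAt x (ζ t - x t) t)
    (hy : ∀ t, 0 ≤ t → HasDerivAt y (η t - y t) t)
    (hζ : ∀ t, 0 ≤ t → HasDerivAt ζ
      ((θ t / φ t) • (γ • (x t - ζ t) - G' (x t) - ContinuousLinearMap.adjoint K (η t))) t)
    (hη : ∀ t, 0 ≤ t → HasDerivAt η
      ((θ t / ψ t) • (ρ • (y t - η t) - Fs' (y t) + K (ζ t))) t)
    (hφ' : ∀ t, 0 ≤ t → HasDerivAt φ (2 * γ * θ t) t)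
    (hψ' : ∀ t, 0 ≤ t → HasDerivAt ψ (2 * ρ * θ t) t)
    (hθ' : ∀ t, 0 ≤ t → HasDerivAt θ (θ t) t)
    (E : ℝ → ℝ)
    (hE : ∀ t, E t = θ t * (Lhat (x t) yhat - Lhat xhat (y t))
      + 1 / 2 * φ t * ‖ζ t - xhat‖ ^ 2 + 1 / 2 * ψ t * ‖η t - yhat‖ ^ 2) :
    (∀ t, 0 ≤ t → deriv E t ≤ 0) ∧
      (∀ t, 0 ≤ t →
        θ t * (Lhat (x t) yhat - Lhat xhat (y t))
          + 1 / 2 * φ t * ‖ζ t - xhat‖ ^ 2 + 1 / 2 * ψ t * ‖η t - yhat‖ ^ 2 ≤ E 0) := by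
  have hEfun : E = fun s => θ s *
      ((G (x s) - γ / 2 * ⟪x s - xhat, x s - xhat⟫ + ⟪K (x s), yhat⟫ - Fs yhat)
        - (G xhat + ⟪K xhat, y s⟫ - Fs (y s) + ρ / 2 * ⟪y s - yhat, y s - yhat⟫))
      + 1 / 2 * φ s * ⟪ζ s - xhat, ζ s - xhat⟫
      + 1 / 2 * ψ s * ⟪η s - yhat, η s - yhat⟫ := by
    funext s
    rw [hE s, hLhat, hLhat]
    simp only [sub_self, norm_zero, ← real_inner_self_eq_norm_sq]
    ring
  have hD : ∀ t, 0 ≤ t → HasDerivAt E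
      (θ t * ((G (x t) - G xhat + ⟪G' (x t), xhat - x t⟫ + γ / 2 * ‖xhat - x t‖ ^ 2)
        + (Fs (y t) - Fs yhat + ⟪Fs' (y t), yhat - y t⟫ + ρ / 2 * ‖yhat - y t‖ ^ 2))) t := by
    intro t ht
    have hφne : φ t ≠ 0 := (hφpos t ht).ne'
    have hψne : ψ t ≠ 0 := (hψpos t ht).ne'
    have hxd := hx t ht
    have hyd := hy t ht
    have hζd := hζ t ht
    have hηd := hη t ht
    have hφd := hφ' t ht
    have hψd := hψ' t ht
    have hθd := hθ' t ht
    have h1 : HasDerivAt (fun s => G (x s)) (⟪G' (x t), ζ t - x t⟫) t :=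
      grad_comp_hasDerivAt (hG (x t)) hxd
    have h2 : HasDerivAt (fun s => ⟪x s - xhat, x s - xhat⟫)
        (2 * ⟪x t - xhat, ζ t - x t⟫) t := inner_self_hasDerivAt (hxd.sub_const xhat)
    have h3 : HasDerivAt (fun s => ⟪K (x s), yhat⟫)
        (⟪K (x t), (0 : Y)⟫ + ⟪K (ζ t - x t), yhat⟫) t :=
      (K.hasFDerivAt.comp_hasDerivAt t hxd).inner ℝ (hasDerivAt_const t yhat)
    have h4 : HasDerivAt (fun s => ⟪K xhat, y s⟫)
        (⟪K xhat, η t - y t⟫ + ⟪(0 : Y), y t⟫) t :=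
      (hasDerivAt_const t (K xhat)).inner ℝ hyd
    have h5 : HasDerivAt (fun s => Fs (y s)) (⟪Fs' (y t), η t - y t⟫) t :=
      grad_comp_hasDerivAt (hFs (y t)) hyd
    have h6 : HasDerivAt (fun s => ⟪y s - yhat, y s - yhat⟫)
        (2 * ⟪y t - yhat, η t - y t⟫) t := inner_self_hasDerivAt (hyd.sub_const yhat)
    have h7 : HasDerivAt (fun s => ⟪ζ s - xhat, ζ s - xhat⟫)
        (2 * ⟪ζ t - xhat, (θ t / φ t) • (γ • (x t - ζ t) - G' (x t)
          - ContinuousLinearMap.adjoint K (η t))⟫) t :=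
      inner_self_hasDerivAt (hζd.sub_const xhat)
    have h8 : HasDerivAt (fun s => ⟪η s - yhat, η s - yhat⟫)
        (2 * ⟪η t - yhat, (θ t / ψ t) • (ρ • (y t - η t) - Fs' (y t) + K (ζ t))⟫) t :=
      inner_self_hasDerivAt (hηd.sub_const yhat)
    have xside : HasDerivAt (fun s => G (x s) - γ / 2 * ⟪x s - xhat, x s - xhat⟫
        + ⟪K (x s), yhat⟫ - Fs yhat)
        (⟪G' (x t), ζ t - x t⟫ - γ / 2 * (2 * ⟪x t - xhat, ζ t - x t⟫)
          + (⟪K (x t), (0 : Y)⟫ + ⟪K (ζ t - x t), yhat⟫)) t :=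
      ((h1.sub (h2.const_mul (γ / 2))).add h3).sub_const (Fs yhat)
    have yside : HasDerivAt (fun s => G xhat + ⟪K xhat, y s⟫ - Fs (y s)
        + ρ / 2 * ⟪y s - yhat, y s - yhat⟫)
        ((⟪K xhat, η t - y t⟫ + ⟪(0 : Y), y t⟫) - ⟪Fs' (y t), η t - y t⟫
          + ρ / 2 * (2 * ⟪y t - yhat, η t - y t⟫)) t :=
      ((h4.const_add (G xhat)).sub h5).add (h6.const_mul (ρ / 2))
    have term1 := hθd.mul (xside.sub yside)
    have t2 := (hφd.const_mul (1 / 2 : ℝ)).mul h7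
    have t2' : HasDerivAt (fun s => 1 / 2 * φ s * ⟪ζ s - xhat, ζ s - xhat⟫)
        (γ * θ t * ⟪ζ t - xhat, ζ t - xhat⟫ + θ t * ⟪ζ t - xhat, γ • (x t - ζ t) - G' (x t)
          - ContinuousLinearMap.adjoint K (η t)⟫) t := by
      convert t2 using 1
      · rfl
      · rfl
      · rfl
      rw [real_inner_smul_right]
      field_simp
    have t3 := (hψd.const_mul (1 / 2 : ℝ)).mul h8
    have t3' : HasDerivAt (fun s => 1 / 2 * ψ s * ⟪η s - yhat, η s - yhat⟫)
        (ρ * θ t * ⟪η t - yhat, η t - yhat⟫ + θ t * ⟪η t - yhat, ρ • (y t - η t) - Fs' (y t)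
          + K (ζ t)⟫) t := by
      convert t3 using 1
      · rfl
      · rfl
      · rfl
      rw [real_inner_smul_right]
      field_simp
    have hbig := (term1.add t2').add t3'
    have hEt : HasDerivAt E (θ t *
        ((G (x t) - γ / 2 * ⟪x t - xhat, x t - xhat⟫ + ⟪K (x t), yhat⟫ - Fs yhat)
          - (G xhat + ⟪K xhat, y t⟫ - Fs (y t) + ρ / 2 * ⟪y t - yhat, y t - yhat⟫))
      + θ t * ((⟪G' (x t), ζ t - x t⟫ - γ / 2 * (2 * ⟪x t - xhat, ζ t - x t⟫)
          + (⟪K (x t), (0 : Y)⟫ + ⟪K (ζ t - x t), yhat⟫))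
        - ((⟪K xhat, η t - y t⟫ + ⟪(0 : Y), y t⟫) - ⟪Fs' (y t), η t - y t⟫
          + ρ / 2 * (2 * ⟪y t - yhat, η t - y t⟫)))
      + (γ * θ t * ⟪ζ t - xhat, ζ t - xhat⟫ + θ t * ⟪ζ t - xhat, γ • (x t - ζ t) - G' (x t)
          - ContinuousLinearMap.adjoint K (η t)⟫)
      + (ρ * θ t * ⟪η t - yhat, η t - yhat⟫ + θ t * ⟪η t - yhat, ρ • (y t - η t) - Fs' (y t)
          + K (ζ t)⟫)) t := by
      rw [hEfun]
      convert hbig using 1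
      all_goals rfl
    have heq : (θ t *
        ((G (x t) - γ / 2 * ⟪x t - xhat, x t - xhat⟫ + ⟪K (x t), yhat⟫ - Fs yhat)
          - (G xhat + ⟪K xhat, y t⟫ - Fs (y t) + ρ / 2 * ⟪y t - yhat, y t - yhat⟫))
      + θ t * ((⟪G' (x t), ζ t - x t⟫ - γ / 2 * (2 * ⟪x t - xhat, ζ t - x t⟫)
          + (⟪K (x t), (0 : Y)⟫ + ⟪K (ζ t - x t), yhat⟫))
        - ((⟪K xhat, η t - y t⟫ + ⟪(0 : Y), y t⟫) - ⟪Fs' (y t), η t - y t⟫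
          + ρ / 2 * (2 * ⟪y t - yhat, η t - y t⟫)))
      + (γ * θ t * ⟪ζ t - xhat, ζ t - xhat⟫ + θ t * ⟪ζ t - xhat, γ • (x t - ζ t) - G' (x t)
          - ContinuousLinearMap.adjoint K (η t)⟫)
      + (ρ * θ t * ⟪η t - yhat, η t - yhat⟫ + θ t * ⟪η t - yhat, ρ • (y t - η t) - Fs' (y t)
          + K (ζ t)⟫))
      = θ t * ((G (x t) - G xhat + ⟪G' (x t), xhat - x t⟫ + γ / 2 * ‖xhat - x t‖ ^ 2)
        + (Fs (y t) - Fs yhat + ⟪Fs' (y t), yhat - y t⟫ + ρ / 2 * ‖yhat - y t‖ ^ 2)) := by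
      simp only [← real_inner_self_eq_norm_sq, inner_sub_left, inner_sub_right,
        inner_add_left, inner_add_right, real_inner_smul_left, real_inner_smul_right,
        map_sub, inner_zero_left, inner_zero_right,
        ContinuousLinearMap.adjoint_inner_right]
      linear_combination
        - γ * θ t * real_inner_comm (x t) xhat + γ * θ t * real_inner_comm (x t) (ζ t)
        - γ * θ t * real_inner_comm xhat (ζ t)
        - θ t * real_inner_comm (G' (x t)) (ζ t) + θ t * real_inner_comm (G' (x t)) xhat
        - ρ * θ t * real_inner_comm (y t) yhat + ρ * θ t * real_inner_comm (y t) (η t)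
        - ρ * θ t * real_inner_comm yhat (η t)
        - θ t * real_inner_comm (Fs' (y t)) (η t) + θ t * real_inner_comm (Fs' (y t)) yhat
        - θ t * real_inner_comm (K (ζ t)) yhat + θ t * real_inner_comm (K (ζ t)) (η t)
    exact heq ▸ hEt
  have hDle : ∀ t, 0 ≤ t →
      θ t * ((G (x t) - G xhat + ⟪G' (x t), xhat - x t⟫ + γ / 2 * ‖xhat - x t‖ ^ 2)
        + (Fs (y t) - Fs yhat + ⟪Fs' (y t), yhat - y t⟫ + ρ / 2 * ‖yhat - y t‖ ^ 2)) ≤ 0 := by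
    intro t ht
    have sg1 := subgrad G G' γ hG hGconv (x t) xhat
    have sg2 := subgrad Fs Fs' ρ hFs hFconv (y t) yhat
    refine mul_nonpos_of_nonneg_of_nonpos (hθpos t ht).le ?_
    linarith
  constructor
  · intro t ht
    rw [(hD t ht).deriv]
    exact hDle t ht
  · intro t ht
    have hcont : ContinuousOn E (Set.Ici 0) := fun s hs =>
      ((hD s hs).continuousAt).continuousWithinAt
    have hdiff : DifferentiableOn ℝ E (interior (Set.Ici (0:ℝ))) := by
      intro s hs
      rw [interior_Ici] at hs
      exact ((hD s (le_of_lt hs)).differentiableAt).differentiableWithinAt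
    have hder : ∀ s ∈ interior (Set.Ici (0:ℝ)), deriv E s ≤ 0 := by
      intro s hs
      rw [interior_Ici] at hs
      rw [(hD s (le_of_lt hs)).deriv]
      exact hDle s (le_of_lt hs)
    have anti := antitoneOn_of_deriv_nonpos (convex_Ici 0) hcont hdiff hder
    have := anti (Set.self_mem_Ici) ht ht
    rw [hE t] at this
    exact this
end

section
/- Without any equation imposed on φ, ψ, θ beyond positivity and differentiability, for every t ≥ 0 one has the key estimate (d/dt)E(t) ≤ (θ'(t) − θ(t))·[L̂(x(t), ŷ) − L̂(x̂, y(t))] + (1/2)(φ'(t) − 2γθ(t))·‖ζ(t) − x̂‖² + (1/2)(ψ'(t) − 2ρθ(t))·‖η(t) − ŷ‖². -/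
set_option maxHeartbeats 1000000
open scoped RealInnerProductSpace

lemma strong_support {X : Type*} [NormedAddCommGroup X] [InnerProductSpace ℝ X] [CompleteSpace X]
    (f : X → ℝ) (f' : X → X) (γ : ℝ)
    (hf : ∀ p, HasGradientAt f (f' p) p)
    (hconv : ConvexOn ℝ Set.univ (fun p => f p - γ / 2 * ‖p‖ ^ 2)) (p q : X) :
    f p + ⟪f' p, q - p⟫ + γ / 2 * ‖q - p‖ ^ 2 ≤ f q := by
  set c : ℝ → X := fun s => p + s • (q - p) with hc
  have hcd : ∀ s : ℝ, HasDerivAt c (q - p) s := by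
    intro s
    have : HasDerivAt (fun s : ℝ => s • (q - p)) ((1:ℝ) • (q - p)) s :=
      (hasDerivAt_id s).smul_const (q - p)
    have h' := this.const_add p
    simp only [one_smul] at h'
    exact h'
  have hc0 : c 0 = p := by simp [hc]
  have hc1 : c 1 = q := by simp [hc]
  have hfd : HasDerivAt (fun s => f (c s)) ⟪f' p, q - p⟫ 0 := by
    have := ((hf (c 0)).hasFDerivAt).comp_hasDerivAt 0 (hcd 0)
    simp only [hc0] at this
    exact this
  have hnd : HasDerivAt (fun s => ‖c s‖ ^ 2) (2 * ⟪p, q - p⟫) 0 := by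
    have h1 : HasDerivAt (fun s => ⟪c s, c s⟫) (⟪c 0, q - p⟫ + ⟪q - p, c 0⟫) 0 :=
      HasDerivAt.inner ℝ (hcd 0) (hcd 0)
    have h2 : (fun s => ⟪c s, c s⟫) = fun s => ‖c s‖ ^ 2 := by
      funext s; exact real_inner_self_eq_norm_sq (c s)
    rw [h2] at h1
    have : ⟪c 0, q - p⟫ + ⟪q - p, c 0⟫ = 2 * ⟪p, q - p⟫ := by
      rw [hc0, real_inner_comm (q - p) p]; ring
    rwa [this] at h1
  have hk : HasDerivAt (fun s => f (c s) - γ / 2 * ‖c s‖ ^ 2)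
      (⟪f' p, q - p⟫ - γ / 2 * (2 * ⟪p, q - p⟫)) 0 := hfd.sub (hnd.const_mul (γ / 2))
  have hkc : ConvexOn ℝ Set.univ (fun s => f (c s) - γ / 2 * ‖c s‖ ^ 2) := by
    have := hconv.comp_affineMap (AffineMap.lineMap p q : ℝ →ᵃ[ℝ] X)
    simp only [Set.preimage_univ] at this
    have h3 : ∀ s : ℝ, (AffineMap.lineMap p q : ℝ →ᵃ[ℝ] X) s = c s := by
      intro s
      simp [AffineMap.lineMap_apply, hc]
      abel
    have h4 : ((fun p => f p - γ / 2 * ‖p‖ ^ 2) ∘ ⇑(AffineMap.lineMap p q))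
        = fun s : ℝ => f (c s) - γ / 2 * ‖c s‖ ^ 2 := by
      funext s; simp [Function.comp, h3 s]
    rwa [h4] at this
  have hs := hkc.le_slope_of_hasDerivAt (Set.mem_univ (0:ℝ)) (Set.mem_univ 1)
    one_pos hk
  rw [slope_def_field] at hs
  simp [hc0, hc1] at hs
  have hexp : ‖q - p‖ ^ 2 = ‖q‖ ^ 2 - 2 * ⟪p, q - p⟫ - ‖p‖ ^ 2 := by
    rw [← real_inner_self_eq_norm_sq, ← real_inner_self_eq_norm_sq, ← real_inner_self_eq_norm_sq]
    simp only [inner_sub_left, inner_sub_right]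
    rw [real_inner_comm q p]; ring
  rw [hexp]; linarith

lemma sq_deriv {Z : Type*} [NormedAddCommGroup Z] [InnerProductSpace ℝ Z]
    {u : ℝ → Z} {u' : Z} (z : Z) {t : ℝ} (hu : HasDerivAt u u' t) :
    HasDerivAt (fun s => ‖u s - z‖ ^ 2) (2 * ⟪u t - z, u'⟫) t := by
  have h := HasDerivAt.inner ℝ (hu.sub_const z) (hu.sub_const z)
  have h2 : (fun s => ⟪u s - z, u s - z⟫) = fun s => ‖u s - z‖ ^ 2 := by
    funext s; exact real_inner_self_eq_norm_sq _
  rw [h2] at h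
  have e : ⟪u t - z, u'⟫ + ⟪u', u t - z⟫ = 2 * ⟪u t - z, u'⟫ := by
    rw [real_inner_comm u' (u t - z)]; ring
  rw [e] at h
  exact h

/-- Key Lyapunov estimate for the rescaled IC-PDPS ODE without any equation imposed
on the parameters `φ, ψ, θ` beyond positivity and differentiability. -/
theorem stmt_15
    {X Y : Type*} [NormedAddCommGroup X] [InnerProductSpace ℝ X] [CompleteSpace X]
    [NormedAddCommGroup Y] [InnerProductSpace ℝ Y] [CompleteSpace Y]
    (K : X →L[ℝ] Y) (γ ρ : ℝ) (hγ : 0 ≤ γ) (hρ : 0 ≤ ρ)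
    (G : X → ℝ) (Fs : Y → ℝ) (G' : X → X) (Fs' : Y → Y)
    (hG : ∀ p, HasGradientAt G (G' p) p)
    (hFs : ∀ q, HasGradientAt Fs (Fs' q) q)
    (hGconv : ConvexOn ℝ Set.univ (fun p => G p - γ / 2 * ‖p‖ ^ 2))
    (hFconv : ConvexOn ℝ Set.univ (fun q => Fs q - ρ / 2 * ‖q‖ ^ 2))
    (xhat : X) (yhat : Y)
    (hsadx : G' xhat + ContinuousLinearMap.adjoint K yhat = 0)
    (hsady : Fs' yhat - K xhat = 0)
    (Lhat : X → Y → ℝ)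
    (hLhat : ∀ p q, Lhat p q
      = G p - γ / 2 * ‖p - xhat‖ ^ 2 + ⟪K p, q⟫ - Fs q + ρ / 2 * ‖q - yhat‖ ^ 2)
    (x ζ : ℝ → X) (y η : ℝ → Y) (φ ψ θ : ℝ → ℝ)
    (hφpos : ∀ t, 0 ≤ t → 0 < φ t) (hψpos : ∀ t, 0 ≤ t → 0 < ψ t)
    (hθpos : ∀ t, 0 ≤ t → 0 < θ t)
    (hx : ∀ t, 0 ≤ t → HasDerivAt x (ζ t - x t) t)
    (hy : ∀ t, 0 ≤ t → HasDerivAt y (η t - y t) t)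
    (hζ : ∀ t, 0 ≤ t → HasDerivAt ζ
      ((θ t / φ t) • (γ • (x t - ζ t) - G' (x t) - ContinuousLinearMap.adjoint K (η t))) t)
    (hη : ∀ t, 0 ≤ t → HasDerivAt η
      ((θ t / ψ t) • (ρ • (y t - η t) - Fs' (y t) + K (ζ t))) t)
    (hφd : ∀ t, 0 ≤ t → DifferentiableAt ℝ φ t)
    (hψd : ∀ t, 0 ≤ t → DifferentiableAt ℝ ψ t)
    (hθd : ∀ t, 0 ≤ t → DifferentiableAt ℝ θ t)
    (E : ℝ → ℝ)
    (hE : ∀ t, E t = θ t * (Lhat (x t) yhat - Lhat xhat (y t))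
      + 1 / 2 * φ t * ‖ζ t - xhat‖ ^ 2 + 1 / 2 * ψ t * ‖η t - yhat‖ ^ 2)
    :
    ∀ t, 0 ≤ t →
      deriv E t ≤ (deriv θ t - θ t) * (Lhat (x t) yhat - Lhat xhat (y t))
        + 1 / 2 * (deriv φ t - 2 * γ * θ t) * ‖ζ t - xhat‖ ^ 2
        + 1 / 2 * (deriv ψ t - 2 * ρ * θ t) * ‖η t - yhat‖ ^ 2 := by
  intro t ht
  have hθt := hθpos t ht
  have hφt := hφpos t ht
  have hψt := hψpos t ht
  have dx := hx t ht
  have dy := hy t ht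
  have dz := hζ t ht
  have de := hη t ht
  have dθ := (hθd t ht).hasDerivAt
  have dφ := (hφd t ht).hasDerivAt
  have dψ := (hψd t ht).hasDerivAt
  set vx : X := γ • (x t - ζ t) - G' (x t) - ContinuousLinearMap.adjoint K (η t) with hvx
  set vy : Y := ρ • (y t - η t) - Fs' (y t) + K (ζ t) with hvy
  -- elementary derivatives
  have dG : HasDerivAt (fun s => G (x s)) ⟪G' (x t), ζ t - x t⟫ t := by
    have h := (hG (x t)).hasFDerivAt.comp_hasDerivAt t dx
    simp only [InnerProductSpace.toDual_apply_apply] at h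
    exact h
  have dF : HasDerivAt (fun s => Fs (y s)) ⟪Fs' (y t), η t - y t⟫ t := by
    have h := (hFs (y t)).hasFDerivAt.comp_hasDerivAt t dy
    simp only [InnerProductSpace.toDual_apply_apply] at h
    exact h
  have dXn := sq_deriv xhat dx
  have dYn := sq_deriv yhat dy
  have dZn := sq_deriv xhat dz
  have dEn := sq_deriv yhat de
  have dKx : HasDerivAt (fun s => ⟪K (x s), yhat⟫) ⟪K (ζ t - x t), yhat⟫ t := by
    have hk : HasDerivAt (fun s => K (x s)) (K (ζ t - x t)) t :=
      (K.hasFDerivAt).comp_hasDerivAt t dx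
    simpa using HasDerivAt.inner ℝ hk (hasDerivAt_const t yhat)
  have dKy : HasDerivAt (fun s => ⟪K xhat, y s⟫) ⟪K xhat, η t - y t⟫ t := by
    simpa using HasDerivAt.inner ℝ (hasDerivAt_const t (K xhat)) dy
  -- the value function V
  have hVf : (fun s => Lhat (x s) yhat - Lhat xhat (y s)) = fun s =>
      (G (x s) - γ / 2 * ‖x s - xhat‖ ^ 2 + ⟪K (x s), yhat⟫ - Fs yhat
          + ρ / 2 * ‖yhat - yhat‖ ^ 2)
        - (G xhat - γ / 2 * ‖xhat - xhat‖ ^ 2 + ⟪K xhat, y s⟫ - Fs (y s)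
          + ρ / 2 * ‖y s - yhat‖ ^ 2) := by
    funext s; rw [hLhat, hLhat]
  have dV : HasDerivAt (fun s => Lhat (x s) yhat - Lhat xhat (y s))
      ((⟪G' (x t), ζ t - x t⟫ - γ / 2 * (2 * ⟪x t - xhat, ζ t - x t⟫)
          + ⟪K (ζ t - x t), yhat⟫)
        - (⟪K xhat, η t - y t⟫ - ⟪Fs' (y t), η t - y t⟫
          + ρ / 2 * (2 * ⟪y t - yhat, η t - y t⟫))) t := by
    rw [hVf]
    have h1 := (((dG.sub (dXn.const_mul (γ / 2))).add dKx).sub_const (Fs yhat)).add_const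
        (ρ / 2 * ‖yhat - yhat‖ ^ 2)
    have h2 := (((hasDerivAt_const t (G xhat - γ / 2 * ‖xhat - xhat‖ ^ 2)).add dKy).sub dF).add
        (dYn.const_mul (ρ / 2))
    convert h1.sub h2 using 1
    · rfl
    · rfl
    · rfl
    · ring
  -- whole energy derivative
  have hEfun : E = fun s => θ s * (Lhat (x s) yhat - Lhat xhat (y s))
      + 1 / 2 * (φ s * ‖ζ s - xhat‖ ^ 2) + 1 / 2 * (ψ s * ‖η s - yhat‖ ^ 2) := by
    funext s; rw [hE s]; ring
  have hDE : HasDerivAt E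
      ((deriv θ t * (Lhat (x t) yhat - Lhat xhat (y t))
          + θ t * ((⟪G' (x t), ζ t - x t⟫ - γ / 2 * (2 * ⟪x t - xhat, ζ t - x t⟫)
              + ⟪K (ζ t - x t), yhat⟫)
            - (⟪K xhat, η t - y t⟫ - ⟪Fs' (y t), η t - y t⟫
              + ρ / 2 * (2 * ⟪y t - yhat, η t - y t⟫))))
        + 1 / 2 * (deriv φ t * ‖ζ t - xhat‖ ^ 2
            + φ t * (2 * ⟪ζ t - xhat, (θ t / φ t) • vx⟫))
        + 1 / 2 * (deriv ψ t * ‖η t - yhat‖ ^ 2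
            + ψ t * (2 * ⟪η t - yhat, (θ t / ψ t) • vy⟫))) t := by
    rw [hEfun]
    exact ((dθ.mul dV).add ((dφ.mul dZn).const_mul (1 / 2))).add
      ((dψ.mul dEn).const_mul (1 / 2))
  rw [hDE.deriv]
  -- scalar simplifications of the smul inner products
  have hzc : φ t * ⟪ζ t - xhat, (θ t / φ t) • vx⟫ = θ t * ⟪ζ t - xhat, vx⟫ := by
    rw [real_inner_smul_right]
    field_simp
  have hec : ψ t * ⟪η t - yhat, (θ t / ψ t) • vy⟫ = θ t * ⟪η t - yhat, vy⟫ := by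
    rw [real_inner_smul_right]
    field_simp
  -- strong convexity (Bregman nonnegativity)
  have HBx := strong_support G G' γ hG hGconv (x t) xhat
  have HBy := strong_support Fs Fs' ρ hFs hFconv (y t) yhat
  -- the key algebraic identity
  have hQ : ((⟪G' (x t), ζ t - x t⟫ - γ / 2 * (2 * ⟪x t - xhat, ζ t - x t⟫)
          + ⟪K (ζ t - x t), yhat⟫)
        - (⟪K xhat, η t - y t⟫ - ⟪Fs' (y t), η t - y t⟫
          + ρ / 2 * (2 * ⟪y t - yhat, η t - y t⟫)))
      + ((G (x t) - γ / 2 * ‖x t - xhat‖ ^ 2 + ⟪K (x t), yhat⟫ - Fs yhat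
          + ρ / 2 * ‖yhat - yhat‖ ^ 2)
        - (G xhat - γ / 2 * ‖xhat - xhat‖ ^ 2 + ⟪K xhat, y t⟫ - Fs (y t)
          + ρ / 2 * ‖y t - yhat‖ ^ 2))
      + ⟪ζ t - xhat, vx⟫ + ⟪η t - yhat, vy⟫
      + γ * ‖ζ t - xhat‖ ^ 2 + ρ * ‖η t - yhat‖ ^ 2
      = -((G xhat - G (x t) - ⟪G' (x t), xhat - x t⟫ - γ / 2 * ‖xhat - x t‖ ^ 2)
        + (Fs yhat - Fs (y t) - ⟪Fs' (y t), yhat - y t⟫ - ρ / 2 * ‖yhat - y t‖ ^ 2)) := by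
    simp only [hvx, hvy, ← real_inner_self_eq_norm_sq, map_sub, inner_sub_left,
      inner_sub_right, inner_add_left, inner_add_right, real_inner_smul_left,
      real_inner_smul_right, ContinuousLinearMap.adjoint_inner_right]
    simp only [real_inner_comm (ζ t) (G' (x t)), real_inner_comm (xhat) (G' (x t)),
      real_inner_comm (x t) (ζ t), real_inner_comm (xhat) (ζ t), real_inner_comm (xhat) (x t),
      real_inner_comm (η t) (K (ζ t)), real_inner_comm (yhat) (K (ζ t)),
      real_inner_comm (η t) (Fs' (y t)), real_inner_comm (yhat) (Fs' (y t)),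
      real_inner_comm (y t) (η t), real_inner_comm (yhat) (η t), real_inner_comm (yhat) (y t)]
    ring
  -- finish
  rw [hLhat, hLhat]
  have hθQ : θ t * (((⟪G' (x t), ζ t - x t⟫ - γ / 2 * (2 * ⟪x t - xhat, ζ t - x t⟫)
          + ⟪K (ζ t - x t), yhat⟫)
        - (⟪K xhat, η t - y t⟫ - ⟪Fs' (y t), η t - y t⟫
          + ρ / 2 * (2 * ⟪y t - yhat, η t - y t⟫)))
      + ((G (x t) - γ / 2 * ‖x t - xhat‖ ^ 2 + ⟪K (x t), yhat⟫ - Fs yhat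
          + ρ / 2 * ‖yhat - yhat‖ ^ 2)
        - (G xhat - γ / 2 * ‖xhat - xhat‖ ^ 2 + ⟪K xhat, y t⟫ - Fs (y t)
          + ρ / 2 * ‖y t - yhat‖ ^ 2))
      + ⟪ζ t - xhat, vx⟫ + ⟪η t - yhat, vy⟫
      + γ * ‖ζ t - xhat‖ ^ 2 + ρ * ‖η t - yhat‖ ^ 2)
      = θ t * (-((G xhat - G (x t) - ⟪G' (x t), xhat - x t⟫ - γ / 2 * ‖xhat - x t‖ ^ 2)
        + (Fs yhat - Fs (y t) - ⟪Fs' (y t), yhat - y t⟫ - ρ / 2 * ‖yhat - y t‖ ^ 2))) := by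
    rw [hQ]
  have hb1 : 0 ≤ θ t * (G xhat - G (x t) - ⟪G' (x t), xhat - x t⟫
      - γ / 2 * ‖xhat - x t‖ ^ 2) := by
    have : 0 ≤ G xhat - G (x t) - ⟪G' (x t), xhat - x t⟫ - γ / 2 * ‖xhat - x t‖ ^ 2 := by
      linarith
    exact mul_nonneg hθt.le this
  have hb2 : 0 ≤ θ t * (Fs yhat - Fs (y t) - ⟪Fs' (y t), yhat - y t⟫
      - ρ / 2 * ‖yhat - y t‖ ^ 2) := by
    have : 0 ≤ Fs yhat - Fs (y t) - ⟪Fs' (y t), yhat - y t⟫ - ρ / 2 * ‖yhat - y t‖ ^ 2 := by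
      linarith
    exact mul_nonneg hθt.le this
  nlinarith [hθQ, hb1, hb2, hzc, hec]
end

section
/- Assume in addition that the parameters satisfy the relaxed inequalities φ'(t) ≤ 2γθ(t), ψ'(t) ≤ 2ρθ(t) and θ'(t) ≤ θ(t) for all t ≥ 0. Then the Lyapunov function is still nonincreasing: (d/dt)E(t) ≤ 0 for all t ≥ 0, and hence E(t) ≤ E(0). -/
open scoped RealInnerProductSpace

section AuxPDPS

variable {X : Type*} [NormedAddCommGroup X] [InnerProductSpace ℝ X] [CompleteSpace X]

lemma aux_grad_ineq {f : X → ℝ} {f' : X → X} (hf : ∀ p, HasGradientAt f (f' p) p)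
    (hc : ConvexOn ℝ Set.univ f) (a b : X) : ⟪f' a, b - a⟫ ≤ f b - f a := by
  set L : ℝ →ᵃ[ℝ] X := AffineMap.lineMap a b with hL
  have hline : ∀ s : ℝ, HasDerivAt (fun u : ℝ => L u) (b - a) s := by
    intro s
    have h1 : HasDerivAt (fun u : ℝ => (1 - u) • a + u • b) (b - a) s := by
      have h2 := (((hasDerivAt_const s (1:ℝ)).sub (hasDerivAt_id s)).smul_const a).add
        ((hasDerivAt_id s).smul_const b)
      refine h2.congr_deriv ?_
      module
    have heq : (fun u : ℝ => L u) = fun u => (1 - u) • a + u • b :=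
      funext fun u => by rw [hL]; exact AffineMap.lineMap_apply_module a b u
    rw [heq]; exact h1
  have hg : HasDerivAt (fun s : ℝ => f (L s)) ⟪f' (L 0), b - a⟫ 0 := by
    have h := (hasGradientAt_iff_hasFDerivAt.mp (hf (L 0))).comp_hasDerivAt 0 (hline 0)
    exact h
  have hconv : ConvexOn ℝ Set.univ (f ∘ L) := by
    have := hc.comp_affineMap L
    simpa using this
  have hs := hconv.le_slope_of_hasDerivAt (Set.mem_univ (0:ℝ)) (Set.mem_univ (1:ℝ))
    zero_lt_one hg
  have h0 : L (0:ℝ) = a := AffineMap.lineMap_apply_zero a b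
  have h1 : L (1:ℝ) = b := AffineMap.lineMap_apply_one a b
  rw [slope_def_field] at hs
  simp only [Function.comp, h0, h1] at hs
  simpa using hs

lemma aux_strong_grad {f : X → ℝ} {f' : X → X} {γ : ℝ} (hf : ∀ p, HasGradientAt f (f' p) p)
    (hc : ConvexOn ℝ Set.univ (fun p => f p - γ / 2 * ‖p‖ ^ 2)) (a b : X) :
    ⟪f' a, b - a⟫ + γ / 2 * ‖b - a‖ ^ 2 ≤ f b - f a := by
  have hg : ∀ p : X, HasGradientAt (fun q => f q - γ / 2 * ‖q‖ ^ 2) (f' p - γ • p) p := by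
    intro p
    rw [hasGradientAt_iff_hasFDerivAt]
    have hsq : HasFDerivAt (fun q : X => ⟪q, q⟫)
        ((fderivInnerCLM ℝ (p, p)).comp ((ContinuousLinearMap.id ℝ X).prod
          (ContinuousLinearMap.id ℝ X))) p :=
      (hasFDerivAt_id p).inner ℝ (hasFDerivAt_id p)
    have h2 : HasFDerivAt (fun q : X => f q - γ / 2 * ⟪q, q⟫)
        ((InnerProductSpace.toDual ℝ X) (f' p) - (γ / 2) •
          ((fderivInnerCLM ℝ (p, p)).comp ((ContinuousLinearMap.id ℝ X).prod
          (ContinuousLinearMap.id ℝ X)))) p :=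
      (hasGradientAt_iff_hasFDerivAt.mp (hf p)).sub (hsq.const_mul (γ / 2))
    have heq : (fun q : X => f q - γ / 2 * ⟪q, q⟫) = fun q : X => f q - γ / 2 * ‖q‖ ^ 2 := by
      funext q; rw [real_inner_self_eq_norm_sq]
    rw [heq] at h2
    refine h2.congr_fderiv ?_
    apply ContinuousLinearMap.ext
    intro v
    simp [InnerProductSpace.toDual_apply_apply, inner_sub_left, real_inner_smul_left,
      real_inner_comm p v]
    ring
  have h := aux_grad_ineq hg hc a b
  rw [inner_sub_left, real_inner_smul_left, inner_sub_right] at h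
  rw [inner_sub_right a b a] at h
  rw [inner_sub_right (f' a) b a, norm_sub_sq_real b a, real_inner_comm a b]
  rw [real_inner_self_eq_norm_sq a] at h
  linarith [h]

lemma aux_norm_sq_deriv {u : ℝ → X} {u' : X} {t : ℝ} (h : HasDerivAt u u' t) (c : X) :
    HasDerivAt (fun s => ‖u s - c‖ ^ 2) (2 * ⟪u t - c, u'⟫) t := by
  have h1 := (h.sub_const c).inner ℝ (h.sub_const c)
  have heq : (fun s => ‖u s - c‖ ^ 2) = fun s => ⟪u s - c, u s - c⟫ := by
    funext s; rw [real_inner_self_eq_norm_sq]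
  rw [heq]
  refine h1.congr_deriv ?_
  rw [real_inner_comm u' (u t - c)]
  ring

end AuxPDPS

set_option maxHeartbeats 2000000 in
/-- With the relaxed parameter inequalities `φ′ ≤ 2γθ`, `ψ′ ≤ 2ρθ`, `θ′ ≤ θ`,
the Lyapunov function of the rescaled IC-PDPS ODE is still nonincreasing. -/
theorem stmt_16
    {X Y : Type*} [NormedAddCommGroup X] [InnerProductSpace ℝ X] [CompleteSpace X]
    [NormedAddCommGroup Y] [InnerProductSpace ℝ Y] [CompleteSpace Y]
    (K : X →L[ℝ] Y) (γ ρ : ℝ) (hγ : 0 ≤ γ) (hρ : 0 ≤ ρ)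
    (G : X → ℝ) (Fs : Y → ℝ) (G' : X → X) (Fs' : Y → Y)
    (hG : ∀ p, HasGradientAt G (G' p) p)
    (hFs : ∀ q, HasGradientAt Fs (Fs' q) q)
    (hGconv : ConvexOn ℝ Set.univ (fun p => G p - γ / 2 * ‖p‖ ^ 2))
    (hFconv : ConvexOn ℝ Set.univ (fun q => Fs q - ρ / 2 * ‖q‖ ^ 2))
    (xhat : X) (yhat : Y)
    (hsadx : G' xhat + ContinuousLinearMap.adjoint K yhat = 0)
    (hsady : Fs' yhat - K xhat = 0)
    (Lhat : X → Y → ℝ)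
    (hLhat : ∀ p q, Lhat p q
      = G p - γ / 2 * ‖p - xhat‖ ^ 2 + ⟪K p, q⟫ - Fs q + ρ / 2 * ‖q - yhat‖ ^ 2)
    (x ζ : ℝ → X) (y η : ℝ → Y) (φ ψ θ : ℝ → ℝ)
    (hφpos : ∀ t, 0 ≤ t → 0 < φ t) (hψpos : ∀ t, 0 ≤ t → 0 < ψ t)
    (hθpos : ∀ t, 0 ≤ t → 0 < θ t)
    (hx : ∀ t, 0 ≤ t → HasDerivAt x (ζ t - x t) t)
    (hy : ∀ t, 0 ≤ t → HasDerivAt y (η t - y t) t)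
    (hζ : ∀ t, 0 ≤ t → HasDerivAt ζ
      ((θ t / φ t) • (γ • (x t - ζ t) - G' (x t) - ContinuousLinearMap.adjoint K (η t))) t)
    (hη : ∀ t, 0 ≤ t → HasDerivAt η
      ((θ t / ψ t) • (ρ • (y t - η t) - Fs' (y t) + K (ζ t))) t)
    (hφd : ∀ t, 0 ≤ t → DifferentiableAt ℝ φ t)
    (hψd : ∀ t, 0 ≤ t → DifferentiableAt ℝ ψ t)
    (hθd : ∀ t, 0 ≤ t → DifferentiableAt ℝ θ t)
    (hφ' : ∀ t, 0 ≤ t → deriv φ t ≤ 2 * γ * θ t)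
    (hψ' : ∀ t, 0 ≤ t → deriv ψ t ≤ 2 * ρ * θ t)
    (hθ' : ∀ t, 0 ≤ t → deriv θ t ≤ θ t)
    (E : ℝ → ℝ)
    (hE : ∀ t, E t = θ t * (Lhat (x t) yhat - Lhat xhat (y t))
      + 1 / 2 * φ t * ‖ζ t - xhat‖ ^ 2 + 1 / 2 * ψ t * ‖η t - yhat‖ ^ 2)
    :
    (∀ t, 0 ≤ t → deriv E t ≤ 0) ∧ (∀ t, 0 ≤ t → E t ≤ E 0) := by
  have hEfun : E = fun s => θ s * ((G (x s) - γ / 2 * ‖x s - xhat‖ ^ 2 + ⟪K (x s), yhat⟫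
        - Fs yhat + ρ / 2 * ‖yhat - yhat‖ ^ 2)
      - (G xhat - γ / 2 * ‖xhat - xhat‖ ^ 2 + ⟪K xhat, y s⟫ - Fs (y s)
        + ρ / 2 * ‖y s - yhat‖ ^ 2))
      + 1 / 2 * φ s * ‖ζ s - xhat‖ ^ 2 + 1 / 2 * ψ s * ‖η s - yhat‖ ^ 2 :=
    funext fun s => by rw [hE s, hLhat, hLhat]
  have key : ∀ t, 0 ≤ t → ∃ D : ℝ, HasDerivAt E D t ∧ D ≤ 0 := by
    intro t ht
    have hφt := (hφd t ht).hasDerivAt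
    have hψt := (hψd t ht).hasDerivAt
    have hθt := (hθd t ht).hasDerivAt
    have hGx : HasDerivAt (fun s => G (x s)) ⟪G' (x t), ζ t - x t⟫ t := by
      exact
        (hasGradientAt_iff_hasFDerivAt.mp (hG (x t))).comp_hasDerivAt t (hx t ht)
    have hFy : HasDerivAt (fun s => Fs (y s)) ⟪Fs' (y t), η t - y t⟫ t := by
      exact
        (hasGradientAt_iff_hasFDerivAt.mp (hFs (y t))).comp_hasDerivAt t (hy t ht)
    have hnx := aux_norm_sq_deriv (hx t ht) xhat
    have hny := aux_norm_sq_deriv (hy t ht) yhat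
    have hA := aux_norm_sq_deriv (hζ t ht) xhat
    have hB := aux_norm_sq_deriv (hη t ht) yhat
    have hKx : HasDerivAt (fun s => ⟪K (x s), yhat⟫) ⟪K (ζ t - x t), yhat⟫ t := by
      have h0 : HasDerivAt (fun s => K (x s)) (K (ζ t - x t)) t :=
        K.hasFDerivAt.comp_hasDerivAt t (hx t ht)
      simpa using h0.inner ℝ (hasDerivAt_const t yhat)
    have hKy : HasDerivAt (fun s => ⟪K xhat, y s⟫) ⟪K xhat, η t - y t⟫ t := by
      simpa using (hasDerivAt_const t (K xhat)).inner ℝ (hy t ht)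
    have hL1 : HasDerivAt (fun s => G (x s) - γ / 2 * ‖x s - xhat‖ ^ 2 + ⟪K (x s), yhat⟫
        - Fs yhat + ρ / 2 * ‖yhat - yhat‖ ^ 2)
        (⟪G' (x t), ζ t - x t⟫ - γ / 2 * (2 * ⟪x t - xhat, ζ t - x t⟫)
          + ⟪K (ζ t - x t), yhat⟫) t := by
      exact (((hGx.sub (hnx.const_mul (γ/2))).add hKx).sub_const (Fs yhat)).add_const
        (ρ / 2 * ‖yhat - yhat‖ ^ 2)
    have hL2 : HasDerivAt (fun s => G xhat - γ / 2 * ‖xhat - xhat‖ ^ 2 + ⟪K xhat, y s⟫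
        - Fs (y s) + ρ / 2 * ‖y s - yhat‖ ^ 2)
        (⟪K xhat, η t - y t⟫ - ⟪Fs' (y t), η t - y t⟫
          + ρ / 2 * (2 * ⟪y t - yhat, η t - y t⟫)) t := by
      have hc0 := (((hasDerivAt_const t (G xhat - γ / 2 * ‖xhat - xhat‖ ^ 2)).add hKy).sub
        hFy).add (hny.const_mul (ρ/2))
      rw [zero_add] at hc0
      exact hc0
    have hEd := ((hθt.mul (hL1.sub hL2)).add ((hφt.const_mul (1/2)).mul hA)).add
      ((hψt.const_mul (1/2)).mul hB)
    replace hEd := hEd.congr_of_eventuallyEq (f₁ := E)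
      (Filter.Eventually.of_forall fun s => (congrFun hEfun s).trans rfl)
    simp only [Pi.sub_apply] at hEd
    refine ⟨_, hEd, ?_⟩
    have hφ0 : φ t ≠ 0 := (hφpos t ht).ne'
    have hψ0 : ψ t ≠ 0 := (hψpos t ht).ne'
    have hw : 1 / 2 * φ t * (2 * ⟪ζ t - xhat,
        (θ t / φ t) • (γ • (x t - ζ t) - G' (x t) - ContinuousLinearMap.adjoint K (η t))⟫)
        = θ t * ⟪ζ t - xhat,
          γ • (x t - ζ t) - G' (x t) - ContinuousLinearMap.adjoint K (η t)⟫ := by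
      rw [real_inner_smul_right]; field_simp
    have hv : 1 / 2 * ψ t * (2 * ⟪η t - yhat,
        (θ t / ψ t) • (ρ • (y t - η t) - Fs' (y t) + K (ζ t))⟫)
        = θ t * ⟪η t - yhat, ρ • (y t - η t) - Fs' (y t) + K (ζ t)⟫ := by
      rw [real_inner_smul_right]; field_simp
    rw [hw, hv]
    simp only [sub_self, norm_zero, ne_eq, OfNat.ofNat_ne_zero, not_false_eq_true,
      zero_pow, mul_zero, add_zero, sub_zero]
    -- convexity facts
    have hsg1 := aux_strong_grad hG hGconv (x t) xhat
    have hsf1 := aux_strong_grad hFs hFconv (y t) yhat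
    have hsg2 := aux_strong_grad hG hGconv xhat (x t)
    have hsf2 := aux_strong_grad hFs hFconv yhat (y t)
    rw [eq_neg_of_add_eq_zero_left hsadx] at hsg2
    rw [sub_eq_zero.mp hsady] at hsf2
    rw [inner_neg_left, ContinuousLinearMap.adjoint_inner_left, map_sub, inner_sub_right,
      real_inner_comm (K (x t)) yhat, real_inner_comm (K xhat) yhat] at hsg2
    rw [inner_sub_right] at hsf2
    set A := ‖ζ t - xhat‖ ^ 2 with hAdef
    set B := ‖η t - yhat‖ ^ 2 with hBdef
    set l0 : ℝ := (G (x t) - γ / 2 * ‖x t - xhat‖ ^ 2 + ⟪K (x t), yhat⟫ - Fs yhat)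
      - (G xhat + ⟪K xhat, y t⟫ - Fs (y t) + ρ / 2 * ‖y t - yhat‖ ^ 2) with hl0def
    have hl0 : 0 ≤ l0 := by rw [hl0def]; linarith [hsg2, hsf2]
    have hMT : (⟪G' (x t), ζ t - x t⟫ - γ / 2 * (2 * ⟪x t - xhat, ζ t - x t⟫)
          + ⟪K (ζ t - x t), yhat⟫
          - (⟪K xhat, η t - y t⟫ - ⟪Fs' (y t), η t - y t⟫
            + ρ / 2 * (2 * ⟪y t - yhat, η t - y t⟫)))
        + ⟪ζ t - xhat, γ • (x t - ζ t) - G' (x t) - ContinuousLinearMap.adjoint K (η t)⟫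
        + ⟪η t - yhat, ρ • (y t - η t) - Fs' (y t) + K (ζ t)⟫
        ≤ -l0 - γ * A - ρ * B := by
      rw [norm_sub_rev, inner_sub_right] at hsg1
      rw [norm_sub_rev, inner_sub_right] at hsf1
      rw [hl0def, hAdef, hBdef]
      simp only [map_sub, inner_sub_left, inner_sub_right, inner_add_right,
        real_inner_smul_right, ContinuousLinearMap.adjoint_inner_right,
        norm_sub_sq_real]
      rw [norm_sub_sq_real (x t) xhat] at hsg1
      rw [norm_sub_sq_real (y t) yhat] at hsf1
      rw [real_inner_comm xhat (x t)] at hsg1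
      rw [real_inner_comm yhat (y t)] at hsf1
      rw [real_inner_comm (x t) (ζ t), real_inner_comm (G' (x t)) (ζ t),
        real_inner_comm (G' (x t)) xhat, real_inner_comm xhat (x t),
        real_inner_comm xhat (ζ t), real_inner_self_eq_norm_sq (x t),
        real_inner_self_eq_norm_sq (ζ t), real_inner_comm (y t) (η t),
        real_inner_comm (Fs' (y t)) (η t), real_inner_comm (Fs' (y t)) yhat,
        real_inner_comm yhat (y t), real_inner_comm yhat (η t),
        real_inner_comm (K (ζ t)) (η t), real_inner_comm (K (ζ t)) yhat,
        real_inner_self_eq_norm_sq (y t), real_inner_self_eq_norm_sq (η t)]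
      linarith [hsg1, hsf1]
    have P1 := mul_le_mul_of_nonneg_left hMT (hθpos t ht).le
    have P2 := mul_le_mul_of_nonneg_right (hθ' t ht) hl0
    have P3 := mul_le_mul_of_nonneg_right (hφ' t ht) (sq_nonneg ‖ζ t - xhat‖)
    have P4 := mul_le_mul_of_nonneg_right (hψ' t ht) (sq_nonneg ‖η t - yhat‖)
    rw [← hAdef] at P3
    rw [← hBdef] at P4
    clear_value A B l0
    linarith [P1, P2, P3, P4]
  constructor
  · intro t ht
    obtain ⟨D, hD, hD0⟩ := key t ht
    rw [hD.deriv]; exact hD0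
  · intro t ht
    have hanti : AntitoneOn E (Set.Ici 0) := by
      apply antitoneOn_of_deriv_nonpos (convex_Ici 0)
      · intro s hs
        exact ((key s hs).choose_spec.1).differentiableAt.continuousAt.continuousWithinAt
      · intro s hs
        rw [interior_Ici] at hs
        exact ((key s (le_of_lt hs)).choose_spec.1).differentiableAt.differentiableWithinAt
      · intro s hs
        rw [interior_Ici] at hs
        obtain ⟨D, hD, hD0⟩ := key s (le_of_lt hs)
        rw [hD.deriv]; exact hD0
    exact hanti (Set.self_mem_Ici) (Set.mem_Ici.mpr ht) ht
end

section
/- Assume in addition that φ'(t) = 2γθ(t), ψ'(t) = 2ρθ(t) and θ'(t) = θ(t) for all t ≥ 0. Then the parameters are given explicitly by θ(t) = θ(0)·e^t, φ(t) = φ(0) + 2γθ(0)(e^t − 1), ψ(t) = ψ(0) + 2ρθ(0)(e^t − 1), and the Lagrangian gap decays exponentially: L̂(x(t), ŷ) − L̂(x̂, y(t)) ≤ (E(0)/θ(0))·e^{−t} for all t ≥ 0. -/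
open scoped RealInnerProductSpace

private lemma convex_fderiv_le {X : Type*} [NormedAddCommGroup X] [InnerProductSpace ℝ X]
    {h : X → ℝ} (hc : ConvexOn ℝ Set.univ h) {p : X} {L : X →L[ℝ] ℝ}
    (hg : HasFDerivAt h L p) (q : X) : h p + L (q - p) ≤ h q := by
  have hline : HasDerivAt (fun s : ℝ => p + s • (q - p)) (q - p) 0 := by
    simpa using ((hasDerivAt_id (0:ℝ)).smul_const (q - p)).const_add p
  have hg' : HasFDerivAt h L (p + (0:ℝ) • (q - p)) := by simpa using hg
  have hf : HasDerivAt (fun s : ℝ => h (p + s • (q - p))) (L (q - p)) 0 :=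
    hg'.comp_hasDerivAt 0 hline
  have hslope := hasDerivAt_iff_tendsto_slope.mp hf
  have h2 : Filter.Tendsto (slope (fun s : ℝ => h (p + s • (q - p))) 0) (nhdsWithin 0 (Set.Ioi 0))
      (nhds (L (q - p))) :=
    hslope.mono_left (nhdsWithin_mono 0 fun s hs => Set.mem_compl_singleton_iff.2 (ne_of_gt hs))
  have hev : ∀ᶠ s in nhdsWithin (0:ℝ) (Set.Ioi 0),
      slope (fun s : ℝ => h (p + s • (q - p))) 0 s ≤ h q - h p := by
    filter_upwards [Ioc_mem_nhdsGT_of_mem (Set.left_mem_Ico.mpr one_pos)] with s hs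
    have hs0 : (0:ℝ) < s := hs.1
    have hs1 : s ≤ 1 := hs.2
    have hcv := hc.2 (Set.mem_univ p) (Set.mem_univ q) (by linarith : (0:ℝ) ≤ 1 - s) hs0.le
      (by ring)
    have hpt : p + s • (q - p) = (1 - s) • p + s • q := by module
    rw [slope_def_field]
    rw [hpt]
    have : h ((1 - s) • p + s • q) ≤ (1 - s) * h p + s * h q := by simpa using hcv
    rw [div_le_iff₀ (by simpa using hs0)]
    simp only [sub_zero, zero_smul, add_zero, smul_eq_mul] at *
    nlinarith
  have := le_of_tendsto h2 hev
  linarith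

private lemma strong_convex_ineq {X : Type*} [NormedAddCommGroup X] [InnerProductSpace ℝ X]
    [CompleteSpace X]
    {h : X → ℝ} {γ : ℝ} (hc : ConvexOn ℝ Set.univ (fun p => h p - γ / 2 * ‖p‖ ^ 2))
    {h' : X → X} (hg : ∀ p, HasGradientAt h (h' p) p) (p q : X) :
    h p + ⟪h' p, q - p⟫ + γ / 2 * ‖q - p‖ ^ 2 ≤ h q := by
  have hn : HasFDerivAt (fun v : X => γ / 2 * ‖v‖ ^ 2) ((γ / 2) • (2 • (innerSL ℝ p))) p := by
    exact (hasStrictFDerivAt_norm_sq p).hasFDerivAt.const_smul (γ / 2)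
  have hH : HasFDerivAt (fun v => h v - γ / 2 * ‖v‖ ^ 2)
      (InnerProductSpace.toDual ℝ X (h' p) - (γ / 2) • (2 • (innerSL ℝ p))) p :=
    (hg p).sub hn
  have := convex_fderiv_le hc hH q
  simp only [ContinuousLinearMap.sub_apply, ContinuousLinearMap.smul_apply, innerSL_apply_apply,
    InnerProductSpace.toDual_apply_apply, smul_eq_mul, nsmul_eq_mul, Nat.cast_ofNat] at this
  have hns : ‖q - p‖ ^ 2 = ‖q‖ ^ 2 - 2 * ⟪q, p⟫ + ‖p‖ ^ 2 := norm_sub_sq_real q p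
  have hip : ⟪p, q - p⟫ = ⟪p, q⟫ - ‖p‖ ^ 2 := by
    rw [inner_sub_right, real_inner_self_eq_norm_sq]
  have hsym : ⟪p, q⟫ = ⟪q, p⟫ := real_inner_comm q p
  rw [hip, hsym] at this
  rw [hns]
  linarith

private lemma const_of_deriv_zero {f : ℝ → ℝ} (hf : ∀ u, 0 ≤ u → HasDerivAt f 0 u)
    {s : ℝ} (hs : 0 ≤ s) : f s = f 0 := by
  have hcont : ContinuousOn f (Set.Icc 0 s) := fun u hu =>
    ((hf u hu.1).continuousAt).continuousWithinAt
  exact constant_of_has_deriv_right_zero hcont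
    (fun u hu => (hf u hu.1).hasDerivWithinAt) s (Set.right_mem_Icc.mpr hs)

set_option maxHeartbeats 1000000 in
/-- With the parameter equations `φ′ = 2γθ`, `ψ′ = 2ρθ`, `θ′ = θ`, the parameters of
the rescaled IC-PDPS ODE are explicit exponentials and the Lagrangian gap decays
exponentially. -/
theorem stmt_17
    {X Y : Type*} [NormedAddCommGroup X] [InnerProductSpace ℝ X] [CompleteSpace X]
    [NormedAddCommGroup Y] [InnerProductSpace ℝ Y] [CompleteSpace Y]
    (K : X →L[ℝ] Y) (γ ρ : ℝ) (hγ : 0 ≤ γ) (hρ : 0 ≤ ρ)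
    (G : X → ℝ) (Fs : Y → ℝ) (G' : X → X) (Fs' : Y → Y)
    (hG : ∀ p, HasGradientAt G (G' p) p)
    (hFs : ∀ q, HasGradientAt Fs (Fs' q) q)
    (hGconv : ConvexOn ℝ Set.univ (fun p => G p - γ / 2 * ‖p‖ ^ 2))
    (hFconv : ConvexOn ℝ Set.univ (fun q => Fs q - ρ / 2 * ‖q‖ ^ 2))
    (xhat : X) (yhat : Y)
    (hsadx : G' xhat + ContinuousLinearMap.adjoint K yhat = 0)
    (hsady : Fs' yhat - K xhat = 0)
    (Lhat : X → Y → ℝ)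
    (hLhat : ∀ p q, Lhat p q
      = G p - γ / 2 * ‖p - xhat‖ ^ 2 + ⟪K p, q⟫ - Fs q + ρ / 2 * ‖q - yhat‖ ^ 2)
    (x ζ : ℝ → X) (y η : ℝ → Y) (φ ψ θ : ℝ → ℝ)
    (hφpos : ∀ t, 0 ≤ t → 0 < φ t) (hψpos : ∀ t, 0 ≤ t → 0 < ψ t)
    (hθpos : ∀ t, 0 ≤ t → 0 < θ t)
    (hx : ∀ t, 0 ≤ t → HasDerivAt x (ζ t - x t) t)
    (hy : ∀ t, 0 ≤ t → HasDerivAt y (η t - y t) t)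
    (hζ : ∀ t, 0 ≤ t → HasDerivAt ζ
      ((θ t / φ t) • (γ • (x t - ζ t) - G' (x t) - ContinuousLinearMap.adjoint K (η t))) t)
    (hη : ∀ t, 0 ≤ t → HasDerivAt η
      ((θ t / ψ t) • (ρ • (y t - η t) - Fs' (y t) + K (ζ t))) t)
    (hφ' : ∀ t, 0 ≤ t → HasDerivAt φ (2 * γ * θ t) t)
    (hψ' : ∀ t, 0 ≤ t → HasDerivAt ψ (2 * ρ * θ t) t)
    (hθ' : ∀ t, 0 ≤ t → HasDerivAt θ (θ t) t)
    (E : ℝ → ℝ)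
    (hE : ∀ t, E t = θ t * (Lhat (x t) yhat - Lhat xhat (y t))
      + 1 / 2 * φ t * ‖ζ t - xhat‖ ^ 2 + 1 / 2 * ψ t * ‖η t - yhat‖ ^ 2)
    :
    ∀ t, 0 ≤ t →
      θ t = θ 0 * Real.exp t ∧
      φ t = φ 0 + 2 * γ * θ 0 * (Real.exp t - 1) ∧
      ψ t = ψ 0 + 2 * ρ * θ 0 * (Real.exp t - 1) ∧
      Lhat (x t) yhat - Lhat xhat (y t) ≤ E 0 / θ 0 * Real.exp (-t) := by
  -- θ formula
  have hθf : ∀ t, 0 ≤ t → θ t = θ 0 * Real.exp t := by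
    intro t ht
    have hf : ∀ u, 0 ≤ u → HasDerivAt (fun u => θ u * Real.exp (-u)) 0 u := by
      intro u hu
      have he : HasDerivAt (fun u : ℝ => Real.exp (-u)) (-Real.exp (-u)) u := by
        simpa [Function.comp_def] using (Real.hasDerivAt_exp (-u)).comp u (hasDerivAt_neg u)
      have := (hθ' u hu).mul he
      exact this.congr_deriv (by ring)
    have := const_of_deriv_zero hf ht
    simp only [neg_zero, Real.exp_zero, mul_one] at this
    field_simp [Real.exp_neg] at this ⊢
    rw [← this, mul_assoc, ← Real.exp_add, neg_add_cancel, Real.exp_zero, mul_one]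
  -- φ formula
  have hφf : ∀ t, 0 ≤ t → φ t = φ 0 + 2 * γ * θ 0 * (Real.exp t - 1) := by
    intro t ht
    have hf : ∀ u, 0 ≤ u → HasDerivAt (fun u => φ u - 2 * γ * θ 0 * Real.exp u) 0 u := by
      intro u hu
      have := (hφ' u hu).sub ((Real.hasDerivAt_exp u).const_mul (2 * γ * θ 0))
      have h2 : 2 * γ * θ u - 2 * γ * θ 0 * Real.exp u = 0 := by
        rw [hθf u hu]; ring
      exact this.congr_deriv h2
    have := const_of_deriv_zero hf ht
    simp only [Real.exp_zero, mul_one] at this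
    linarith [this]
  -- ψ formula
  have hψf : ∀ t, 0 ≤ t → ψ t = ψ 0 + 2 * ρ * θ 0 * (Real.exp t - 1) := by
    intro t ht
    have hf : ∀ u, 0 ≤ u → HasDerivAt (fun u => ψ u - 2 * ρ * θ 0 * Real.exp u) 0 u := by
      intro u hu
      have := (hψ' u hu).sub ((Real.hasDerivAt_exp u).const_mul (2 * ρ * θ 0))
      have h2 : 2 * ρ * θ u - 2 * ρ * θ 0 * Real.exp u = 0 := by
        rw [hθf u hu]; ring
      exact this.congr_deriv h2
    have := const_of_deriv_zero hf ht
    simp only [Real.exp_zero, mul_one] at this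
    linarith [this]
  -- explicit formula for E
  have hEfun : E = fun s => θ s *
      ((G (x s) - γ / 2 * ‖x s - xhat‖ ^ 2 + ⟪K (x s), yhat⟫ - Fs yhat)
        - (G xhat + ⟪K xhat, y s⟫ - Fs (y s) + ρ / 2 * ‖y s - yhat‖ ^ 2))
      + 1 / 2 * φ s * ‖ζ s - xhat‖ ^ 2 + 1 / 2 * ψ s * ‖η s - yhat‖ ^ 2 := by
    funext s
    rw [hE, hLhat, hLhat]
    simp only [sub_self, norm_zero]
    ring
  -- derivative of E
  have hdE : ∀ s, 0 ≤ s → HasDerivAt E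
      (θ s * ((G (x s) - γ / 2 * ‖x s - xhat‖ ^ 2 + ⟪K (x s), yhat⟫ - Fs yhat)
          - (G xhat + ⟪K xhat, y s⟫ - Fs (y s) + ρ / 2 * ‖y s - yhat‖ ^ 2))
        + θ s * ((⟪G' (x s), ζ s - x s⟫ - γ / 2 * (2 * ⟪x s - xhat, ζ s - x s⟫)
            + ⟪K (ζ s - x s), yhat⟫)
          - (⟪K xhat, η s - y s⟫ - ⟪Fs' (y s), η s - y s⟫
            + ρ / 2 * (2 * ⟪y s - yhat, η s - y s⟫)))
        + (1 / 2 * (2 * γ * θ s) * ‖ζ s - xhat‖ ^ 2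
          + 1 / 2 * φ s * (2 * ⟪ζ s - xhat,
              (θ s / φ s) • (γ • (x s - ζ s) - G' (x s)
                - ContinuousLinearMap.adjoint K (η s))⟫))
        + (1 / 2 * (2 * ρ * θ s) * ‖η s - yhat‖ ^ 2
          + 1 / 2 * ψ s * (2 * ⟪η s - yhat,
              (θ s / ψ s) • (ρ • (y s - η s) - Fs' (y s) + K (ζ s))⟫))) s := by
    intro s hs
    have hGx : HasDerivAt (fun s => G (x s)) ⟪G' (x s), ζ s - x s⟫ s := by
      simpa [Function.comp_def] using (hG (x s)).hasFDerivAt.comp_hasDerivAt s (hx s hs)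
    have hFy : HasDerivAt (fun s => Fs (y s)) ⟪Fs' (y s), η s - y s⟫ s := by
      simpa [Function.comp_def] using (hFs (y s)).hasFDerivAt.comp_hasDerivAt s (hy s hs)
    have hKx : HasDerivAt (fun s => ⟪K (x s), yhat⟫) ⟪K (ζ s - x s), yhat⟫ s := by
      simpa using HasDerivAt.inner ℝ (K.hasFDerivAt.comp_hasDerivAt s (hx s hs))
        (hasDerivAt_const s yhat)
    have hKy : HasDerivAt (fun s => ⟪K xhat, y s⟫) ⟪K xhat, η s - y s⟫ s := by
      simpa using HasDerivAt.inner ℝ (hasDerivAt_const s (K xhat)) (hy s hs)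
    have hxn : HasDerivAt (fun s => ‖x s - xhat‖ ^ 2) (2 * ⟪x s - xhat, ζ s - x s⟫) s :=
      ((hx s hs).sub_const xhat).norm_sq
    have hyn : HasDerivAt (fun s => ‖y s - yhat‖ ^ 2) (2 * ⟪y s - yhat, η s - y s⟫) s :=
      ((hy s hs).sub_const yhat).norm_sq
    have hzn : HasDerivAt (fun s => ‖ζ s - xhat‖ ^ 2)
        (2 * ⟪ζ s - xhat, (θ s / φ s) • (γ • (x s - ζ s) - G' (x s)
          - ContinuousLinearMap.adjoint K (η s))⟫) s :=
      ((hζ s hs).sub_const xhat).norm_sq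
    have hen : HasDerivAt (fun s => ‖η s - yhat‖ ^ 2)
        (2 * ⟪η s - yhat, (θ s / ψ s) • (ρ • (y s - η s) - Fs' (y s) + K (ζ s))⟫) s :=
      ((hη s hs).sub_const yhat).norm_sq
    have hg1 : HasDerivAt (fun s => G (x s) - γ / 2 * ‖x s - xhat‖ ^ 2 + ⟪K (x s), yhat⟫
        - Fs yhat)
        (⟪G' (x s), ζ s - x s⟫ - γ / 2 * (2 * ⟪x s - xhat, ζ s - x s⟫)
          + ⟪K (ζ s - x s), yhat⟫) s :=
      ((hGx.sub (hxn.const_mul (γ / 2))).add hKx).sub_const (Fs yhat)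
    have hg2 : HasDerivAt (fun s => G xhat + ⟪K xhat, y s⟫ - Fs (y s)
        + ρ / 2 * ‖y s - yhat‖ ^ 2)
        (⟪K xhat, η s - y s⟫ - ⟪Fs' (y s), η s - y s⟫
          + ρ / 2 * (2 * ⟪y s - yhat, η s - y s⟫)) s :=
      ((hKy.const_add (G xhat)).sub hFy).add (hyn.const_mul (ρ / 2))
    have hgd := hg1.sub hg2
    have h1 := (hθ' s hs).mul hgd
    have h2 := ((hφ' s hs).const_mul (1 / 2 : ℝ)).mul hzn
    have h3 := ((hψ' s hs).const_mul (1 / 2 : ℝ)).mul hen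
    have := (h1.add h2).add h3
    rw [hEfun]
    convert this using 1 <;> rfl
  -- A and B nonpositive
  -- E is antitone on [0, ∞): deriv ≤ 0
  have hDle : ∀ s, 0 ≤ s → deriv E s ≤ 0 := by
    intro s hs
    rw [(hdE s hs).deriv]
    have hA := strong_convex_ineq hGconv hG (x s) xhat
    have hB := strong_convex_ineq hFconv hFs (y s) yhat
    have hφ0 : φ s ≠ 0 := (hφpos s hs).ne'
    have hψ0 : ψ s ≠ 0 := (hψpos s hs).ne'
    have hθs := hθpos s hs
    have hkey : (θ s * ((G (x s) - γ / 2 * ‖x s - xhat‖ ^ 2 + ⟪K (x s), yhat⟫ - Fs yhat)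
          - (G xhat + ⟪K xhat, y s⟫ - Fs (y s) + ρ / 2 * ‖y s - yhat‖ ^ 2))
        + θ s * ((⟪G' (x s), ζ s - x s⟫ - γ / 2 * (2 * ⟪x s - xhat, ζ s - x s⟫)
            + ⟪K (ζ s - x s), yhat⟫)
          - (⟪K xhat, η s - y s⟫ - ⟪Fs' (y s), η s - y s⟫
            + ρ / 2 * (2 * ⟪y s - yhat, η s - y s⟫)))
        + (1 / 2 * (2 * γ * θ s) * ‖ζ s - xhat‖ ^ 2
          + 1 / 2 * φ s * (2 * ⟪ζ s - xhat,
              (θ s / φ s) • (γ • (x s - ζ s) - G' (x s)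
                - ContinuousLinearMap.adjoint K (η s))⟫))
        + (1 / 2 * (2 * ρ * θ s) * ‖η s - yhat‖ ^ 2
          + 1 / 2 * ψ s * (2 * ⟪η s - yhat,
              (θ s / ψ s) • (ρ • (y s - η s) - Fs' (y s) + K (ζ s))⟫)))
        = θ s * ((G (x s) + ⟪G' (x s), xhat - x s⟫ + γ / 2 * ‖xhat - x s‖ ^ 2 - G xhat)
          + (Fs (y s) + ⟪Fs' (y s), yhat - y s⟫ + ρ / 2 * ‖yhat - y s‖ ^ 2 - Fs yhat)) := by
      have hred1 : ∀ z : X, 1 / 2 * φ s * (2 * ⟪ζ s - xhat, (θ s / φ s) • z⟫)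
          = θ s * ⟪ζ s - xhat, z⟫ := by
        intro z; rw [real_inner_smul_right]; field_simp
      have hred2 : ∀ z : Y, 1 / 2 * ψ s * (2 * ⟪η s - yhat, (θ s / ψ s) • z⟫)
          = θ s * ⟪η s - yhat, z⟫ := by
        intro z; rw [real_inner_smul_right]; field_simp
      rw [hred1, hred2]
      have hinner : (G (x s) - γ / 2 * ‖x s - xhat‖ ^ 2 + ⟪K (x s), yhat⟫ - Fs yhat)
          - (G xhat + ⟪K xhat, y s⟫ - Fs (y s) + ρ / 2 * ‖y s - yhat‖ ^ 2)
          + ((⟪G' (x s), ζ s - x s⟫ - γ / 2 * (2 * ⟪x s - xhat, ζ s - x s⟫)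
            + ⟪K (ζ s - x s), yhat⟫)
          - (⟪K xhat, η s - y s⟫ - ⟪Fs' (y s), η s - y s⟫
            + ρ / 2 * (2 * ⟪y s - yhat, η s - y s⟫)))
          + (γ * ‖ζ s - xhat‖ ^ 2
            + ⟪ζ s - xhat, γ • (x s - ζ s) - G' (x s) - ContinuousLinearMap.adjoint K (η s)⟫)
          + (ρ * ‖η s - yhat‖ ^ 2
            + ⟪η s - yhat, ρ • (y s - η s) - Fs' (y s) + K (ζ s)⟫)
          = (G (x s) + ⟪G' (x s), xhat - x s⟫ + γ / 2 * ‖xhat - x s‖ ^ 2 - G xhat)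
          + (Fs (y s) + ⟪Fs' (y s), yhat - y s⟫ + ρ / 2 * ‖yhat - y s‖ ^ 2 - Fs yhat) := by
        simp only [inner_sub_left, inner_sub_right, inner_add_left, inner_add_right,
          real_inner_smul_left, real_inner_smul_right,
          map_sub, map_add, ContinuousLinearMap.adjoint_inner_right, norm_sub_sq_real,
          real_inner_self_eq_norm_sq]
        linear_combination -((γ:ℝ) * real_inner_comm (x s) xhat) - γ * real_inner_comm (ζ s) (x s)
          - 2*γ*real_inner_comm xhat (ζ s) - ρ * real_inner_comm (y s) yhat
          - ρ * real_inner_comm (η s) (y s) - 2*ρ*real_inner_comm yhat (η s)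
          - real_inner_comm (G' (x s)) (ζ s) - real_inner_comm xhat (G' (x s))
          - real_inner_comm (Fs' (y s)) (η s) - real_inner_comm yhat (Fs' (y s))
          - real_inner_comm (K (ζ s)) yhat - real_inner_comm (η s) (K (ζ s))
      linear_combination θ s * hinner
    rw [hkey]
    have hA' : G (x s) + ⟪G' (x s), xhat - x s⟫ + γ / 2 * ‖xhat - x s‖ ^ 2 - G xhat ≤ 0 := by
      linarith [hA]
    have hB' : Fs (y s) + ⟪Fs' (y s), yhat - y s⟫ + ρ / 2 * ‖yhat - y s‖ ^ 2 - Fs yhat ≤ 0 := by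
      linarith [hB]
    have hsum : (G (x s) + ⟪G' (x s), xhat - x s⟫ + γ / 2 * ‖xhat - x s‖ ^ 2 - G xhat)
        + (Fs (y s) + ⟪Fs' (y s), yhat - y s⟫ + ρ / 2 * ‖yhat - y s‖ ^ 2 - Fs yhat) ≤ 0 := by
      linarith
    nlinarith [mul_nonneg hθs.le (neg_nonneg.mpr hsum)]
  intro t ht
  refine ⟨hθf t ht, hφf t ht, hψf t ht, ?_⟩
  -- E t ≤ E 0
  have hmono : E t ≤ E 0 := by
    rcases eq_or_lt_of_le ht with h | h
    · rw [← h]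
    · have hanti : AntitoneOn E (Set.Icc 0 t) := by
        apply antitoneOn_of_deriv_nonpos (convex_Icc 0 t)
        · exact fun u hu => ((hdE u hu.1).continuousAt).continuousWithinAt
        · intro u hu
          rw [interior_Icc] at hu
          exact ((hdE u hu.1.le).differentiableAt).differentiableWithinAt
        · intro u hu
          rw [interior_Icc] at hu
          exact hDle u hu.1.le
      exact hanti (Set.left_mem_Icc.mpr ht) (Set.right_mem_Icc.mpr ht) ht
  -- conclude
  have hθt : 0 < θ t := hθpos t ht
  have hθ0 : 0 < θ 0 := hθpos 0 le_rfl
  have hgap : θ t * (Lhat (x t) yhat - Lhat xhat (y t)) ≤ E 0 := by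
    have h1 : 0 ≤ 1 / 2 * φ t * ‖ζ t - xhat‖ ^ 2 :=
      mul_nonneg (mul_nonneg (by norm_num) (hφpos t ht).le) (pow_nonneg (norm_nonneg _) 2)
    have h2 : 0 ≤ 1 / 2 * ψ t * ‖η t - yhat‖ ^ 2 :=
      mul_nonneg (mul_nonneg (by norm_num) (hψpos t ht).le) (pow_nonneg (norm_nonneg _) 2)
    have := hE t
    linarith [hmono]
  have hθteq : θ t = θ 0 * Real.exp t := hθf t ht
  calc Lhat (x t) yhat - Lhat xhat (y t) ≤ E 0 / θ t := by
        rw [le_div_iff₀ hθt]; linarith [hgap]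
    _ = E 0 / θ 0 * Real.exp (-t) := by
        rw [hθteq, div_mul_eq_div_div, Real.exp_neg, div_eq_mul_inv]
end
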